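/- arXiv:math-ph/0506076 — 9 statements merged into one kernel-verified Lean document; each statement's English description precedes it below -/
import Mathlib

section
/- For every τ > 0, the double integral ∫₀^∞∫₀^∞ y y′ exp(−(y² + y′²)/4 − (y y′/2) cosh τ) dy dy′ converges and equals 4τ cosh τ / sinh³ τ − 4 / sinh² τ. -/
/-!
Substituting `y' = y t` in the inner integral turns the integrand into
`t y³ exp(-(t² + 2 t cosh τ + 1) y² / 4)`. After exchanging the order of integration, the Gaussian
moment `∫₀^∞ y³ e^{-b y²} dy = 1 / (2 b²)` leaves `8 ∫₀^∞ t / (t² + 2 t cosh τ + 1)² dt`. The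
quadratic factors as `(t + e^{-τ}) (t + e^τ)`, and partial fractions give the closed form, the
logarithm `log (e^τ / e^{-τ}) = 2τ` producing the term in `τ`.
-/

open MeasureTheory Real Filter Set Topology

theorem integral_Ioi_pow_three_mul_exp_neg_mul_sq {b : ℝ} (hb : 0 < b) :
    ∫ x in Ioi (0 : ℝ), x ^ 3 * exp (-b * x ^ 2) = 1 / (2 * b ^ 2) := by
  have h := integral_rpow_mul_exp_neg_mul_rpow two_pos (by norm_num : (-1 : ℝ) < 3) hb
  norm_num [Real.Gamma_two] at h
  simp_rw [neg_mul, h]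
  field_simp

section Shear

variable {E : Type*} [NormedAddCommGroup E] [NormedSpace ℝ E] {f : ℝ × ℝ → E}

theorem integrableOn_Ioi_prod_Ioi_comp_shear (hf_meas : StronglyMeasurable f)
    (hf : IntegrableOn f (Ioi 0 ×ˢ Ioi 0)) :
    IntegrableOn (fun p : ℝ × ℝ => p.1 • f (p.1, p.1 * p.2)) (Ioi 0 ×ˢ Ioi 0) := by
  rw [IntegrableOn, Measure.volume_eq_prod, ← Measure.prod_restrict] at hf ⊢
  refine (integrable_prod_iff ?_).2 ⟨?_, ?_⟩
  · exact (measurable_fst.stronglyMeasurable.smul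
      (hf_meas.comp_measurable (by fun_prop))).aestronglyMeasurable
  · filter_upwards [hf.prod_right_ae, ae_restrict_mem measurableSet_Ioi] with y hy (hy0 : 0 < y)
    have := (integrableOn_Ioi_comp_mul_left_iff (fun y' => f (y, y')) 0 hy0).2 (by rwa [mul_zero])
    exact this.smul y
  · refine hf.norm.integral_prod_left.congr ?_
    filter_upwards [ae_restrict_mem measurableSet_Ioi] with y (hy0 : 0 < y)
    simp only [norm_smul, norm_of_nonneg hy0.le]
    rw [integral_const_mul, integral_comp_mul_left_Ioi (fun y' => ‖f (y, y')‖) 0 hy0]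
    rw [mul_zero, smul_eq_mul, ← mul_assoc, mul_inv_cancel₀ hy0.ne', one_mul]

theorem setIntegral_Ioi_prod_Ioi_comp_shear (hf_meas : StronglyMeasurable f)
    (hf : IntegrableOn f (Ioi 0 ×ˢ Ioi 0)) :
    ∫ p in Ioi 0 ×ˢ Ioi 0, p.1 • f (p.1, p.1 * p.2) = ∫ p in Ioi 0 ×ˢ Ioi 0, f p := by
  have hg := integrableOn_Ioi_prod_Ioi_comp_shear hf_meas hf
  rw [Measure.volume_eq_prod] at hf hg ⊢
  rw [setIntegral_prod _ hf, setIntegral_prod _ hg]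
  refine setIntegral_congr_fun measurableSet_Ioi fun y (hy0 : 0 < y) => ?_
  rw [integral_smul, integral_comp_mul_left_Ioi (fun y' => f (y, y')) 0 hy0]
  rw [mul_zero, smul_smul, mul_inv_cancel₀ hy0.ne', one_smul]

end Shear

/-- Found by partial fractions. -/
noncomputable def primitiveDivMulAddSq (a b t : ℝ) : ℝ :=
  (a + b) / (b - a) ^ 3 * (log (t + a) - log (t + b)) + (a / (t + a) + b / (t + b)) / (b - a) ^ 2

section PartialFractions

variable {a b : ℝ}

theorem hasDerivAt_primitiveDivMulAddSq {t : ℝ} (hab : a ≠ b) (ha : t + a ≠ 0)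
    (hb : t + b ≠ 0) :
    HasDerivAt (primitiveDivMulAddSq a b) (t / ((t + a) * (t + b)) ^ 2) t := by
  have hta : HasDerivAt (fun t : ℝ => t + a) 1 t := (hasDerivAt_id t).add_const a
  have htb : HasDerivAt (fun t : ℝ => t + b) 1 t := (hasDerivAt_id t).add_const b
  have hba : b - a ≠ 0 := sub_ne_zero.2 hab.symm
  have hrat := ((hasDerivAt_const t a).div hta ha).add ((hasDerivAt_const t b).div htb hb)
  refine ((((hta.log ha).sub (htb.log hb)).const_mul _).add (hrat.div_const _)).congr_deriv ?_
  field_simp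
  ring

theorem tendsto_primitiveDivMulAddSq_atTop :
    Tendsto (primitiveDivMulAddSq a b) atTop (𝓝 0) := by
  have hlog : Tendsto (fun t => log (t + a) - log (t + b)) atTop (𝓝 0) := by
    simpa using (tendsto_log_comp_add_sub_log a).sub (tendsto_log_comp_add_sub_log b)
  have hdiv (c : ℝ) : Tendsto (fun t => c / (t + c)) atTop (𝓝 0) :=
    tendsto_const_nhds.div_atTop (tendsto_atTop_add_const_right _ c tendsto_id)
  unfold primitiveDivMulAddSq
  simpa using (hlog.const_mul _).add (((hdiv a).add (hdiv b)).div_const _)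

theorem integral_Ioi_div_mul_add_mul_add_sq (ha : 0 < a) (hb : 0 < b) (hab : a ≠ b) :
    ∫ t in Ioi (0 : ℝ), t / ((t + a) * (t + b)) ^ 2
      = (a + b) * log (b / a) / (b - a) ^ 3 - 2 / (b - a) ^ 2 := by
  have hderiv : ∀ t ∈ Ici (0 : ℝ),
      HasDerivAt (primitiveDivMulAddSq a b) (t / ((t + a) * (t + b)) ^ 2) t :=
    fun t (ht : 0 ≤ t) => hasDerivAt_primitiveDivMulAddSq hab (by positivity) (by positivity)
  rw [integral_Ioi_of_hasDerivAt_of_nonneg' hderiv (fun t (ht : 0 < t) => by positivity)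
    tendsto_primitiveDivMulAddSq_atTop, primitiveDivMulAddSq, zero_add, zero_add,
    log_div hb.ne' ha.ne']
  have hba : b - a ≠ 0 := sub_ne_zero.2 hab.symm
  field_simp
  ring

end PartialFractions

theorem integral_Ioi_div_sq_add_two_cosh_mul_add_one_sq {τ : ℝ} (hτ : 0 < τ) :
    ∫ t in Ioi (0 : ℝ), t / (t ^ 2 + 2 * cosh τ * t + 1) ^ 2
      = τ * cosh τ / (2 * sinh τ ^ 3) - 1 / (2 * sinh τ ^ 2) := by
  have hfactor (t : ℝ) : t ^ 2 + 2 * cosh τ * t + 1 = (t + exp (-τ)) * (t + exp τ) := by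
    have hinv : exp τ * exp (-τ) = 1 := by rw [← exp_add, add_neg_cancel, exp_zero]
    rw [cosh_eq]
    linear_combination -hinv
  have hsinh : sinh τ ≠ 0 := (sinh_pos_iff.2 hτ).ne'
  simp_rw [hfactor]
  rw [integral_Ioi_div_mul_add_mul_add_sq (exp_pos _) (exp_pos _)
    (exp_injective.ne (neg_lt_self hτ).ne), ← exp_sub, log_exp]
  have hsub : exp τ - exp (-τ) = 2 * sinh τ := by rw [sinh_eq]; ring
  have hadd : exp (-τ) + exp τ = 2 * cosh τ := by rw [cosh_eq]; ring
  rw [hsub, hadd]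
  field_simp
  ring

noncomputable def zarembaKernel (c : ℝ) (p : ℝ × ℝ) : ℝ :=
  p.1 * p.2 * exp (-(p.1 ^ 2 + p.2 ^ 2) / 4 - p.1 * p.2 / 2 * c)

section ZarembaKernel

variable {c : ℝ}

theorem continuous_zarembaKernel (c : ℝ) : Continuous (zarembaKernel c) := by
  unfold zarembaKernel
  fun_prop

theorem zarembaKernel_le_mul (hc : 0 ≤ c) {y y' : ℝ} (hy : 0 < y) (hy' : 0 < y') :
    zarembaKernel c (y, y') ≤ y * exp (-(1 / 4) * y ^ 2) * (y' * exp (-(1 / 4) * y' ^ 2)) := by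
  have hexp : -(y ^ 2 + y' ^ 2) / 4 - y * y' / 2 * c ≤ -(1 / 4) * y ^ 2 + -(1 / 4) * y' ^ 2 := by
    linarith [mul_nonneg (mul_pos hy hy').le hc]
  calc zarembaKernel c (y, y')
      ≤ y * y' * exp (-(1 / 4) * y ^ 2 + -(1 / 4) * y' ^ 2) := by
        unfold zarembaKernel
        gcongr
    _ = y * exp (-(1 / 4) * y ^ 2) * (y' * exp (-(1 / 4) * y' ^ 2)) := by
        rw [exp_add]
        ring

theorem integrableOn_zarembaKernel (hc : 0 ≤ c) :
    IntegrableOn (zarembaKernel c) (Ioi 0 ×ˢ Ioi 0) := by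
  have hgauss := integrable_mul_exp_neg_mul_sq (by norm_num : (0 : ℝ) < 1 / 4)
  have hdom := (hgauss.mul_prod hgauss).integrableOn (s := Ioi 0 ×ˢ Ioi 0)
  rw [Measure.volume_eq_prod]
  refine hdom.mono' (continuous_zarembaKernel c).aestronglyMeasurable ?_
  rw [ae_restrict_iff' (measurableSet_Ioi.prod measurableSet_Ioi)]
  refine Eventually.of_forall fun ⟨y, y'⟩ ⟨(hy : 0 < y), (hy' : 0 < y')⟩ => ?_
  rw [norm_of_nonneg (by unfold zarembaKernel; positivity)]
  exact zarembaKernel_le_mul hc hy hy'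

theorem smul_zarembaKernel_shear (c y t : ℝ) :
    y • zarembaKernel c (y, y * t)
      = t * (y ^ 3 * exp (-((t ^ 2 + 2 * c * t + 1) / 4) * y ^ 2)) := by
  rw [zarembaKernel, smul_eq_mul]
  ring_nf

theorem setIntegral_zarembaKernel (hc : 0 ≤ c) :
    ∫ p in Ioi 0 ×ˢ Ioi 0, zarembaKernel c p
      = 8 * ∫ t in Ioi (0 : ℝ), t / (t ^ 2 + 2 * c * t + 1) ^ 2 := by
  have hmeas := (continuous_zarembaKernel c).stronglyMeasurable
  have hsheared := integrableOn_Ioi_prod_Ioi_comp_shear hmeas (integrableOn_zarembaKernel hc)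
  rw [← setIntegral_Ioi_prod_Ioi_comp_shear hmeas (integrableOn_zarembaKernel hc)]
  rw [IntegrableOn, Measure.volume_eq_prod, ← Measure.prod_restrict] at hsheared
  rw [Measure.volume_eq_prod, ← Measure.prod_restrict, integral_prod_symm _ hsheared,
    ← integral_const_mul]
  refine setIntegral_congr_fun measurableSet_Ioi fun t (ht : 0 < t) => ?_
  have hq : 0 < (t ^ 2 + 2 * c * t + 1) / 4 := by positivity
  simp only [smul_zarembaKernel_shear]
  rw [integral_const_mul, integral_Ioi_pow_three_mul_exp_neg_mul_sq hq]
  field_simp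
  ring

end ZarembaKernel

/-- For every `τ > 0`, the double integral
`∫₀^∞∫₀^∞ y y′ exp(−(y² + y′²)/4 − (y y′/2) cosh τ) dy dy′` converges and equals
`4τ cosh τ / sinh³ τ − 4 / sinh² τ`. -/
theorem zaremba_double_integral_yy (τ : ℝ) (hτ : 0 < τ) :
    IntegrableOn
      (fun p : ℝ × ℝ =>
        p.1 * p.2 * Real.exp (-(p.1 ^ 2 + p.2 ^ 2) / 4 - p.1 * p.2 / 2 * Real.cosh τ))
      (Set.Ioi 0 ×ˢ Set.Ioi 0) ∧
    ∫ p in Set.Ioi (0 : ℝ) ×ˢ Set.Ioi (0 : ℝ),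
        p.1 * p.2 * Real.exp (-(p.1 ^ 2 + p.2 ^ 2) / 4 - p.1 * p.2 / 2 * Real.cosh τ)
      = 4 * τ * Real.cosh τ / (Real.sinh τ) ^ 3 - 4 / (Real.sinh τ) ^ 2 := by
  have hc : 0 ≤ cosh τ := (cosh_pos τ).le
  have hsinh : sinh τ ≠ 0 := (sinh_pos_iff.2 hτ).ne'
  refine ⟨integrableOn_zarembaKernel hc, ?_⟩
  change ∫ p in Ioi 0 ×ˢ Ioi 0, zarembaKernel (cosh τ) p = _
  rw [setIntegral_zarembaKernel hc, integral_Ioi_div_sq_add_two_cosh_mul_add_one_sq hτ]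
  field_simp
  ring
end

section
/- For every μ > 0, the function τ ↦ e^{−μτ} (4τ cosh τ / sinh³ τ − 4/ sinh² τ) is integrable on (0,∞) and ∫₀^∞ e^{−μτ} (4τ cosh τ / sinh³ τ − 4/ sinh² τ) dτ = −2(μ+1) + μ² · Σ_{l=0}^∞ 1/(l + μ/2)². -/
/-!
The integrand is `e^{-μτ} φ'(τ)` with `φ τ = 2 (coth τ - τ / sinh² τ)`, and it is nonnegative
because `sinh τ ≤ τ cosh τ`. Since `(τ coth τ)' = coth τ - τ / sinh² τ`, integrating by parts twice
produces the primitive `e^{-μτ} (φ τ + 2μ τ coth τ) + 2μ² ∫₀^τ e^{-μs} s coth s ds`, which tends to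
`2μ` at `0⁺` and to `2μ² J` at `∞`, where `J = ∫₀^∞ e^{-μs} s coth s ds`. Finally
`coth s + 1 = 2 ∑ₙ e^{-2ns}`, and integrating termwise gives `J + 1/μ² = ∑ₙ 2 / (μ + 2n)²`.
-/

open MeasureTheory Real

open Set Filter Topology

lemma le_of_hasDerivAt_of_nonneg {f f' : ℝ → ℝ} {a x : ℝ} (hf : ∀ y, HasDerivAt f (f' y) y)
    (hf' : ∀ y, a < y → 0 ≤ f' y) (hx : a ≤ x) : f a ≤ f x := by
  refine monotoneOn_of_hasDerivWithinAt_nonneg (convex_Ici a)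
    (fun y _ => (hf y).continuousAt.continuousWithinAt) (fun y _ => (hf y).hasDerivWithinAt) ?_
    self_mem_Ici hx hx
  rw [interior_Ici]
  exact hf'

section Hyperbolic

variable {x : ℝ}

lemma sinh_le_mul_cosh (hx : 0 ≤ x) : sinh x ≤ x * cosh x := by
  have hF (y : ℝ) : HasDerivAt (fun y => y * cosh y - sinh y) (y * sinh y) y :=
    (((hasDerivAt_id' y).mul (hasDerivAt_cosh y)).sub (hasDerivAt_sinh y)).congr_deriv (by ring)
  have := le_of_hasDerivAt_of_nonneg hF (fun y hy => mul_nonneg hy.le (sinh_nonneg_iff.mpr hy.le)) hx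
  simp only [zero_mul, sinh_zero, sub_zero] at this
  linarith

lemma sinh_mul_cosh_sub_le (hx : 0 ≤ x) : sinh x * cosh x - x ≤ x * sinh x ^ 2 := by
  have hF (y : ℝ) : HasDerivAt (fun y => y * sinh y ^ 2 - sinh y * cosh y + y)
      (sinh y * (2 * y * cosh y - sinh y)) y := by
    refine ((((hasDerivAt_id' y).mul ((hasDerivAt_sinh y).pow 2)).sub
      ((hasDerivAt_sinh y).mul (hasDerivAt_cosh y))).add (hasDerivAt_id' y)).congr_deriv ?_
    simp only [Pi.pow_apply]
    linear_combination (-1 : ℝ) * cosh_sq y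
  have hF' (y : ℝ) (hy : 0 < y) : 0 ≤ sinh y * (2 * y * cosh y - sinh y) := by
    have := sinh_le_mul_cosh hy.le
    have := mul_nonneg hy.le (cosh_pos y).le
    exact mul_nonneg (sinh_nonneg_iff.mpr hy.le) (by linarith)
  have := le_of_hasDerivAt_of_nonneg hF hF' hx
  simp only [sinh_zero, cosh_zero] at this
  linarith

lemma one_le_mul_cosh_div_sinh (hx : 0 < x) : 1 ≤ x * cosh x / sinh x := by
  rw [one_le_div (sinh_pos_iff.mpr hx)]
  exact sinh_le_mul_cosh hx.le

lemma mul_cosh_div_sinh_le_one_add (hx : 0 < x) : x * cosh x / sinh x ≤ 1 + x := by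
  have hcosh : cosh x ≤ sinh x + 1 := by
    linarith [cosh_sub_sinh x, exp_le_one_iff.mpr (neg_nonpos.mpr hx.le)]
  rw [div_le_iff₀ (sinh_pos_iff.mpr hx)]
  nlinarith [self_le_sinh_iff.mpr hx.le]

lemma cosh_div_sinh_sub_div_sinh_sq_eq (hx : x ≠ 0) :
    cosh x / sinh x - x / sinh x ^ 2 = (sinh x * cosh x - x) / sinh x ^ 2 := by
  have := sinh_ne_zero.mpr hx
  field_simp

lemma cosh_div_sinh_sub_div_sinh_sq_nonneg (hx : 0 < x) :
    0 ≤ cosh x / sinh x - x / sinh x ^ 2 := by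
  rw [cosh_div_sinh_sub_div_sinh_sq_eq hx.ne']
  have := self_le_sinh_iff.mpr hx.le
  have := one_le_cosh x
  exact div_nonneg (by nlinarith) (sq_nonneg _)

lemma cosh_div_sinh_sub_div_sinh_sq_le (hx : 0 < x) : cosh x / sinh x - x / sinh x ^ 2 ≤ x := by
  rw [cosh_div_sinh_sub_div_sinh_sq_eq hx.ne', div_le_iff₀ (pow_pos (sinh_pos_iff.mpr hx) 2)]
  exact sinh_mul_cosh_sub_le hx.le

lemma four_div_sinh_sq_le (hx : 0 < x) : 4 / sinh x ^ 2 ≤ 4 * x * cosh x / sinh x ^ 3 := by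
  have hs := sinh_pos_iff.mpr hx
  rw [div_le_div_iff₀ (by positivity) (by positivity)]
  have := mul_le_mul_of_nonneg_left (sinh_le_mul_cosh hx.le) (by positivity : 0 ≤ 4 * sinh x ^ 2)
  linarith

lemma tendsto_mul_cosh_div_sinh_nhdsGT_zero :
    Tendsto (fun x => x * cosh x / sinh x) (𝓝[>] 0) (𝓝 1) := by
  have hlim : Tendsto (fun x : ℝ => 1 + x) (𝓝[>] 0) (𝓝 1) :=
    ((continuous_const_add 1).tendsto' 0 1 (add_zero 1)).mono_left nhdsWithin_le_nhds
  refine tendsto_of_tendsto_of_tendsto_of_le_of_le' tendsto_const_nhds hlim ?_ ?_ <;>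
    filter_upwards [self_mem_nhdsWithin] with x hx
  exacts [one_le_mul_cosh_div_sinh hx, mul_cosh_div_sinh_le_one_add hx]

lemma tendsto_cosh_div_sinh_sub_div_sinh_sq_nhdsGT_zero :
    Tendsto (fun x => cosh x / sinh x - x / sinh x ^ 2) (𝓝[>] 0) (𝓝 0) := by
  refine tendsto_of_tendsto_of_tendsto_of_le_of_le' tendsto_const_nhds
    (tendsto_nhdsWithin_of_tendsto_nhds tendsto_id) ?_ ?_ <;>
    filter_upwards [self_mem_nhdsWithin] with x hx
  exacts [cosh_div_sinh_sub_div_sinh_sq_nonneg hx, cosh_div_sinh_sub_div_sinh_sq_le hx]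

lemma hasDerivAt_mul_cosh_div_sinh (hx : x ≠ 0) :
    HasDerivAt (fun x => x * cosh x / sinh x) (cosh x / sinh x - x / sinh x ^ 2) x := by
  have hs := sinh_ne_zero.mpr hx
  refine (((hasDerivAt_id' x).mul (hasDerivAt_cosh x)).div (hasDerivAt_sinh x) hs).congr_deriv ?_
  simp only [Pi.mul_apply]
  field_simp
  linear_combination (-x) * cosh_sq x

lemma hasDerivAt_cosh_div_sinh_sub_div_sinh_sq (hx : x ≠ 0) :
    HasDerivAt (fun x => cosh x / sinh x - x / sinh x ^ 2)
      (2 * x * cosh x / sinh x ^ 3 - 2 / sinh x ^ 2) x := by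
  have hs := sinh_ne_zero.mpr hx
  refine (((hasDerivAt_cosh x).div (hasDerivAt_sinh x) hs).sub
    ((hasDerivAt_id' x).div ((hasDerivAt_sinh x).pow 2) (pow_ne_zero 2 hs))).congr_deriv ?_
  simp only [Pi.pow_apply]
  field_simp
  linear_combination (-sinh x ^ 2) * cosh_sq x

lemma hasSum_two_mul_exp_neg_two_mul (hx : 0 < x) :
    HasSum (fun n : ℕ => 2 * exp (-(2 * n * x))) (cosh x / sinh x + 1) := by
  have hr : exp (-(2 * x)) < 1 := exp_lt_one_iff.mpr (by linarith)
  have hterm : (fun n : ℕ => 2 * exp (-(2 * n * x))) = fun n => 2 * exp (-(2 * x)) ^ n := by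
    ext n
    rw [← exp_nat_mul]
    ring_nf
  have hsum : cosh x / sinh x + 1 = 2 * (1 - exp (-(2 * x)))⁻¹ := by
    have hy : exp (-x) ^ 2 < 1 :=
      pow_lt_one₀ (exp_pos _).le (exp_lt_one_iff.mpr (by linarith)) two_ne_zero
    rw [show exp (-(2 * x)) = exp (-x) ^ 2 by rw [← exp_nat_mul]; ring_nf,
      cosh_eq, sinh_eq, ← inv_inv (exp x), ← exp_neg]
    have := (sub_pos.mpr hy).ne'
    field_simp
    ring
  rw [hterm, hsum]
  exact (hasSum_geometric_of_lt_one (exp_pos _).le hr).mul_left 2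

end Hyperbolic

lemma integrableOn_mul_exp_neg_mul {b : ℝ} (hb : 0 < b) :
    IntegrableOn (fun x => x * exp (-b * x)) (Ioi 0) := by
  simpa [rpow_one] using
    integrableOn_rpow_mul_exp_neg_mul_rpow (s := 1) (p := 1) (by norm_num) one_pos hb

lemma integral_mul_exp_neg_mul {b : ℝ} (hb : 0 < b) :
    ∫ x in Ioi 0, x * exp (-b * x) = 1 / b ^ 2 := by
  have := integral_rpow_mul_exp_neg_mul_Ioi two_pos hb
  norm_num [Gamma_two] at this
  simpa [neg_mul] using this

lemma tendsto_one_add_mul_exp_neg_mul_atTop {b : ℝ} (hb : 0 < b) :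
    Tendsto (fun x => (1 + x) * exp (-b * x)) atTop (𝓝 0) := by
  simpa [add_mul] using (tendsto_rpow_mul_exp_neg_mul_atTop_nhds_zero 0 b hb).add
    (tendsto_rpow_mul_exp_neg_mul_atTop_nhds_zero 1 b hb)

lemma summable_one_div_nat_add_sq (a : ℝ) : Summable (fun n : ℕ => 1 / ((n : ℝ) + a) ^ 2) := by
  simpa [rpow_two, sq_abs] using (summable_one_div_nat_add_rpow a 2).mpr one_lt_two

section LaplaceMulCoth

variable {μ : ℝ}

lemma continuousOn_exp_neg_mul_mul_cosh_div_sinh :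
    ContinuousOn (fun s => exp (-μ * s) * (s * cosh s / sinh s)) (Ioi 0) :=
  (continuous_exp.comp (continuous_const_mul _)).continuousOn.mul <|
    (continuous_id.mul continuous_cosh).continuousOn.div continuous_sinh.continuousOn
      fun _ hs => (sinh_pos_iff.mpr hs).ne'

lemma norm_exp_neg_mul_mul_cosh_div_sinh_le {s : ℝ} (hs : 0 < s) :
    ‖exp (-μ * s) * (s * cosh s / sinh s)‖ ≤ (1 + s) * exp (-μ * s) := by
  rw [norm_of_nonneg (by have := sinh_pos_iff.mpr hs; positivity), mul_comm]
  exact mul_le_mul_of_nonneg_right (mul_cosh_div_sinh_le_one_add hs) (exp_pos _).le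

lemma intervalIntegrable_exp_neg_mul_mul_cosh_div_sinh {t : ℝ} (ht : 0 ≤ t) :
    IntervalIntegrable (fun s => exp (-μ * s) * (s * cosh s / sinh s)) volume 0 t := by
  rw [intervalIntegrable_iff_integrableOn_Ioc_of_le ht]
  refine Integrable.mono' (g := fun s => (1 + s) * exp (-μ * s))
    ((by fun_prop : Continuous fun s : ℝ => (1 + s) * exp (-μ * s)).integrableOn_Icc.mono_set
      Ioc_subset_Icc_self)
    (continuousOn_exp_neg_mul_mul_cosh_div_sinh.aestronglyMeasurable measurableSet_Ioi
      |>.mono_set Ioc_subset_Ioi_self) ?_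
  filter_upwards [ae_restrict_mem measurableSet_Ioc] with s hs
  exact norm_exp_neg_mul_mul_cosh_div_sinh_le hs.1

lemma integrableOn_exp_neg_mul_mul_cosh_div_sinh (hμ : 0 < μ) :
    IntegrableOn (fun s => exp (-μ * s) * (s * cosh s / sinh s)) (Ioi 0) := by
  refine Integrable.mono' (g := fun s => (1 + s) * exp (-μ * s))
    (((exp_neg_integrableOn_Ioi 0 hμ).add (integrableOn_mul_exp_neg_mul hμ)).congr_fun
      (fun s _ => by simp only [Pi.add_apply]; ring) measurableSet_Ioi)
    (continuousOn_exp_neg_mul_mul_cosh_div_sinh.aestronglyMeasurable measurableSet_Ioi) ?_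
  filter_upwards [ae_restrict_mem measurableSet_Ioi] with s hs
  exact norm_exp_neg_mul_mul_cosh_div_sinh_le hs

lemma hasSum_exp_neg_mul_mul_cosh_div_sinh_add {s : ℝ} (hs : 0 < s) :
    HasSum (fun n : ℕ => 2 * (s * exp (-(μ + 2 * n) * s)))
      (exp (-μ * s) * (s * cosh s / sinh s) + s * exp (-μ * s)) := by
  have hterm (n : ℕ) : s * exp (-μ * s) * (2 * exp (-(2 * n * s)))
      = 2 * (s * exp (-(μ + 2 * n) * s)) := by
    rw [show -(μ + 2 * n) * s = -μ * s + -(2 * n * s) by ring, exp_add]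
    ring
  have hvalue : s * exp (-μ * s) * (cosh s / sinh s + 1)
      = exp (-μ * s) * (s * cosh s / sinh s) + s * exp (-μ * s) := by
    ring
  simpa only [hterm, hvalue] using (hasSum_two_mul_exp_neg_two_mul hs).mul_left (s * exp (-μ * s))

lemma integral_exp_neg_mul_mul_cosh_div_sinh (hμ : 0 < μ) :
    ∫ s in Ioi 0, exp (-μ * s) * (s * cosh s / sinh s)
      = (∑' l : ℕ, 1 / ((l : ℝ) + μ / 2) ^ 2) / 2 - 1 / μ ^ 2 := by
  have hb (n : ℕ) : 0 < μ + 2 * n := by positivity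
  have hint (n : ℕ) : IntegrableOn (fun s => 2 * (s * exp (-(μ + 2 * n) * s))) (Ioi 0) :=
    (integrableOn_mul_exp_neg_mul (hb n)).const_mul 2
  have hval (n : ℕ) : ∫ s in Ioi 0, 2 * (s * exp (-(μ + 2 * n) * s))
      = 1 / ((n : ℝ) + μ / 2) ^ 2 / 2 := by
    rw [integral_const_mul, integral_mul_exp_neg_mul (hb n)]
    field_simp
    ring
  have hnorm (n : ℕ) : ∫ s in Ioi 0, ‖2 * (s * exp (-(μ + 2 * n) * s))‖
      = 1 / ((n : ℝ) + μ / 2) ^ 2 / 2 := by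
    rw [← hval n]
    refine setIntegral_congr_fun measurableSet_Ioi fun s (hs : 0 < s) => ?_
    exact norm_of_nonneg (by positivity)
  have hsum := hasSum_integral_of_summable_integral_norm hint
    ((summable_one_div_nat_add_sq (μ / 2)).div_const 2 |>.congr fun n => (hnorm n).symm)
  rw [setIntegral_congr_fun measurableSet_Ioi fun s hs => (hasSum_exp_neg_mul_mul_cosh_div_sinh_add hs).tsum_eq,
    integral_add (integrableOn_exp_neg_mul_mul_cosh_div_sinh hμ) (integrableOn_mul_exp_neg_mul hμ),
    integral_mul_exp_neg_mul hμ] at hsum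
  simp only [hval] at hsum
  rw [← tsum_div_const, hsum.tsum_eq]
  ring

end LaplaceMulCoth

lemma tendsto_intervalIntegral_nhdsGT {E : Type*} [NormedAddCommGroup E] [NormedSpace ℝ E]
    {f : ℝ → E} {a b : ℝ} (hab : a < b) (hf : IntervalIntegrable f volume a b) :
    Tendsto (fun t => ∫ s in a..t, f s) (𝓝[>] a) (𝓝 0) := by
  have hcont := intervalIntegral.continuousOn_primitive_interval' hf left_mem_uIcc a left_mem_uIcc
  rw [uIcc_of_le hab.le] at hcont
  have := (hcont.mono Ioo_subset_Icc_self).tendsto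
  rwa [nhdsWithin_Ioo_eq_nhdsGT hab, intervalIntegral.integral_same] at this

theorem integrableOn_and_integral_Ioi_deriv_of_nonneg {g g' : ℝ → ℝ} {a l₀ l : ℝ}
    (hderiv : ∀ x ∈ Ioi a, HasDerivAt g (g' x) x) (hg' : ∀ x ∈ Ioi a, 0 ≤ g' x)
    (hg₀ : Tendsto g (𝓝[>] a) (𝓝 l₀)) (hg : Tendsto g atTop (𝓝 l)) :
    IntegrableOn g' (Ioi a) ∧ ∫ x in Ioi a, g' x = l - l₀ := by
  classical
  let G := Function.update g a l₀
  have hcont : ContinuousWithinAt G (Ici a) a := by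
    rwa [continuousWithinAt_update_same, Ici_sdiff_left]
  have hderivG (x : ℝ) (hx : x ∈ Ioi a) : HasDerivAt G (g' x) x :=
    (hderiv x hx).congr_of_eventuallyEq <|
      (eventually_ne_nhds hx.ne').mono fun y hy => Function.update_of_ne hy _ _
  have hGtop : Tendsto G atTop (𝓝 l) :=
    hg.congr' <| (eventually_ne_atTop a).mono fun y hy => (Function.update_of_ne hy _ _).symm
  refine ⟨integrableOn_Ioi_deriv_of_nonneg hcont hderivG hg' hGtop, ?_⟩
  rw [integral_Ioi_of_hasDerivAt_of_nonneg hcont hderivG hg' hGtop]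
  exact congrArg (l - ·) (Function.update_self ..)

noncomputable def zarembaPrimitive (μ τ : ℝ) : ℝ :=
  exp (-μ * τ) * (2 * (cosh τ / sinh τ - τ / sinh τ ^ 2) + 2 * μ * (τ * cosh τ / sinh τ))
    + 2 * μ ^ 2 * ∫ s in 0..τ, exp (-μ * s) * (s * cosh s / sinh s)

section zarembaPrimitive

variable {μ : ℝ}

lemma hasDerivAt_zarembaPrimitive {τ : ℝ} (hτ : 0 < τ) :
    HasDerivAt (zarembaPrimitive μ)
      (exp (-μ * τ) * (4 * τ * cosh τ / sinh τ ^ 3 - 4 / sinh τ ^ 2)) τ := by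
  have hexp : HasDerivAt (fun t => exp (-μ * t)) (exp (-μ * τ) * -μ) τ := by
    simpa using ((hasDerivAt_id' τ).const_mul (-μ)).exp
  have hA := hasDerivAt_cosh_div_sinh_sub_div_sinh_sq hτ.ne'
  have hB := hasDerivAt_mul_cosh_div_sinh hτ.ne'
  have hcont := continuousOn_exp_neg_mul_mul_cosh_div_sinh (μ := μ)
  have hI := intervalIntegral.integral_hasDerivAt_right
    (intervalIntegrable_exp_neg_mul_mul_cosh_div_sinh hτ.le)
    (hcont.stronglyMeasurableAtFilter isOpen_Ioi τ hτ) (hcont.continuousAt (Ioi_mem_nhds hτ))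
  refine ((hexp.mul ((hA.const_mul 2).add (hB.const_mul (2 * μ)))).add
    (hI.const_mul (2 * μ ^ 2))).congr_deriv ?_
  simp only [Pi.add_apply]
  ring

lemma tendsto_zarembaPrimitive_nhdsGT_zero :
    Tendsto (zarembaPrimitive μ) (𝓝[>] 0) (𝓝 (2 * μ)) := by
  have hexp : Tendsto (fun t => exp (-μ * t)) (𝓝[>] 0) (𝓝 1) :=
    ((by fun_prop : Continuous fun t => exp (-μ * t)).tendsto' 0 1 (by simp)).mono_left
      nhdsWithin_le_nhds
  have hI := tendsto_intervalIntegral_nhdsGT one_pos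
    (intervalIntegrable_exp_neg_mul_mul_cosh_div_sinh (μ := μ) zero_le_one)
  unfold zarembaPrimitive
  simpa using (hexp.mul ((tendsto_cosh_div_sinh_sub_div_sinh_sq_nhdsGT_zero.const_mul 2).add
    (tendsto_mul_cosh_div_sinh_nhdsGT_zero.const_mul (2 * μ)))).add (hI.const_mul (2 * μ ^ 2))

lemma tendsto_zarembaPrimitive_atTop (hμ : 0 < μ) :
    Tendsto (zarembaPrimitive μ) atTop
      (𝓝 (2 * μ ^ 2 * ∫ s in Ioi 0, exp (-μ * s) * (s * cosh s / sinh s))) := by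
  have hbdry : Tendsto (fun τ => exp (-μ * τ) *
      (2 * (cosh τ / sinh τ - τ / sinh τ ^ 2) + 2 * μ * (τ * cosh τ / sinh τ))) atTop (𝓝 0) := by
    refine squeeze_zero' (g := fun τ => (2 + 2 * μ) * ((1 + τ) * exp (-μ * τ))) ?_ ?_
      (by simpa using (tendsto_one_add_mul_exp_neg_mul_atTop hμ).const_mul (2 + 2 * μ))
      <;> filter_upwards [eventually_gt_atTop 0] with τ hτ
    · have := cosh_div_sinh_sub_div_sinh_sq_nonneg hτ
      have := one_le_mul_cosh_div_sinh hτ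
      positivity
    · have hA := cosh_div_sinh_sub_div_sinh_sq_le hτ
      have hB := mul_cosh_div_sinh_le_one_add hτ
      have hsum : 2 * (cosh τ / sinh τ - τ / sinh τ ^ 2) + 2 * μ * (τ * cosh τ / sinh τ)
          ≤ (2 + 2 * μ) * (1 + τ) := by nlinarith
      calc _ ≤ exp (-μ * τ) * ((2 + 2 * μ) * (1 + τ)) :=
            mul_le_mul_of_nonneg_left hsum (exp_pos _).le
        _ = _ := by ring
  have hI := intervalIntegral_tendsto_integral_Ioi 0
    (integrableOn_exp_neg_mul_mul_cosh_div_sinh hμ) tendsto_id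
  unfold zarembaPrimitive
  simpa using hbdry.add (hI.const_mul (2 * μ ^ 2))

end zarembaPrimitive

/-- For every `μ > 0`, the function
`τ ↦ e^{−μτ} (4τ cosh τ / sinh³ τ − 4/ sinh² τ)` is integrable on `(0,∞)` and
`∫₀^∞ e^{−μτ} (4τ cosh τ / sinh³ τ − 4/ sinh² τ) dτ
  = −2(μ+1) + μ² · Σ_{l=0}^∞ 1/(l + μ/2)²`. -/
theorem zaremba_laplace_transform (μ : ℝ) (hμ : 0 < μ) :
    IntegrableOn
      (fun τ : ℝ =>
        Real.exp (-μ * τ) *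
          (4 * τ * Real.cosh τ / (Real.sinh τ) ^ 3 - 4 / (Real.sinh τ) ^ 2))
      (Set.Ioi 0) ∧
    ∫ τ in Set.Ioi (0 : ℝ),
        Real.exp (-μ * τ) *
          (4 * τ * Real.cosh τ / (Real.sinh τ) ^ 3 - 4 / (Real.sinh τ) ^ 2)
      = -2 * (μ + 1) + μ ^ 2 * ∑' l : ℕ, 1 / ((l : ℝ) + μ / 2) ^ 2 := by
  obtain ⟨hint, hval⟩ := integrableOn_and_integral_Ioi_deriv_of_nonneg
    (fun τ hτ => hasDerivAt_zarembaPrimitive hτ)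
    (fun τ hτ => mul_nonneg (exp_pos _).le (sub_nonneg.mpr (four_div_sinh_sq_le hτ)))
    tendsto_zarembaPrimitive_nhdsGT_zero (tendsto_zarembaPrimitive_atTop hμ)
  refine ⟨hint, hval.trans ?_⟩
  rw [integral_exp_neg_mul_mul_cosh_div_sinh hμ]
  field_simp
  ring
end

section
/- The iterated series Σ_{k=0}^∞ (−1)^k Σ_{l=0}^∞ 1/(l + (2k+1)/4)² converges and equals π + 8C + π²/2, where C = Σ_{k=0}^∞ (−1)^k/(2k+1)² is the Catalan constant. -/
open Real Filter

private lemma np1 (n : ℕ) : ((-1:ℝ))^(2*n) = 1 := by rw [pow_mul]; norm_num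

private lemma np2 (n : ℕ) : ((-1:ℝ))^(2*n+1) = -1 := by rw [pow_succ, np1]; norm_num

/-- base summable series `1/(l+1)^2` -/
private lemma aux_summable_base : Summable (fun l : ℕ => 1 / ((l : ℝ) + 1) ^ 2) := by
  have h := (summable_nat_add_iff 1).mpr
    (Real.summable_one_div_nat_pow.mpr one_lt_two)
  exact h.congr fun n => by push_cast; ring

private lemma aux_summable {a : ℝ} (ha : 1/4 ≤ a) :
    Summable (fun l : ℕ => 1 / ((l : ℝ) + a) ^ 2) := by
  refine Summable.of_nonneg_of_le (fun l => by positivity) (fun l => ?_)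
    (aux_summable_base.mul_left 16)
  have hl : (0:ℝ) ≤ (l:ℝ) := Nat.cast_nonneg l
  have h1 : (0:ℝ) < (l:ℝ) + a := by linarith
  have h2 : (0:ℝ) < (l:ℝ) + 1 := by linarith
  rw [show (16:ℝ) * (1 / ((l:ℝ) + 1) ^ 2) = 16 / ((l:ℝ)+1)^2 by ring,
    div_le_div_iff₀ (by positivity) (by positivity)]
  nlinarith [sq_nonneg ((l:ℝ) + a), sq_nonneg ((l:ℝ)+1)]

noncomputable def TT (k : ℕ) : ℝ := ∑' l : ℕ, 1 / ((l : ℝ) + (2 * (k : ℝ) + 1) / 4) ^ 2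

noncomputable def cc (l : ℕ) : ℝ := 1 / ((l:ℝ) + 1/4) ^ 2 - 1 / ((l:ℝ) + 3/4) ^ 2

private lemma summable_A : Summable (fun l : ℕ => 1 / ((l:ℝ) + 1/4) ^ 2) :=
  aux_summable le_rfl

private lemma summable_B : Summable (fun l : ℕ => 1 / ((l:ℝ) + 3/4) ^ 2) :=
  aux_summable (by norm_num)

private lemma summable_cc : Summable cc := summable_A.sub summable_B

private lemma summable_shiftA (m : ℕ) :
    Summable (fun j : ℕ => 1 / (((m + j : ℕ) : ℝ) + 1/4) ^ 2) := by
  have h := aux_summable (a := (m:ℝ) + 1/4)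
    (by have : (0:ℝ) ≤ (m:ℝ) := Nat.cast_nonneg m; linarith)
  exact h.congr fun j => by push_cast; ring_nf

private lemma summable_shiftB (m : ℕ) :
    Summable (fun j : ℕ => 1 / (((m + j : ℕ) : ℝ) + 3/4) ^ 2) := by
  have h := aux_summable (a := (m:ℝ) + 3/4)
    (by have : (0:ℝ) ≤ (m:ℝ) := Nat.cast_nonneg m; linarith)
  exact h.congr fun j => by push_cast; ring_nf

private lemma g_eq (m : ℕ) : TT (2*m) - TT (2*m+1) = ∑' j : ℕ, cc (m + j) := by
  have hA : TT (2*m) = ∑' j : ℕ, 1 / (((m + j : ℕ) : ℝ) + 1/4) ^ 2 :=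
    tsum_congr fun l => by push_cast; ring_nf
  have hB : TT (2*m+1) = ∑' j : ℕ, 1 / (((m + j : ℕ) : ℝ) + 3/4) ^ 2 :=
    tsum_congr fun l => by push_cast; ring_nf
  rw [hA, hB, ← Summable.tsum_sub (summable_shiftA m) (summable_shiftB m)]
  exact tsum_congr fun j => rfl

private lemma cc_nonneg (l : ℕ) : 0 ≤ cc l := by
  have hl : (0:ℝ) ≤ (l:ℝ) := Nat.cast_nonneg l
  have h : 1 / ((l:ℝ) + 3/4) ^ 2 ≤ 1 / ((l:ℝ) + 1/4) ^ 2 := by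
    gcongr
    linarith
  unfold cc; linarith

/-- sum of tails telescoping lemma -/
private lemma sum_tails_tendsto {c : ℕ → ℝ} (h0 : ∀ l, 0 ≤ c l) (hc : Summable c)
    (hd : Summable (fun l : ℕ => ((l:ℝ) + 1) * c l)) :
    Tendsto (fun n => ∑ m ∈ Finset.range n, ∑' j : ℕ, c (m + j)) atTop
      (nhds (∑' l : ℕ, ((l:ℝ) + 1) * c l)) := by
  set R : ℕ → ℝ := fun m => ∑' j : ℕ, c (m + j) with hRdef
  have hsum : ∀ m, Summable (fun j => c (m + j)) := fun m =>
    ((summable_nat_add_iff m).mpr hc).congr fun j => by rw [Nat.add_comm]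
  have hrec : ∀ m, R m = c m + R (m+1) := by
    intro m
    have h1 : R m = c (m + 0) + ∑' j : ℕ, c (m + (j + 1)) := Summable.tsum_eq_zero_add (hsum m)
    have h2 : ∑' j : ℕ, c (m + (j + 1)) = R (m+1) :=
      tsum_congr fun j => by rw [show m + (j+1) = (m+1) + j by omega]
    rw [h1, h2, Nat.add_zero]
  have key : ∀ n : ℕ, ∑ m ∈ Finset.range n, R m
      = (∑ l ∈ Finset.range n, ((l:ℝ)+1) * c l) + (n:ℝ) * R n := by
    intro n
    induction n with
    | zero => simp
    | succ n ih =>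
        rw [Finset.sum_range_succ, ih, Finset.sum_range_succ, hrec n]
        push_cast
        ring
  have hRnonneg : ∀ n, 0 ≤ R n := fun n => tsum_nonneg fun j => h0 _
  have hRn : Tendsto (fun n : ℕ => (n:ℝ) * R n) atTop (nhds 0) := by
    have h1 : Tendsto (fun i => ∑' k : ℕ, (((k + i : ℕ):ℝ) + 1) * c (k + i)) atTop (nhds 0) :=
      tendsto_sum_nat_add (fun l : ℕ => ((l:ℝ) + 1) * c l)
    apply squeeze_zero (fun n => mul_nonneg (Nat.cast_nonneg n) (hRnonneg n)) (fun n => ?_) h1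
    have hR' : R n = ∑' j : ℕ, c (j + n) := tsum_congr fun j => by rw [Nat.add_comm]
    calc (n:ℝ) * R n = ∑' j : ℕ, (n:ℝ) * c (j + n) := by rw [hR', tsum_mul_left]
      _ ≤ ∑' j : ℕ, (((j + n : ℕ):ℝ) + 1) * c (j + n) := by
          apply Summable.tsum_le_tsum (fun j => ?_)
          · exact (((summable_nat_add_iff n).mpr hc).mul_left _)
          · exact (summable_nat_add_iff n).mpr hd
          · apply mul_le_mul_of_nonneg_right ?_ (h0 _)
            push_cast
            have : (0:ℝ) ≤ (j:ℝ) := Nat.cast_nonneg j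
            linarith
  have hd' : Tendsto (fun n => ∑ l ∈ Finset.range n, ((l:ℝ)+1) * c l) atTop
      (nhds (∑' l : ℕ, ((l:ℝ)+1) * c l)) := hd.hasSum.tendsto_sum_nat
  have h2 := hd'.add hRn
  rw [add_zero] at h2
  exact Tendsto.congr (fun n => (key n).symm) h2

private lemma tendsto_of_even_odd {u : ℕ → ℝ} {L : ℝ}
    (he : Tendsto (fun n => u (2*n)) atTop (nhds L))
    (ho : Tendsto (fun n => u (2*n+1)) atTop (nhds L)) :
    Tendsto u atTop (nhds L) := by
  rw [Metric.tendsto_atTop] at he ho ⊢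
  intro ε hε
  obtain ⟨N1, h1⟩ := he ε hε
  obtain ⟨N2, h2⟩ := ho ε hε
  refine ⟨2 * (max N1 N2) + 1, fun n hn => ?_⟩
  rcases Nat.even_or_odd n with ⟨m, hm⟩ | ⟨m, hm⟩
  · have : n = 2 * m := by omega
    rw [this]
    exact h1 m (by omega)
  · have : n = 2 * m + 1 := by omega
    rw [this]
    exact h2 m (by omega)

private lemma summable_q2 : Summable (fun l : ℕ => 1 / (4*(l:ℝ)+1) ^ 2) := by
  refine Summable.of_nonneg_of_le (fun l => by positivity) (fun l => ?_) aux_summable_base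
  have hl : (0:ℝ) ≤ (l:ℝ) := Nat.cast_nonneg l
  gcongr
  linarith

private lemma summable_q3 : Summable (fun l : ℕ => 1 / (4*(l:ℝ)+3) ^ 2) := by
  refine Summable.of_nonneg_of_le (fun l => by positivity) (fun l => ?_) aux_summable_base
  have hl : (0:ℝ) ≤ (l:ℝ) := Nat.cast_nonneg l
  gcongr <;> linarith

private lemma summable_q1 :
    Summable (fun l : ℕ => 1 / (4*(l:ℝ)+1) - 1 / (4*(l:ℝ)+3)) := by
  refine Summable.of_nonneg_of_le (fun l => ?_) (fun l => ?_) (aux_summable_base.mul_left 2)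
  · have hl : (0:ℝ) ≤ (l:ℝ) := Nat.cast_nonneg l
    have h : 1 / (4*(l:ℝ)+3) ≤ 1 / (4*(l:ℝ)+1) := by
      gcongr <;> linarith
    linarith
  · have hl : (0:ℝ) ≤ (l:ℝ) := Nat.cast_nonneg l
    have h1 : (0:ℝ) < 4*(l:ℝ)+1 := by linarith
    have h3 : (0:ℝ) < 4*(l:ℝ)+3 := by linarith
    have e : 1 / (4*(l:ℝ)+1) - 1 / (4*(l:ℝ)+3) = 2 / ((4*(l:ℝ)+1) * (4*(l:ℝ)+3)) := by
      field_simp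
      ring
    rw [e, show (2:ℝ) * (1 / ((l:ℝ)+1)^2) = 2 / ((l:ℝ)+1)^2 by ring]
    gcongr
    nlinarith

/-- Leibniz series, paired -/
private lemma tsum_q1 : ∑' l : ℕ, (1 / (4*(l:ℝ)+1) - 1 / (4*(l:ℝ)+3)) = π / 4 := by
  have hpartial : ∀ n, ∑ l ∈ Finset.range n, (1 / (4*(l:ℝ)+1) - 1 / (4*(l:ℝ)+3))
      = ∑ i ∈ Finset.range (2*n), (-1:ℝ)^i / (2*(i:ℝ)+1) := by
    intro n
    induction n with
    | zero => simp
    | succ n ih =>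
        rw [Finset.sum_range_succ, ih, show 2*(n+1) = (2*n+1)+1 by omega,
          Finset.sum_range_succ, Finset.sum_range_succ, np1, np2]
        push_cast
        ring
  have hm : Tendsto (fun n : ℕ => 2*n) atTop atTop :=
    tendsto_atTop_mono (fun n => by simp; omega) tendsto_id
  have h2n : Tendsto (fun n : ℕ => ∑ i ∈ Finset.range (2*n), (-1:ℝ)^i / (2*(i:ℝ)+1)) atTop
      (nhds (π/4)) := (Real.tendsto_sum_pi_div_four).comp hm
  have h3 : Tendsto (fun n => ∑ l ∈ Finset.range n, (1 / (4*(l:ℝ)+1) - 1 / (4*(l:ℝ)+3)))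
      atTop (nhds (π/4)) := Tendsto.congr (fun n => (hpartial n).symm) h2n
  exact tendsto_nhds_unique summable_q1.hasSum.tendsto_sum_nat h3

set_option maxHeartbeats 1000000 in
private lemma tsum_odd_sq : ∑' k : ℕ, 1 / (2*(k:ℝ)+1) ^ 2 = π^2 / 8 := by
  have hfull : HasSum (fun n : ℕ => (1:ℝ) / (n:ℝ)^2) (π^2/6) := hasSum_zeta_two
  have hsum_even : Summable (fun k : ℕ => (1:ℝ) / ((2*k : ℕ):ℝ)^2) :=
    (hfull.summable.mul_left (1/4)).congr fun k => by push_cast; rw [mul_pow]; ring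
  have hsum_odd : Summable (fun k : ℕ => (1:ℝ) / ((2*k+1 : ℕ):ℝ)^2) := by
    refine Summable.of_nonneg_of_le (fun l => by positivity) (fun l => ?_) aux_summable_base
    have hl : (0:ℝ) ≤ (l:ℝ) := Nat.cast_nonneg l
    push_cast
    gcongr
    linarith
  have hkey : (∑' k : ℕ, (1:ℝ) / ((2*k : ℕ):ℝ)^2) + (∑' k : ℕ, (1:ℝ) / ((2*k+1 : ℕ):ℝ)^2)
      = ∑' n : ℕ, (1:ℝ) / (n:ℝ)^2 :=
    tsum_even_add_odd (f := fun n : ℕ => (1:ℝ) / (n:ℝ)^2) hsum_even hsum_odd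
  have heval : ∑' k : ℕ, (1:ℝ) / ((2*k : ℕ):ℝ)^2 = π^2/24 := by
    have h : ∑' k : ℕ, (1:ℝ) / ((2*k : ℕ):ℝ)^2 = ∑' k : ℕ, (1/4) * ((1:ℝ)/(k:ℝ)^2) :=
      tsum_congr fun k => by push_cast; rw [mul_pow]; ring
    rw [h, tsum_mul_left, hfull.tsum_eq]
    ring
  have hfull' : ∑' n : ℕ, (1:ℝ) / (n:ℝ)^2 = π^2/6 := hfull.tsum_eq
  have hodd : ∑' k : ℕ, (1:ℝ) / ((2*k+1 : ℕ):ℝ)^2 = π^2/8 := by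
    rw [hfull', heval] at hkey
    linarith
  rw [← hodd]
  exact tsum_congr fun k => by push_cast; ring_nf

set_option maxHeartbeats 1000000 in
private lemma E_identities :
    (∑' l : ℕ, 1 / (4*(l:ℝ)+1) ^ 2) + (∑' l : ℕ, 1 / (4*(l:ℝ)+3) ^ 2) = π^2/8 ∧
    (∑' l : ℕ, 1 / (4*(l:ℝ)+1) ^ 2) - (∑' l : ℕ, 1 / (4*(l:ℝ)+3) ^ 2)
      = ∑' k : ℕ, (-1:ℝ)^k / (2*(k:ℝ)+1)^2 := by
  have he1 : Summable (fun l : ℕ => (1:ℝ) / (2*((2*l : ℕ):ℝ)+1)^2) :=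
    summable_q2.congr fun l => by push_cast; ring_nf
  have ho1 : Summable (fun l : ℕ => (1:ℝ) / (2*((2*l+1 : ℕ):ℝ)+1)^2) :=
    summable_q3.congr fun l => by push_cast; ring_nf
  have h1 : (∑' l : ℕ, (1:ℝ) / (2*((2*l : ℕ):ℝ)+1)^2)
        + (∑' l : ℕ, (1:ℝ) / (2*((2*l+1 : ℕ):ℝ)+1)^2)
      = ∑' k : ℕ, (1:ℝ) / (2*(k:ℝ)+1)^2 :=
    tsum_even_add_odd (f := fun k : ℕ => (1:ℝ) / (2*(k:ℝ)+1)^2) he1 ho1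
  have e1 : ∑' l : ℕ, (1:ℝ) / (2*((2*l : ℕ):ℝ)+1)^2 = ∑' l : ℕ, 1 / (4*(l:ℝ)+1)^2 :=
    tsum_congr fun l => by push_cast; ring_nf
  have e2 : ∑' l : ℕ, (1:ℝ) / (2*((2*l+1 : ℕ):ℝ)+1)^2 = ∑' l : ℕ, 1 / (4*(l:ℝ)+3)^2 :=
    tsum_congr fun l => by push_cast; ring_nf
  constructor
  · rw [e1, e2] at h1
    rw [h1, tsum_odd_sq]
  · have he2 : Summable (fun l : ℕ => (-1:ℝ)^(2*l : ℕ) / (2*((2*l : ℕ):ℝ)+1)^2) :=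
      summable_q2.congr fun l => by rw [np1]; push_cast; ring_nf
    have ho2 : Summable (fun l : ℕ => (-1:ℝ)^(2*l+1 : ℕ) / (2*((2*l+1 : ℕ):ℝ)+1)^2) :=
      (summable_q3.neg).congr fun l => by rw [np2]; push_cast; ring_nf
    have h2 : (∑' l : ℕ, (-1:ℝ)^(2*l : ℕ) / (2*((2*l : ℕ):ℝ)+1)^2)
          + (∑' l : ℕ, (-1:ℝ)^(2*l+1 : ℕ) / (2*((2*l+1 : ℕ):ℝ)+1)^2)
        = ∑' k : ℕ, (-1:ℝ)^k / (2*(k:ℝ)+1)^2 :=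
      tsum_even_add_odd (f := fun k : ℕ => (-1:ℝ)^k / (2*(k:ℝ)+1)^2) he2 ho2
    have e3 : ∑' l : ℕ, (-1:ℝ)^(2*l : ℕ) / (2*((2*l : ℕ):ℝ)+1)^2
        = ∑' l : ℕ, 1 / (4*(l:ℝ)+1)^2 :=
      tsum_congr fun l => by rw [np1]; push_cast; ring_nf
    have e4 : ∑' l : ℕ, (-1:ℝ)^(2*l+1 : ℕ) / (2*((2*l+1 : ℕ):ℝ)+1)^2
        = ∑' l : ℕ, -(1 / (4*(l:ℝ)+3)^2) :=
      tsum_congr fun l => by rw [np2]; push_cast; ring_nf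
    rw [e3, e4, tsum_neg] at h2
    linarith [h2]

/-- algebraic decomposition of `(l+1)*cc l` -/
private lemma cc_decomp (l : ℕ) :
    ((l:ℝ) + 1) * cc l
      = (4 * (1 / (4*(l:ℝ)+1) - 1 / (4*(l:ℝ)+3)) + 12 * (1 / (4*(l:ℝ)+1)^2))
        - 4 * (1 / (4*(l:ℝ)+3)^2) := by
  have hl : (0:ℝ) ≤ (l:ℝ) := Nat.cast_nonneg l
  have h1 : ((l:ℝ) + 1/4) ≠ 0 := by positivity
  have h2 : ((l:ℝ) + 3/4) ≠ 0 := by positivity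
  have h3 : (4*(l:ℝ)+1) ≠ 0 := by positivity
  have h4 : (4*(l:ℝ)+3) ≠ 0 := by positivity
  unfold cc
  field_simp
  ring

private lemma summable_d : Summable (fun l : ℕ => ((l:ℝ) + 1) * cc l) :=
  (((summable_q1.mul_left 4).add (summable_q2.mul_left 12)).sub
    (summable_q3.mul_left 4)).congr fun l => (cc_decomp l).symm

private lemma value_L :
    ∑' l : ℕ, ((l:ℝ) + 1) * cc l
      = π + 8 * (∑' k : ℕ, (-1:ℝ)^k / (2*(k:ℝ)+1)^2) + π^2/2 := by
  obtain ⟨hEE, hC⟩ := E_identities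
  have h1 : ∑' l : ℕ, ((l:ℝ) + 1) * cc l
      = ∑' l : ℕ, ((4 * (1 / (4*(l:ℝ)+1) - 1 / (4*(l:ℝ)+3)) + 12 * (1 / (4*(l:ℝ)+1)^2))
        - 4 * (1 / (4*(l:ℝ)+3)^2)) := tsum_congr cc_decomp
  rw [h1, Summable.tsum_sub ((summable_q1.mul_left 4).add (summable_q2.mul_left 12))
    (summable_q3.mul_left 4), Summable.tsum_add (summable_q1.mul_left 4) (summable_q2.mul_left 12),
    tsum_mul_left, tsum_mul_left, tsum_mul_left, tsum_q1]
  linarith [hEE, hC]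

noncomputable def FF (n : ℕ) : ℝ := ∑ k ∈ Finset.range n, (-1:ℝ)^k * TT k

private lemma FF_succ (n : ℕ) : FF (n+1) = FF n + (-1:ℝ)^n * TT n :=
  Finset.sum_range_succ _ _

private lemma FF_even (n : ℕ) : FF (2*n) = ∑ m ∈ Finset.range n, ∑' j : ℕ, cc (m + j) := by
  induction n with
  | zero => simp [FF]
  | succ n ih =>
      rw [show 2*(n+1) = (2*n+1)+1 by omega, FF_succ, FF_succ, ih,
        Finset.sum_range_succ, ← g_eq n, np1, np2]
      ring

/-- The iterated series `Σ_{k=0}^∞ (−1)^k Σ_{l=0}^∞ 1/(l + (2k+1)/4)²`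
converges (in the sense of partial sums of the outer alternating series) and equals
`π + 8C + π²/2`, where `C = Σ_{k=0}^∞ (−1)^k/(2k+1)²` is the Catalan constant. -/
theorem zaremba_iterated_trigamma_series :
    Tendsto
      (fun n : ℕ =>
        ∑ k ∈ Finset.range n,
          (-1 : ℝ) ^ k * ∑' l : ℕ, 1 / ((l : ℝ) + (2 * (k : ℝ) + 1) / 4) ^ 2)
      atTop
      (nhds (π + 8 * (∑' k : ℕ, (-1 : ℝ) ^ k / (2 * (k : ℝ) + 1) ^ 2) + π ^ 2 / 2)) := by
  rw [← value_L]
  show Tendsto FF atTop (nhds (∑' l : ℕ, ((l:ℝ) + 1) * cc l))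
  have heven : Tendsto (fun n => FF (2*n)) atTop (nhds (∑' l : ℕ, ((l:ℝ) + 1) * cc l)) :=
    Tendsto.congr (fun n => (FF_even n).symm)
      (sum_tails_tendsto cc_nonneg summable_cc summable_d)
  have hT0 : Tendsto (fun n => TT (2*n)) atTop (nhds 0) := by
    have h1 : Tendsto (fun i => ∑' k : ℕ, 1 / (((k + i : ℕ):ℝ) + 1/4) ^ 2) atTop (nhds 0) :=
      tendsto_sum_nat_add (fun l : ℕ => 1 / ((l:ℝ) + 1/4) ^ 2)
    refine Tendsto.congr (fun n => ?_) h1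
    exact tsum_congr fun l => by push_cast; ring_nf
  have hodd : Tendsto (fun n => FF (2*n+1)) atTop (nhds (∑' l : ℕ, ((l:ℝ) + 1) * cc l)) := by
    have h1 : ∀ n, FF (2*n+1) = FF (2*n) + TT (2*n) := by
      intro n
      rw [FF_succ, np1, one_mul]
    have h2 := heven.add hT0
    rw [add_zero] at h2
    exact Tendsto.congr (fun n => (h1 n).symm) h2
  exact tendsto_of_even_odd heven hodd
end

section
/- The series Σ_{k=0}^∞ (−1)^k/(k+1/2)² · [ −2(k + 3/2) + (k + 1/2)² Σ_{l=0}^∞ 1/(l + (2k+1)/4)² ] converges and its sum equals π²/2. -/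
open Real Filter

noncomputable def Gz (j : ℕ) : ℝ := (-1)^j * 128 / ((2*(j:ℝ)+1)^2 * (2*(j:ℝ)+5)^2)

lemma telescope_hasSum (f : ℕ → ℝ) (hmono : ∀ n, f (n+1) ≤ f n)
    (h0 : Tendsto f atTop (nhds 0)) : HasSum (fun n => f n - f (n+1)) (f 0) := by
  have hA : Antitone f := antitone_nat_of_succ_le hmono
  have hnn : ∀ n, 0 ≤ f n - f (n+1) := fun n => sub_nonneg.2 (hmono n)
  have hps : ∀ n, ∑ i ∈ Finset.range n, (f i - f (i+1)) = f 0 - f n :=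
    fun n => Finset.sum_range_sub' f n
  have hfnn : ∀ n, 0 ≤ f n := fun n =>
    le_of_tendsto h0 (eventually_atTop.2 ⟨n, fun m hm => hA hm⟩)
  have hsum : Summable (fun n => f n - f (n+1)) := by
    apply summable_of_sum_range_le hnn (c := f 0)
    intro n; rw [hps]; linarith [hfnn n]
  rw [hsum.hasSum_iff_tendsto_nat]
  simp only [hps]
  simpa using tendsto_const_nhds.sub h0

lemma oddW : HasSum (fun j : ℕ => 1/(2*(j:ℝ)+1)^2) (π^2/8) := by
  have hf : HasSum (fun n : ℕ => 1/(n:ℝ)^2) (π^2/6) := hasSum_zeta_two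
  have he : HasSum (fun k : ℕ => 1/((2*k : ℕ):ℝ)^2) (π^2/24) := by
    have h2 := hf.mul_left (1/4)
    have : (fun k : ℕ => 1/((2*k : ℕ):ℝ)^2) = (fun k : ℕ => 1/4 * (1/(k:ℝ)^2)) := by
      funext k; push_cast; ring
    rw [this]
    convert h2 using 1; rfl; ring
  have hi : Function.Injective (fun k : ℕ => 2*k+1) := fun a b h => by simp only at h; omega
  have hoS : Summable (fun k : ℕ => 1/((2*k+1 : ℕ):ℝ)^2) := by
    have := hf.summable.comp_injective hi
    simpa [Function.comp_def] using this
  have hkey := HasSum.even_add_odd (f := fun n : ℕ => 1/(n:ℝ)^2) he hoS.hasSum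
  have := hf.unique hkey
  have ht : ∑' k : ℕ, 1/((2*k+1 : ℕ):ℝ)^2 = π^2/8 := by linarith
  rw [ht] at hkey
  have := hoS.hasSum; rw [ht] at this
  convert this using 2 with j; push_cast; ring

lemma summable_shift {a : ℝ} (ha : 1/4 ≤ a) : Summable (fun l : ℕ => 1/((l:ℝ)+a)^2) := by
  have hbase : Summable (fun l : ℕ => 16 * (1/((l+1 : ℕ):ℝ)^2)) := by
    have h0 : Summable (fun l : ℕ => 1/((l+1 : ℕ):ℝ)^2) :=
      (summable_nat_add_iff (f := fun n : ℕ => 1/(n:ℝ)^2) 1).2 hasSum_zeta_two.summable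
    exact h0.mul_left 16
  refine Summable.of_nonneg_of_le (fun l => by positivity) (fun l => ?_) hbase
  have hl0 : (0:ℝ) ≤ (l:ℝ) := Nat.cast_nonneg l
  have e1 : (16:ℝ) * (1/((l+1 : ℕ):ℝ)^2) = 1/((((l:ℝ)+1)/4)^2) := by
    have h1 : ((l:ℝ)+1) ≠ 0 := by positivity
    push_cast; field_simp; ring
  rw [e1]
  apply one_div_le_one_div_of_le (by positivity)
  have h : ((l:ℝ)+1)/4 ≤ (l:ℝ)+a := by linarith
  exact pow_le_pow_left₀ (by positivity) h 2

lemma termHasSum (k : ℕ) :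
    HasSum (fun l : ℕ => Gz (k + 2*l))
      ((-1 : ℝ) ^ k / ((k : ℝ) + 1 / 2) ^ 2 *
        (-2 * ((k : ℝ) + 3 / 2) +
          ((k : ℝ) + 1 / 2) ^ 2 * ∑' l : ℕ, 1 / ((l : ℝ) + (2 * (k : ℝ) + 1) / 4) ^ 2)) := by
  set a : ℝ := (2*(k:ℝ)+1)/4 with ha
  have ha4 : (1:ℝ)/4 ≤ a := by
    rw [ha]; have : (0:ℝ) ≤ (k:ℝ) := Nat.cast_nonneg k; linarith
  have hapos : (0:ℝ) < a := lt_of_lt_of_le (by norm_num) ha4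
  have h1 : Summable (fun l : ℕ => 1/((l:ℝ)+a)^2) := summable_shift ha4
  have hS := h1.hasSum
  have hpos : ∀ l : ℕ, (0:ℝ) < (l:ℝ) + a := fun l => by
    have : (0:ℝ) ≤ (l:ℝ) := Nat.cast_nonneg l; linarith
  -- telescoping sums
  have hatop : Tendsto (fun l : ℕ => (l:ℝ)+a) atTop atTop :=
    tendsto_atTop_add_const_right _ a tendsto_natCast_atTop_atTop
  have hf0 : Tendsto (fun l : ℕ => 1/((l:ℝ)+a)) atTop (nhds 0) := by
    simpa [one_div, Pi.inv_def] using hatop.inv_tendsto_atTop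
  have h2 : HasSum (fun l : ℕ => 1/((l:ℝ)+a) - 1/(((l+1:ℕ):ℝ)+a)) (1/(((0:ℕ):ℝ)+a)) := by
    apply telescope_hasSum (f := fun l : ℕ => 1/((l:ℝ)+a))
    · intro n
      apply one_div_le_one_div_of_le (hpos n)
      push_cast; linarith
    · exact hf0
  have h3 : HasSum (fun l : ℕ => 1/(2*((l:ℝ)+a)^2) - 1/(2*((((l+1:ℕ):ℝ)+a))^2))
      (1/(2*(((0:ℕ):ℝ)+a)^2)) := by
    apply telescope_hasSum (f := fun l : ℕ => 1/(2*((l:ℝ)+a)^2))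
    · intro n
      apply one_div_le_one_div_of_le (by have := hpos n; positivity)
      have h1 : (n:ℝ)+a ≤ ((n+1:ℕ):ℝ)+a := by push_cast; linarith
      have := hpos n
      nlinarith
    · have : Tendsto (fun l : ℕ => (1/((l:ℝ)+a)) * (1/((l:ℝ)+a)) * (1/2)) atTop
          (nhds (0*0*(1/2))) := (hf0.mul hf0).mul_const _
      simpa using this.congr (fun l => by field_simp)
  have hcomb := (((hS.sub h2).sub h3).mul_left ((-1:ℝ)^k))
  have hfun : (fun l : ℕ => (-1:ℝ)^k * ((1/((l:ℝ)+a)^2 -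
        (1/((l:ℝ)+a) - 1/(((l+1:ℕ):ℝ)+a))) -
        (1/(2*((l:ℝ)+a)^2) - 1/(2*((((l+1:ℕ):ℝ)+a))^2)))) = fun l : ℕ => Gz (k + 2*l) := by
    funext l
    have hx := hpos l
    have hx1 : (0:ℝ) < (l:ℝ) + a + 1 := by linarith
    have e1 : (2*((k+2*l : ℕ):ℝ)+1) = 4*((l:ℝ)+a) := by rw [ha]; push_cast; ring
    have e2 : (2*((k+2*l : ℕ):ℝ)+5) = 4*((l:ℝ)+a+1) := by rw [ha]; push_cast; ring
    have e3 : ((-1:ℝ))^(k+2*l) = (-1:ℝ)^k := by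
      rw [pow_add, pow_mul]; norm_num
    rw [Gz, e1, e2, e3]
    push_cast
    field_simp
    ring
  rw [hfun] at hcomb
  have hval : (-1:ℝ)^k * ((∑' l : ℕ, 1/((l:ℝ)+a)^2 - 1/(((0:ℕ):ℝ)+a)) - 1/(2*(((0:ℕ):ℝ)+a)^2))
      = (-1 : ℝ) ^ k / ((k : ℝ) + 1 / 2) ^ 2 *
        (-2 * ((k : ℝ) + 3 / 2) + ((k : ℝ) + 1 / 2) ^ 2 * ∑' l : ℕ, 1/((l:ℝ)+a)^2) := by
    have hk2 : ((k:ℝ) + 1/2) ≠ 0 := by positivity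
    rw [ha]
    push_cast
    have h4 : (2*(k:ℝ)+1) ≠ 0 := by positivity
    field_simp
    ring
  rw [hval] at hcomb
  convert hcomb using 2

noncomputable def wz (j : ℕ) : ℝ := 1/(2*(j:ℝ)+1)^2
noncomputable def vz (j : ℕ) : ℝ := 1/(2*(j:ℝ)+1)
noncomputable def uz (j : ℕ) : ℝ := 4*(-1)^j * wz j
noncomputable def fz (j : ℕ) : ℝ := vz j + vz (j+1)

lemma weightedHasSum : HasSum (fun j : ℕ => ((j/2+1 : ℕ):ℝ) * Gz j) (π^2/2) := by
  have hW : HasSum wz (π^2/8) := oddW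
  have hu : Summable uz := by
    apply Summable.of_abs
    have : (fun j => |uz j|) = fun j => 4 * wz j := by
      funext j
      have hw0 : (0:ℝ) ≤ wz j := by rw [wz]; positivity
      rw [uz, abs_mul, abs_of_nonneg hw0, abs_mul, abs_pow]
      norm_num
    rw [this]
    exact hW.summable.mul_left 4
  have hushift : HasSum (fun j => uz (j+2)) ((∑' j, uz j) - (uz 0 + uz 1)) := by
    rw [hasSum_nat_add_iff (f := uz) 2]
    convert hu.hasSum using 1
    rfl
    simp [Finset.sum_range_succ]
  have hwshift : HasSum (fun j => wz (j+2)) (π^2/8 - (wz 0 + wz 1)) := by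
    rw [hasSum_nat_add_iff (f := wz) 2]
    convert hW using 1
    rfl
    simp [Finset.sum_range_succ]
  have hv0 : Tendsto vz atTop (nhds 0) := by
    have hatop : Tendsto (fun j : ℕ => 2*(j:ℝ)+1) atTop atTop := by
      apply tendsto_atTop_add_const_right
      exact (tendsto_natCast_atTop_atTop (R := ℝ)).const_mul_atTop (by norm_num)
    exact Tendsto.congr (fun j => by simp [vz, Pi.inv_apply, one_div]) hatop.inv_tendsto_atTop
  have hvmono : ∀ n, vz (n+1) ≤ vz n := by
    intro n
    apply one_div_le_one_div_of_le (by positivity)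
    push_cast; linarith
  have htel : HasSum (fun j => fz j - fz (j+1)) (fz 0) := by
    apply telescope_hasSum
    · intro n; exact add_le_add (hvmono n) (hvmono (n+1))
    · have h2 := hv0.add (hv0.comp (tendsto_add_atTop_nat 1))
      exact (by simpa [Function.comp_def] using h2 : Tendsto (fun x => vz x + vz (x + 1)) atTop (nhds 0))
  have hcomb := ((hu.hasSum.sub hushift).add ((hW.mul_left 2).add (hwshift.mul_left 2))).sub htel
  have hfun : (fun j : ℕ => (uz j - uz (j+2)) + (2 * wz j + 2 * wz (j+2)) - (fz j - fz (j+1)))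
      = fun j : ℕ => ((j/2+1 : ℕ):ℝ) * Gz j := by
    funext j
    rcases Nat.even_or_odd j with ⟨i, rfl⟩ | ⟨i, rfl⟩
    · have hdiv : ((i+i)/2+1 : ℕ) = i+1 := by omega
      have s1 : ((-1:ℝ))^(i+i) = 1 := Even.neg_one_pow ⟨i, rfl⟩
      have s2 : ((-1:ℝ))^(i+i+2) = 1 := Even.neg_one_pow ⟨i+1, by ring⟩
      rw [hdiv]
      simp only [Gz, uz, wz, vz, fz, s1, s2]
      have hx : (0:ℝ) ≤ (i:ℝ) := Nat.cast_nonneg i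
      have d1 : (4*(i:ℝ)+1) ≠ 0 := by positivity
      have d2 : (4*(i:ℝ)+3) ≠ 0 := by positivity
      have d3 : (4*(i:ℝ)+5) ≠ 0 := by positivity
      push_cast
      field_simp
      ring
    · have hdiv : ((2*i+1)/2+1 : ℕ) = i+1 := by omega
      have s1 : ((-1:ℝ))^(2*i+1) = -1 := Odd.neg_one_pow ⟨i, rfl⟩
      have s2 : ((-1:ℝ))^(2*i+1+2) = -1 := Odd.neg_one_pow ⟨i+1, by ring⟩
      rw [hdiv]
      simp only [Gz, uz, wz, vz, fz, s1, s2]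
      have hx : (0:ℝ) ≤ (i:ℝ) := Nat.cast_nonneg i
      have d1 : (4*(i:ℝ)+3) ≠ 0 := by positivity
      have d2 : (4*(i:ℝ)+5) ≠ 0 := by positivity
      have d3 : (4*(i:ℝ)+7) ≠ 0 := by positivity
      push_cast
      field_simp
      ring
  rw [hfun] at hcomb
  convert hcomb using 1
  rfl
  have e1 : uz 0 = 4 := by norm_num [uz, wz]
  have e2 : uz 1 = -(4/9) := by norm_num [uz, wz]
  have e3 : wz 0 = 1 := by norm_num [wz]
  have e4 : wz 1 = 1/9 := by norm_num [wz]
  have e5 : fz 0 = 4/3 := by norm_num [fz, vz]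
  rw [e1, e2, e3, e4, e5]
  ring

lemma fiberHasSum (j : ℕ) (c : ℝ) :
    HasSum (fun l : ℕ => if 2*l ≤ j then c else 0) (((j/2+1 : ℕ):ℝ) * c) := by
  have hz : ∀ l ∉ Finset.range (j/2+1), (if 2*l ≤ j then c else 0) = 0 := by
    intro l hl
    rw [if_neg]
    simp only [Finset.mem_range] at hl
    omega
  have h := hasSum_sum_of_ne_finset_zero (L := SummationFilter.unconditional ℕ) hz
  have : ∑ l ∈ Finset.range (j/2+1), (if 2*l ≤ j then c else 0) = ((j/2+1 : ℕ):ℝ) * c := by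
    rw [Finset.sum_congr rfl (fun l hl => if_pos (by simp only [Finset.mem_range] at hl; omega))]
    rw [Finset.sum_const, Finset.card_range, nsmul_eq_mul]
  rwa [this] at h

lemma absGz (j : ℕ) : |Gz j| = 128 / ((2*(j:ℝ)+1)^2 * (2*(j:ℝ)+5)^2) := by
  have h1 : (0:ℝ) < 2*(j:ℝ)+1 := by positivity
  have h2 : (0:ℝ) < 2*(j:ℝ)+5 := by positivity
  rw [Gz, abs_div, abs_mul, abs_pow, abs_of_pos (by positivity : (0:ℝ) < (2*(j:ℝ)+1)^2 * (2*(j:ℝ)+5)^2)]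
  norm_num

lemma weightedAbsSummable : Summable (fun j : ℕ => ((j/2+1 : ℕ):ℝ) * |Gz j|) := by
  have hbase : Summable (fun j : ℕ => 128 * (1/((j+1 : ℕ):ℝ)^2)) :=
    ((summable_nat_add_iff (f := fun n : ℕ => 1/(n:ℝ)^2) 1).2 hasSum_zeta_two.summable).mul_left 128
  refine Summable.of_nonneg_of_le (fun j => by positivity) (fun j => ?_) hbase
  rw [absGz]
  have hc : ((j/2+1 : ℕ):ℝ) ≤ (j:ℝ)+1 := by
    have : (j/2+1 : ℕ) ≤ j+1 := by omega
    calc ((j/2+1 : ℕ):ℝ) ≤ ((j+1 : ℕ):ℝ) := Nat.cast_le.2 this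
    _ = (j:ℝ)+1 := by push_cast; ring
  have hx : (0:ℝ) ≤ (j:ℝ) := Nat.cast_nonneg j
  have h1 : (0:ℝ) < (j:ℝ)+1 := by linarith
  have e1 : ((j/2+1 : ℕ):ℝ) * (128 / ((2*(j:ℝ)+1)^2 * (2*(j:ℝ)+5)^2))
      = (((j/2+1 : ℕ):ℝ) * 128) / ((2*(j:ℝ)+1)^2 * (2*(j:ℝ)+5)^2) := by ring
  have e2 : (128:ℝ) * (1/((j+1 : ℕ):ℝ)^2) = 128 / ((j+1 : ℕ):ℝ)^2 := by ring
  rw [e1, e2, div_le_div_iff₀ (by positivity) (by positivity)]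
  have key : (((j:ℝ)+1) * 128) * ((j:ℝ)+1)^2 ≤ 128 * ((2*(j:ℝ)+1)^2 * (2*(j:ℝ)+5)^2) := by
    nlinarith [sq_nonneg ((j:ℝ)), sq_nonneg ((j:ℝ)+1), sq_nonneg ((j:ℝ)*(j:ℝ))]
  calc (((j/2+1 : ℕ):ℝ) * 128) * ((j+1 : ℕ):ℝ)^2
      ≤ (((j:ℝ)+1) * 128) * ((j+1 : ℕ):ℝ)^2 :=
        mul_le_mul_of_nonneg_right (mul_le_mul_of_nonneg_right hc (by norm_num)) (by positivity)
    _ = (((j:ℝ)+1) * 128) * ((j:ℝ)+1)^2 := by push_cast; ring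
    _ ≤ 128 * ((2*(j:ℝ)+1)^2 * (2*(j:ℝ)+5)^2) := key

lemma Hhassum : HasSum (fun p : ℕ×ℕ => if 2*p.2 ≤ p.1 then Gz p.1 else 0) (π^2/2) := by
  have habs : Summable (fun p : ℕ×ℕ => |if 2*p.2 ≤ p.1 then Gz p.1 else 0|) := by
    have he : (fun p : ℕ×ℕ => |if 2*p.2 ≤ p.1 then Gz p.1 else 0|)
        = fun p : ℕ×ℕ => if 2*p.2 ≤ p.1 then |Gz p.1| else 0 := by
      funext p
      split <;> simp
    rw [he]
    rw [summable_prod_of_nonneg (fun p => by dsimp; split <;> positivity)]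
    refine ⟨fun j => (fiberHasSum j |Gz j|).summable, ?_⟩
    apply Summable.congr weightedAbsSummable
    intro j
    exact ((fiberHasSum j |Gz j|).tsum_eq).symm
  have hHs : Summable (fun p : ℕ×ℕ => if 2*p.2 ≤ p.1 then Gz p.1 else 0) :=
    Summable.of_abs habs
  have ht : ∑' p : ℕ×ℕ, (if 2*p.2 ≤ p.1 then Gz p.1 else 0) = π^2/2 := by
    rw [Summable.tsum_prod' hHs (fun j => (fiberHasSum j (Gz j)).summable)]
    have : ∀ j : ℕ, ∑' l : ℕ, (if 2*l ≤ j then Gz j else 0) = ((j/2+1 : ℕ):ℝ) * Gz j :=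
      fun j => (fiberHasSum j (Gz j)).tsum_eq
    rw [tsum_congr this]
    exact weightedHasSum.tsum_eq
  rw [← ht]
  exact hHs.hasSum

lemma Fhassum : HasSum (fun q : ℕ×ℕ => Gz (q.1 + 2*q.2)) (π^2/2) := by
  have hinj : Function.Injective (fun q : ℕ×ℕ => (q.1 + 2*q.2, q.2)) := by
    intro a b h
    simp only [Prod.mk.injEq] at h
    obtain ⟨h1, h2⟩ := h
    exact Prod.ext (by omega) h2
  have hz : ∀ p ∉ Set.range (fun q : ℕ×ℕ => (q.1 + 2*q.2, q.2)),
      (if 2*p.2 ≤ p.1 then Gz p.1 else 0) = 0 := by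
    intro p hp
    rw [if_neg]
    intro hle
    have he : (p.1 - 2*p.2) + 2*p.2 = p.1 := by omega
    exact hp ⟨(p.1 - 2*p.2, p.2), Prod.ext he rfl⟩
  have h := (hinj.hasSum_iff hz).2 Hhassum
  have hfe : ((fun x : ℕ×ℕ => if 2*x.2 ≤ x.1 then Gz x.1 else 0) ∘ fun q : ℕ×ℕ => (q.1 + 2*q.2, q.2))
      = fun q : ℕ×ℕ => Gz (q.1 + 2*q.2) := by
    funext q
    simp only [Function.comp_apply]
    rw [if_pos (by omega)]
  rw [hfe] at h
  exact h

/-- The series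
`Σ_{k=0}^∞ (−1)^k/(k+1/2)² · [ −2(k + 3/2) + (k + 1/2)² Σ_{l=0}^∞ 1/(l + (2k+1)/4)² ]`
converges (in the sense of partial sums) and its sum equals `π²/2`. -/
theorem zaremba_c0_series :
    Tendsto
      (fun n : ℕ =>
        ∑ k ∈ Finset.range n,
          (-1 : ℝ) ^ k / ((k : ℝ) + 1 / 2) ^ 2 *
            (-2 * ((k : ℝ) + 3 / 2) +
              ((k : ℝ) + 1 / 2) ^ 2 * ∑' l : ℕ, 1 / ((l : ℝ) + (2 * (k : ℝ) + 1) / 4) ^ 2))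
      atTop (nhds (π ^ 2 / 2)) := by
  have hT := Fhassum.prod_fiberwise termHasSum
  exact hT.tendsto_sum_nat
end

section
/- Define β(x) := Σ_{j=0}^∞ (−1)^j/(x + j) for x > 0. Then for every μ > 0, ∫₀^∞ e^{−μτ} / cosh⁴(τ/2) dτ = (2/3) μ ( 1 + 2(μ² − 1)(β(μ+1) − β(μ)) ). -/
open MeasureTheory Real Filter Set


noncomputable def zcG (s : ℝ) (k : ℕ) : ℝ → ℝ :=
  fun τ => Real.exp (-s * τ) / (1 + Real.exp (-τ)) ^ k

lemma zc_cont (s : ℝ) (k : ℕ) : Continuous (zcG s k) := by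
  apply Continuous.div (by continuity) (by continuity)
  intro τ; positivity

lemma zc_int (s : ℝ) (hs : 0 < s) (k : ℕ) :
    IntegrableOn (zcG s k) (Set.Ioi 0) := by
  apply (exp_neg_integrableOn_Ioi 0 hs).mono'
    ((zc_cont s k).aestronglyMeasurable)
  filter_upwards with τ
  rw [zcG, Real.norm_eq_abs, abs_div, abs_of_nonneg (Real.exp_nonneg _),
    abs_of_nonneg (by positivity)]
  apply div_le_self (Real.exp_nonneg _)
  exact one_le_pow₀ (by nlinarith [Real.exp_pos (-τ)])

lemma zc_hasDeriv (s : ℝ) (hs : 0 < s) (k : ℕ) (τ : ℝ) :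
    HasDerivAt (fun τ => -Real.exp (-s * τ) / (s * (1 + Real.exp (-τ)) ^ k))
      (zcG s k τ - (k / s) * zcG (s + 1) (k + 1) τ) τ := by
  have hE : (0:ℝ) < 1 + Real.exp (-τ) := by positivity
  have hu : HasDerivAt (fun τ : ℝ => -Real.exp (-s * τ)) (s * Real.exp (-s * τ)) τ := by
    have h1 : HasDerivAt (fun τ : ℝ => -s * τ) (-s) τ := by
      simpa using (hasDerivAt_id τ).const_mul (-s)
    have := h1.exp.neg
    exact this.congr_deriv (by ring)
  have hc : HasDerivAt (fun τ : ℝ => 1 + Real.exp (-τ)) (-Real.exp (-τ)) τ := by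
    have h1 : HasDerivAt (fun τ : ℝ => -τ) (-1) τ := by
      exact (hasDerivAt_id' τ).neg
    have := (h1.exp).const_add 1
    exact this.congr_deriv (by ring)
  have hv : HasDerivAt (fun τ : ℝ => s * (1 + Real.exp (-τ)) ^ k)
      (s * ((k : ℝ) * (1 + Real.exp (-τ)) ^ (k - 1) * (-Real.exp (-τ)))) τ :=
    (hc.pow k).const_mul s
  have hne : s * (1 + Real.exp (-τ)) ^ k ≠ 0 := by positivity
  have := hu.div hv hne
  refine this.congr_deriv ?_
  rw [zcG, zcG]
  have hadd : Real.exp (-(s+1) * τ) = Real.exp (-s * τ) * Real.exp (-τ) := by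
    rw [← Real.exp_add]; ring_nf
  rcases k with _ | k
  · simp; field_simp
  · have hk : (k + 1) - 1 = k := rfl
    rw [hk, hadd]
    have h2 : (1 + Real.exp (-τ)) ^ (k+1+1) = (1 + Real.exp (-τ))^(k+1) * (1 + Real.exp (-τ)) := by ring
    field_simp
    ring

lemma zc_rec (s : ℝ) (hs : 0 < s) (k : ℕ) :
    s * (∫ τ in Set.Ioi (0:ℝ), zcG s k τ)
      - k * ∫ τ in Set.Ioi (0:ℝ), zcG (s+1) (k+1) τ = 1 / 2 ^ k := by
  have hint1 := zc_int s hs k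
  have hint2 := zc_int (s+1) (by linarith) (k+1)
  have hintc : IntegrableOn (fun τ => (k / s) * zcG (s+1) (k+1) τ) (Set.Ioi 0) :=
    hint2.const_mul _
  have hder : ∫ τ in Set.Ioi (0:ℝ), (zcG s k τ - (k / s) * zcG (s+1) (k+1) τ)
      = 0 - (-Real.exp (-s * 0) / (s * (1 + Real.exp (-(0:ℝ))) ^ k)) := by
    apply integral_Ioi_of_hasDerivAt_of_tendsto'
      (fun τ _ => zc_hasDeriv s hs k τ) (hint1.sub hintc)
    apply squeeze_zero_norm (a := fun τ => Real.exp (-s * τ) / s)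
    · intro τ
      rw [Real.norm_eq_abs, abs_div, abs_neg, abs_of_nonneg (Real.exp_nonneg _),
        abs_of_nonneg (by positivity)]
      apply div_le_div_of_nonneg_left (Real.exp_nonneg _) hs
      nlinarith [pow_pos (by positivity : (0:ℝ) < 1 + Real.exp (-τ)) k,
        one_le_pow₀ (by nlinarith [Real.exp_pos (-τ)] : (1:ℝ) ≤ 1 + Real.exp (-τ)) (n := k)]
    · have h1 : Tendsto (fun τ : ℝ => -s * τ) atTop atBot := by
        apply Tendsto.const_mul_atTop_of_neg (by linarith : -s < 0) tendsto_id
      have := (Real.tendsto_exp_atBot.comp h1).div_const s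
      simpa using this
  rw [integral_sub hint1 hintc, integral_const_mul] at hder
  simp only [mul_zero, neg_zero, Real.exp_zero] at hder
  have h2 : ((1:ℝ) + 1) ^ k = 2 ^ k := by norm_num
  rw [h2] at hder
  have hsne : s ≠ 0 := ne_of_gt hs
  have h2k : (2:ℝ) ^ k ≠ 0 := by positivity
  field_simp at hder ⊢
  have h3 : (((s * ∫ τ in Set.Ioi (0:ℝ), zcG s k τ)
      - k * ∫ τ in Set.Ioi (0:ℝ), zcG (s+1) (k+1) τ) * 2 ^ k) * s = 1 * s := by
    linear_combination s * hder
  exact mul_right_cancel₀ hsne (by linear_combination h3)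

lemma zc_zero (s : ℝ) (hs : 0 < s) : ∫ τ in Set.Ioi (0:ℝ), zcG s 0 τ = 1 / s := by
  have h := zc_rec s hs 0
  simp only [Nat.cast_zero, zero_mul, sub_zero, pow_zero] at h
  field_simp at h ⊢
  linarith

lemma zc_split (s : ℝ) (hs : 0 < s) (k : ℕ) :
    ∫ τ in Set.Ioi (0:ℝ), zcG (s+1) (k+1) τ
      = (∫ τ in Set.Ioi (0:ℝ), zcG s k τ) - ∫ τ in Set.Ioi (0:ℝ), zcG s (k+1) τ := by
  rw [← integral_sub (zc_int s hs k) (zc_int s hs (k+1))]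
  apply setIntegral_congr_fun (measurableSet_Ioi)
  intro τ _
  simp only [zcG]
  have hE : (0:ℝ) < 1 + Real.exp (-τ) := by positivity
  have hadd : Real.exp (-(s+1) * τ) = Real.exp (-s * τ) * Real.exp (-τ) := by
    rw [← Real.exp_add]; ring_nf
  rw [hadd]
  have h2 : (1 + Real.exp (-τ)) ^ (k+1) = (1 + Real.exp (-τ))^k * (1 + Real.exp (-τ)) := by ring
  field_simp
  ring

lemma zc_beta (β : ℝ → ℝ)
    (hβ : ∀ x : ℝ, 0 < x →
      Tendsto (fun n : ℕ => ∑ j ∈ Finset.range n, (-1 : ℝ) ^ j / (x + (j : ℝ)))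
        atTop (nhds (β x)))
    (s : ℝ) (hs : 0 < s) : ∫ τ in Set.Ioi (0:ℝ), zcG s 1 τ = β s := by
  have key : ∀ n : ℕ, ∫ τ in Set.Ioi (0:ℝ), zcG s 1 τ
      = (∑ j ∈ Finset.range n, (-1 : ℝ) ^ j / (s + (j : ℝ)))
        + (-1 : ℝ) ^ n * ∫ τ in Set.Ioi (0:ℝ), zcG (s + n) 1 τ := by
    intro n
    induction n with
    | zero => simp
    | succ n ih =>
      have hsn : (0:ℝ) < s + n := by positivity
      have hstep := zc_split (s + n) hsn 0
      rw [zc_zero (s+n) hsn] at hstep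
      norm_num at hstep
      rw [Finset.sum_range_succ, ih]
      have harg : s + ((n:ℕ)+1 : ℕ) = s + (n:ℝ) + 1 := by push_cast; ring
      rw [harg, hstep]
      ring
  have hrem : Tendsto (fun n : ℕ => (-1 : ℝ) ^ n * ∫ τ in Set.Ioi (0:ℝ), zcG (s + n) 1 τ)
      atTop (nhds 0) := by
    apply squeeze_zero_norm (a := fun n : ℕ => 1 / (s + n))
    · intro n
      have hsn : (0:ℝ) < s + n := by positivity
      have h1 : (0:ℝ) ≤ ∫ τ in Set.Ioi (0:ℝ), zcG (s + n) 1 τ := by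
        apply setIntegral_nonneg measurableSet_Ioi
        intro τ _
        rw [zcG]
        positivity
      have h2 : ∫ τ in Set.Ioi (0:ℝ), zcG (s + n) 1 τ
          ≤ ∫ τ in Set.Ioi (0:ℝ), zcG (s + n) 0 τ := by
        apply setIntegral_mono_on (zc_int _ hsn 1) (zc_int _ hsn 0) measurableSet_Ioi
        intro τ _
        rw [zcG, zcG, pow_one, pow_zero]
        apply div_le_div_of_nonneg_left (Real.exp_nonneg _) (by norm_num)
        nlinarith [Real.exp_pos (-τ)]
      rw [zc_zero _ hsn] at h2
      rw [norm_mul, norm_pow, norm_neg, norm_one, one_pow, one_mul,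
        Real.norm_eq_abs, abs_of_nonneg h1]
      exact h2
    · have h1 : Tendsto (fun n : ℕ => s + (n:ℝ)) atTop atTop :=
        tendsto_atTop_add_const_left _ s tendsto_natCast_atTop_atTop
      simpa [one_div, Pi.inv_def] using h1.inv_tendsto_atTop
  have hlim : Tendsto (fun n : ℕ => ∑ j ∈ Finset.range n, (-1 : ℝ) ^ j / (s + (j : ℝ)))
      atTop (nhds (∫ τ in Set.Ioi (0:ℝ), zcG s 1 τ)) := by
    have : ∀ n : ℕ, ∑ j ∈ Finset.range n, (-1 : ℝ) ^ j / (s + (j : ℝ))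
        = (∫ τ in Set.Ioi (0:ℝ), zcG s 1 τ)
          - (-1 : ℝ) ^ n * ∫ τ in Set.Ioi (0:ℝ), zcG (s + n) 1 τ := by
      intro n; linarith [key n]
    simp only [this]
    simpa using (tendsto_const_nhds (x := ∫ τ in Set.Ioi (0:ℝ), zcG s 1 τ)).sub hrem
  exact tendsto_nhds_unique hlim (hβ s hs)

lemma zc_point (μ τ : ℝ) :
    Real.exp (-μ * τ) / (Real.cosh (τ / 2)) ^ 4 = 16 * zcG (μ + 2) 4 τ := by
  rw [zcG]
  have hcosh : Real.cosh (τ / 2) = Real.exp (τ / 2) * (1 + Real.exp (-τ)) / 2 := by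
    rw [Real.cosh_eq, mul_add, mul_one, ← Real.exp_add]
    rw [show τ / 2 + -τ = -(τ / 2) by ring]
  rw [hcosh]
  have hE : (0:ℝ) < 1 + Real.exp (-τ) := by positivity
  have he1 : Real.exp (τ/2) ^ 4 = Real.exp (2 * τ) := by
    rw [← Real.exp_nat_mul]; ring_nf
  have he2 : Real.exp (-(μ+2) * τ) * Real.exp (2 * τ) = Real.exp (-μ * τ) := by
    rw [← Real.exp_add]; ring_nf
  rw [div_pow, mul_pow, he1, ← he2]
  have h2 : Real.exp (2 * τ) ≠ 0 := Real.exp_ne_zero _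
  have h3 : (1 + Real.exp (-τ)) ^ 4 ≠ 0 := by positivity
  field_simp
  ring

/-- With `β(x) := Σ_{j=0}^∞ (−1)^j/(x + j)` for `x > 0` (the alternating
series converging in the sense of partial sums), for every `μ > 0` we have
`∫₀^∞ e^{−μτ} / cosh⁴(τ/2) dτ = (2/3) μ ( 1 + 2(μ² − 1)(β(μ+1) − β(μ)) )`. -/
theorem zaremba_cosh_integral (β : ℝ → ℝ)
    (hβ : ∀ x : ℝ, 0 < x →
      Tendsto (fun n : ℕ => ∑ j ∈ Finset.range n, (-1 : ℝ) ^ j / (x + (j : ℝ)))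
        atTop (nhds (β x)))
    (μ : ℝ) (hμ : 0 < μ) :
    IntegrableOn (fun τ : ℝ => Real.exp (-μ * τ) / (Real.cosh (τ / 2)) ^ 4) (Set.Ioi 0) ∧
    ∫ τ in Set.Ioi (0 : ℝ), Real.exp (-μ * τ) / (Real.cosh (τ / 2)) ^ 4
      = 2 / 3 * μ * (1 + 2 * (μ ^ 2 - 1) * (β (μ + 1) - β μ)) := by
  have hμ1 : (0:ℝ) < μ + 1 := by linarith
  have hμ2 : (0:ℝ) < μ + 2 := by linarith
  have hfun : (fun τ : ℝ => Real.exp (-μ * τ) / (Real.cosh (τ / 2)) ^ 4)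
      = fun τ => 16 * zcG (μ + 2) 4 τ := funext (zc_point μ)
  constructor
  · rw [hfun]
    exact (zc_int (μ+2) hμ2 4).const_mul 16
  · rw [hfun, MeasureTheory.integral_const_mul]
    have hb0 : ∫ τ in Set.Ioi (0:ℝ), zcG μ 1 τ = β μ := zc_beta β hβ μ hμ
    have hb1 : ∫ τ in Set.Ioi (0:ℝ), zcG (μ+1) 1 τ = β (μ+1) := zc_beta β hβ (μ+1) hμ1
    have e1 := zc_rec μ hμ 1
    have e2 := zc_split μ hμ 1
    have e3 := zc_rec μ hμ 2
    have e4 := zc_rec (μ+1) hμ1 3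
    have e0 := zc_split μ hμ 0
    have ez := zc_zero μ hμ
    rw [show (0:ℕ)+1 = 1 from rfl] at e0
    rw [show (1:ℕ)+1 = 2 from rfl] at e1 e2
    rw [show (2:ℕ)+1 = 3 from rfl] at e3
    rw [show (3:ℕ)+1 = 4 from rfl] at e4
    rw [show μ+1+1 = μ+2 by ring] at e4
    rw [ez, hb0, hb1] at e0
    rw [hb0] at e1 e2
    norm_num at e1 e3 e4
    -- e0 : β (μ+1) = 1/μ - β μ ; e1 : μ * β μ - G(μ+1,2) = 1/2 ; etc.
    set g2 := ∫ τ in Set.Ioi (0:ℝ), zcG μ 2 τ with hg2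
    set h2 := ∫ τ in Set.Ioi (0:ℝ), zcG (μ+1) 2 τ with hh2
    set g3 := ∫ τ in Set.Ioi (0:ℝ), zcG (μ+1) 3 τ with hg3
    set i4 := ∫ τ in Set.Ioi (0:ℝ), zcG (μ+2) 4 τ with hi4
    have hb1v : β (μ+1) = 1/μ - β μ := by linarith
    have hh2v : h2 = μ * β μ - 1/2 := by linarith
    have hg2v : g2 = β μ - h2 := by linarith
    have hg3v : g3 = (μ * g2 - 1/4) / 2 := by linarith
    have hi4v : i4 = ((μ+1) * g3 - 1/8) / 3 := by linarith
    rw [hi4v, hg3v, hg2v, hh2v, hb1v]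
    field_simp
    ring
end

section
/- Define β(x) := Σ_{j=0}^∞ (−1)^j/(x + j) for x > 0. Then the series Σ_{k=0}^∞ (−1)^k (k + 1/2) ( β(k + 3/2) − β(k + 1/2) ) converges and equals −π/8. -/
set_option maxHeartbeats 1000000

open Real Filter

/-- Bounds on the limit of an alternating series with nonnegative decreasing terms. -/
private lemma alt_bounds (a : ℕ → ℝ) (h0 : ∀ n, 0 ≤ a n) (hm : ∀ n, a (n + 1) ≤ a n)
    (L : ℝ)
    (hL : Tendsto (fun n : ℕ => ∑ j ∈ Finset.range n, (-1 : ℝ) ^ j * a j) atTop (nhds L)) :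
    0 ≤ L ∧ L ≤ a 0 := by
  set S : ℕ → ℝ := fun n => ∑ j ∈ Finset.range n, (-1 : ℝ) ^ j * a j with hSdef
  have hsucc : ∀ n, S (n + 1) = S n + (-1 : ℝ) ^ n * a n := fun n => Finset.sum_range_succ _ n
  have key : ∀ m : ℕ, 0 ≤ S (2 * m) ∧ S (2 * m + 1) ≤ a 0 := by
    intro m
    induction m with
    | zero =>
      constructor
      · simp [hSdef]
      · simp [hSdef, Finset.sum_range_one]
    | succ m ih =>
      have he : ((-1 : ℝ)) ^ (2 * m) = 1 := (even_two_mul m).neg_one_pow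
      have ho : ((-1 : ℝ)) ^ (2 * m + 1) = -1 := by rw [pow_succ, he]; ring
      have ho2 : ((-1 : ℝ)) ^ (2 * m + 2) = 1 := by rw [pow_succ, ho]; ring
      have e1 : S (2 * (m + 1)) = S (2 * m) + (a (2 * m) - a (2 * m + 1)) := by
        have h : 2 * (m + 1) = (2 * m + 1) + 1 := by ring
        rw [h, hsucc, hsucc, he, ho]; ring
      have e2 : S (2 * (m + 1) + 1) = S (2 * m + 1) + (a (2 * m + 2) - a (2 * m + 1)) := by
        have h : 2 * (m + 1) + 1 = (2 * m + 1) + 1 + 1 := by ring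
        rw [h, hsucc, hsucc, ho, ho2]; ring
      constructor
      · rw [e1]; have := hm (2 * m); linarith [ih.1]
      · rw [e2]; have := hm (2 * m + 1); linarith [ih.2]
  have h2m : Tendsto (fun m : ℕ => 2 * m) atTop atTop :=
    tendsto_atTop_atTop_of_monotone (fun a b h => by omega) (fun b => ⟨b, by omega⟩)
  have h2m1 : Tendsto (fun m : ℕ => 2 * m + 1) atTop atTop :=
    tendsto_atTop_atTop_of_monotone (fun a b h => by omega) (fun b => ⟨b, by omega⟩)
  constructor
  · exact ge_of_tendsto' (hL.comp h2m) fun m => (key m).1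
  · exact le_of_tendsto' (hL.comp h2m1) fun m => (key m).2

/-- With `β(x) := Σ_{j=0}^∞ (−1)^j/(x + j)` for `x > 0` (the alternating
series converging in the sense of partial sums), the series
`Σ_{k=0}^∞ (−1)^k (k + 1/2)(β(k + 3/2) − β(k + 1/2))` converges and equals `−π/8`. -/
theorem zaremba_beta_weighted_series (β : ℝ → ℝ)
    (hβ : ∀ x : ℝ, 0 < x →
      Tendsto (fun n : ℕ => ∑ j ∈ Finset.range n, (-1 : ℝ) ^ j / (x + (j : ℝ)))
        atTop (nhds (β x))) :
    Tendsto
      (fun n : ℕ =>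
        ∑ k ∈ Finset.range n,
          (-1 : ℝ) ^ k * ((k : ℝ) + 1 / 2) * (β ((k : ℝ) + 3 / 2) - β ((k : ℝ) + 1 / 2)))
      atTop (nhds (-π / 8)) := by
  -- Step A: the recurrence β(x) + β(x+1) = 1/x
  have hrec : ∀ x : ℝ, 0 < x → β x + β (x + 1) = 1 / x := by
    intro x hx
    have hident : ∀ n : ℕ,
        (∑ j ∈ Finset.range n, (-1 : ℝ) ^ j / (x + (j : ℝ))) +
          (∑ j ∈ Finset.range n, (-1 : ℝ) ^ j / (x + 1 + (j : ℝ))) =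
          1 / x - (-1 : ℝ) ^ n / (x + (n : ℝ)) := by
      intro n
      induction n with
      | zero => simp
      | succ n ih =>
        rw [Finset.sum_range_succ, Finset.sum_range_succ]
        push_cast
        have hne1 : x + (n : ℝ) ≠ 0 := by positivity
        have hne2 : x + 1 + (n : ℝ) ≠ 0 := by positivity
        rw [show (∑ j ∈ Finset.range n, (-1 : ℝ) ^ j / (x + (j : ℝ))) +
            (-1 : ℝ) ^ n / (x + (n : ℝ)) +
            ((∑ j ∈ Finset.range n, (-1 : ℝ) ^ j / (x + 1 + (j : ℝ))) +
              (-1 : ℝ) ^ n / (x + 1 + (n : ℝ))) =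
            ((∑ j ∈ Finset.range n, (-1 : ℝ) ^ j / (x + (j : ℝ))) +
            (∑ j ∈ Finset.range n, (-1 : ℝ) ^ j / (x + 1 + (j : ℝ)))) +
            ((-1 : ℝ) ^ n / (x + (n : ℝ)) + (-1 : ℝ) ^ n / (x + 1 + (n : ℝ))) by ring, ih]
        field_simp
        ring
    have htail : Tendsto (fun n : ℕ => (-1 : ℝ) ^ n / (x + (n : ℝ))) atTop (nhds 0) := by
      have hg : Tendsto (fun n : ℕ => 1 / (x + (n : ℝ))) atTop (nhds 0) := by
        simp only [one_div]
        exact Tendsto.inv_tendsto_atTop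
          (tendsto_atTop_add_const_left atTop x tendsto_natCast_atTop_atTop)
      refine squeeze_zero_norm (fun n => ?_) hg
      have hpos : (0 : ℝ) < x + n := by positivity
      rw [norm_div, norm_pow, norm_neg, norm_one, one_pow, Real.norm_eq_abs, abs_of_pos hpos]
    have h1 : Tendsto (fun n : ℕ => 1 / x - (-1 : ℝ) ^ n / (x + (n : ℝ))) atTop
        (nhds (β x + β (x + 1))) := by
      have := (hβ x hx).add (hβ (x + 1) (by linarith))
      simpa only [hident] using this
    have h2 : Tendsto (fun n : ℕ => 1 / x - (-1 : ℝ) ^ n / (x + (n : ℝ))) atTop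
        (nhds (1 / x)) := by
      simpa using tendsto_const_nhds.sub htail
    exact tendsto_nhds_unique h1 h2
  -- Step B: bounds on the second difference b2(x) = β(x) - 2β(x+1) + β(x+2)
  have hb2 : ∀ x : ℝ, 0 < x → 0 ≤ β x - 2 * β (x + 1) + β (x + 2) ∧
      β x - 2 * β (x + 1) + β (x + 2) ≤ 2 / (x * (x + 1) * (x + 2)) := by
    intro x hx
    have ha := hβ x hx
    have hb := hβ (x + 1) (by linarith)
    have hc := hβ (x + 2) (by linarith)
    have hlim : Tendsto (fun n : ℕ => ∑ j ∈ Finset.range n,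
        (-1 : ℝ) ^ j * (2 / ((x + j) * (x + j + 1) * (x + j + 2)))) atTop
        (nhds (β x - 2 * β (x + 1) + β (x + 2))) := by
      have h := (ha.sub (hb.const_mul 2)).add hc
      refine h.congr fun n => ?_
      rw [Finset.mul_sum, ← Finset.sum_sub_distrib, ← Finset.sum_add_distrib]
      refine Finset.sum_congr rfl fun j _ => ?_
      have h1 : x + (j : ℝ) ≠ 0 := by positivity
      have h2 : x + 1 + (j : ℝ) ≠ 0 := by positivity
      have h3 : x + 2 + (j : ℝ) ≠ 0 := by positivity
      have h2' : x + (j : ℝ) + 1 ≠ 0 := by rw [show x + (j:ℝ) + 1 = x + 1 + j by ring]; exact h2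
      have h3' : x + (j : ℝ) + 2 ≠ 0 := by rw [show x + (j:ℝ) + 2 = x + 2 + j by ring]; exact h3
      field_simp
      ring
    have hbnd := alt_bounds (fun j => 2 / ((x + j) * (x + j + 1) * (x + j + 2)))
      (fun j => by positivity)
      (fun j => by
        have h1 : (0:ℝ) < x + j := by positivity
        push_cast
        gcongr <;> linarith)
      _ hlim
    constructor
    · exact hbnd.1
    · have := hbnd.2
      simpa using this
  -- β(x) in terms of b2(x)
  have hform : ∀ x : ℝ, 0 < x →
      β x = (2 * x + 3) / (4 * x * (x + 1)) + (β x - 2 * β (x + 1) + β (x + 2)) / 4 := by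
    intro x hx
    have h1 := hrec x hx
    have h2 := hrec (x + 1) (by linarith)
    have hx0 : x ≠ 0 := ne_of_gt hx
    have hx1 : x + 1 ≠ 0 := by positivity
    have e1 : β (x + 1) = 1 / x - β x := by linarith
    have e2 : β (x + 2) = 1 / (x + 1) - β (x + 1) := by
      have : x + 1 + 1 = x + 2 := by ring
      rw [← this]; linarith
    rw [e2, e1]
    field_simp
    ring
  -- Closed form for the partial sums
  have hclosed : ∀ n : ℕ,
      (∑ k ∈ Finset.range n,
        (-1 : ℝ) ^ k * ((k : ℝ) + 1 / 2) * (β ((k : ℝ) + 3 / 2) - β ((k : ℝ) + 1 / 2))) =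
      (-1 : ℝ) ^ (n + 1) * ((n : ℝ) ^ 2 * β ((n : ℝ) + 1 / 2) - (n : ℝ) / 2) -
        (∑ i ∈ Finset.range n, (-1 : ℝ) ^ i / ((i : ℝ) + 1 / 2)) / 4 := by
    intro n
    induction n with
    | zero => simp
    | succ n ih =>
      have hx : (0 : ℝ) < (n : ℝ) + 1 / 2 := by positivity
      have hr := hrec ((n : ℝ) + 1 / 2) hx
      have e : β ((n : ℝ) + 3 / 2) = 1 / ((n : ℝ) + 1 / 2) - β ((n : ℝ) + 1 / 2) := by
        rw [show (n : ℝ) + 3 / 2 = (n : ℝ) + 1 / 2 + 1 by ring]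
        linarith
      rw [Finset.sum_range_succ, Finset.sum_range_succ, ih]
      push_cast
      rw [show (n : ℝ) + 1 + 1 / 2 = (n : ℝ) + 3 / 2 by ring, e]
      have hne : (n : ℝ) + 1 / 2 ≠ 0 := ne_of_gt hx
      field_simp
      ring
  -- Limit of the Leibniz-type sum
  have hs : Tendsto (fun n : ℕ => ∑ i ∈ Finset.range n, (-1 : ℝ) ^ i / ((i : ℝ) + 1 / 2))
      atTop (nhds (π / 2)) := by
    have h := Real.tendsto_sum_pi_div_four.const_mul (2 : ℝ)
    have h2 : (2 : ℝ) * (π / 4) = π / 2 := by ring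
    rw [h2] at h
    refine h.congr fun n => ?_
    rw [Finset.mul_sum]
    refine Finset.sum_congr rfl fun i _ => ?_
    have h1 : (2 : ℝ) * i + 1 ≠ 0 := by positivity
    have h2 : (i : ℝ) + 1 / 2 ≠ 0 := by positivity
    field_simp
  -- The oscillating part tends to 0
  have hD : Tendsto (fun n : ℕ =>
      (-1 : ℝ) ^ (n + 1) * ((n : ℝ) ^ 2 * β ((n : ℝ) + 1 / 2) - (n : ℝ) / 2)) atTop
      (nhds 0) := by
    refine squeeze_zero_norm' ?_ (tendsto_const_div_atTop_nhds_zero_nat 2)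
    filter_upwards [eventually_ge_atTop 1] with n hn
    have hn1 : (1 : ℝ) ≤ (n : ℝ) := by exact_mod_cast hn
    have hnpos : (0 : ℝ) < n := by linarith
    set x : ℝ := (n : ℝ) + 1 / 2 with hxdef
    have hx : (0 : ℝ) < x := by positivity
    obtain ⟨hb0, hb1⟩ := hb2 x hx
    set b : ℝ := β x - 2 * β (x + 1) + β (x + 2) with hbdef
    have hbeta : β x = (2 * x + 3) / (4 * x * (x + 1)) + b / 4 := hform x hx
    have hkey : (n : ℝ) ^ 2 * β x - (n : ℝ) / 2 =
        -(3 * n / (8 * x * (x + 1))) + (n : ℝ) ^ 2 * b / 4 := by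
      rw [hbeta, hxdef]
      have h1 : (n : ℝ) + 1 / 2 ≠ 0 := by positivity
      have h2 : (n : ℝ) + 1 / 2 + 1 ≠ 0 := by positivity
      field_simp
      ring
    have hA : 3 * (n : ℝ) / (8 * x * (x + 1)) ≤ 1 / (n : ℝ) := by
      rw [div_le_div_iff₀ (by positivity) hnpos, hxdef]
      nlinarith
    have hA0 : (0 : ℝ) ≤ 3 * (n : ℝ) / (8 * x * (x + 1)) := by positivity
    have hB : (n : ℝ) ^ 2 * b / 4 ≤ 1 / (n : ℝ) := by
      have hb1' : (n : ℝ) ^ 2 * b / 4 ≤ (n : ℝ) ^ 2 * (2 / (x * (x + 1) * (x + 2))) / 4 := by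
        gcongr
      refine le_trans hb1' ?_
      have hrw : (n : ℝ) ^ 2 * (2 / (x * (x + 1) * (x + 2))) / 4 =
          (n : ℝ) ^ 2 / (2 * (x * (x + 1) * (x + 2))) := by
        field_simp
        ring
      rw [hrw, div_le_div_iff₀ (by positivity) hnpos, hxdef]
      have hD0 : (0 : ℝ) ≤ ((n : ℝ) + 1 / 2) * ((n : ℝ) + 1 / 2 + 1) * ((n : ℝ) + 1 / 2 + 2) := by
        positivity
      have hcube : (n : ℝ) ^ 2 * (n : ℝ) ≤
          ((n : ℝ) + 1 / 2) * ((n : ℝ) + 1 / 2 + 1) * ((n : ℝ) + 1 / 2 + 2) := by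
        calc (n : ℝ) ^ 2 * (n : ℝ) = (n : ℝ) * (n : ℝ) * (n : ℝ) := by ring
          _ ≤ ((n : ℝ) + 1 / 2) * ((n : ℝ) + 1 / 2 + 1) * ((n : ℝ) + 1 / 2 + 2) := by
              gcongr <;> linarith
      linarith
    have hB0 : (0 : ℝ) ≤ (n : ℝ) ^ 2 * b / 4 := by positivity
    have habs : |(n : ℝ) ^ 2 * β x - (n : ℝ) / 2| ≤ 2 / (n : ℝ) := by
      rw [hkey, abs_le]
      have h2n : (2 : ℝ) / (n : ℝ) = 2 * (1 / (n : ℝ)) := by ring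
      have h1n : (0 : ℝ) ≤ 1 / (n : ℝ) := by positivity
      constructor <;> linarith
    calc ‖(-1 : ℝ) ^ (n + 1) * ((n : ℝ) ^ 2 * β ((n : ℝ) + 1 / 2) - (n : ℝ) / 2)‖
        = |(n : ℝ) ^ 2 * β x - (n : ℝ) / 2| := by
          rw [norm_mul, norm_pow, norm_neg, norm_one, one_pow, one_mul, Real.norm_eq_abs]
      _ ≤ 2 / (n : ℝ) := habs
  -- Conclusion
  have hfinal := hD.sub (hs.div_const 4)
  rw [show (0 : ℝ) - (π / 2) / 4 = -π / 8 by ring] at hfinal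
  refine hfinal.congr fun n => ?_
  exact (hclosed n).symm
end

section
/- Define β(x) := Σ_{j=0}^∞ (−1)^j/(x + j) for x > 0. Then the series Σ_{k=0}^∞ [ 1/((k − 1/2)(k + 3/2)) + 2( β(k + 3/2) − β(k + 1/2) ) ] converges and equals −π. -/
open Real Filter

private lemma zc6_partial_bounds (x : ℝ) (hx : 0 < x) (m : ℕ) :
    0 ≤ ∑ j ∈ Finset.range (2 * m), (-1 : ℝ) ^ j / (x + (j : ℝ)) ∧
    (∑ j ∈ Finset.range (2 * m), (-1 : ℝ) ^ j / (x + (j : ℝ))) + 1 / (x + 2 * m) ≤ 1 / x := by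
  induction m with
  | zero => simp
  | succ m ih =>
    obtain ⟨h1, h2⟩ := ih
    have e : 2 * (m + 1) = (2 * m) + 1 + 1 := by ring
    rw [e, Finset.sum_range_succ, Finset.sum_range_succ]
    have hp1 : (0 : ℝ) < x + 2 * m := by positivity
    have hp2 : (0 : ℝ) < x + (2 * m + 1) := by positivity
    have hp3 : (0 : ℝ) < x + (2 * m + 2) := by positivity
    have hs1 : ((-1 : ℝ)) ^ (2 * m) = 1 := by
      rw [pow_mul]; norm_num
    have hs2 : ((-1 : ℝ)) ^ (2 * m + 1) = -1 := by
      rw [pow_succ, hs1]; norm_num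
    have hc1 : ((2 * m : ℕ) : ℝ) = 2 * m := by push_cast; ring
    have hc2 : ((2 * m + 1 : ℕ) : ℝ) = 2 * m + 1 := by push_cast; ring
    rw [hs1, hs2, hc1, hc2]
    have hneg : (-1 : ℝ) / (x + (2 * (m : ℝ) + 1)) = -(1 / (x + (2 * (m : ℝ) + 1))) := by ring
    rw [hneg]
    have hi1 : 1 / (x + (2 * (m : ℝ) + 1)) ≤ 1 / (x + 2 * m) := by
      apply one_div_le_one_div_of_le hp1; linarith
    have hi2 : 1 / (x + (2 * (m : ℝ) + 2)) ≤ 1 / (x + (2 * (m : ℝ) + 1)) := by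
      apply one_div_le_one_div_of_le hp2; linarith
    constructor
    · linarith
    · have hcast : x + 2 * (((m : ℕ) : ℝ) + 1) = x + (2 * (m : ℝ) + 2) := by ring
      push_cast
      rw [hcast]
      linarith

private lemma zc6_beta_bounds (β : ℝ → ℝ)
    (hβ : ∀ x : ℝ, 0 < x →
      Tendsto (fun n : ℕ => ∑ j ∈ Finset.range n, (-1 : ℝ) ^ j / (x + (j : ℝ)))
        atTop (nhds (β x))) (x : ℝ) (hx : 0 < x) : 0 ≤ β x ∧ β x ≤ 1 / x := by
  have hmono : Tendsto (fun m : ℕ => 2 * m) atTop atTop :=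
    tendsto_atTop_mono (fun m => by simp only [id_eq]; omega) tendsto_id
  have h2 : Tendsto (fun m : ℕ => ∑ j ∈ Finset.range (2 * m), (-1 : ℝ) ^ j / (x + (j : ℝ)))
      atTop (nhds (β x)) := (hβ x hx).comp hmono
  constructor
  · exact ge_of_tendsto' h2 (fun m => (zc6_partial_bounds x hx m).1)
  · refine le_of_tendsto' h2 (fun m => ?_)
    have := (zc6_partial_bounds x hx m).2
    have hp : (0 : ℝ) < 1 / (x + 2 * m) := by positivity
    linarith

private lemma zc6_beta_half (β : ℝ → ℝ)
    (hβ : ∀ x : ℝ, 0 < x →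
      Tendsto (fun n : ℕ => ∑ j ∈ Finset.range n, (-1 : ℝ) ^ j / (x + (j : ℝ)))
        atTop (nhds (β x))) : β (1 / 2) = π / 2 := by
  have h1 := hβ (1 / 2) (by norm_num)
  have h2 : Tendsto (fun n : ℕ => ∑ j ∈ Finset.range n, (-1 : ℝ) ^ j / ((1:ℝ)/2 + (j : ℝ)))
      atTop (nhds (π / 2)) := by
    have h3 := Real.tendsto_sum_pi_div_four.const_mul (2 : ℝ)
    have heq : (fun n : ℕ => 2 * ∑ i ∈ Finset.range n, (-1 : ℝ) ^ i / (2 * i + 1))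
        = fun n : ℕ => ∑ j ∈ Finset.range n, (-1 : ℝ) ^ j / ((1:ℝ)/2 + (j : ℝ)) := by
      funext n
      rw [Finset.mul_sum]
      apply Finset.sum_congr rfl
      intro j _
      have hj : ((2 : ℝ) * j + 1) ≠ 0 := by positivity
      have hj2 : ((1:ℝ)/2 + (j : ℝ)) ≠ 0 := by positivity
      field_simp
      ring
    rw [heq] at h3
    convert h3 using 2
    ring
  exact tendsto_nhds_unique h1 h2

private lemma zc6_key (β : ℝ → ℝ) (n : ℕ) :
    ∑ k ∈ Finset.range n,
      (1 / (((k : ℝ) - 1 / 2) * ((k : ℝ) + 3 / 2)) +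
        2 * (β ((k : ℝ) + 3 / 2) - β ((k : ℝ) + 1 / 2)))
    = 2 * β ((n : ℝ) + 1 / 2) - 2 * β (1 / 2)
      - 1 / (2 * ((n : ℝ) - 1 / 2)) - 1 / (2 * ((n : ℝ) + 1 / 2)) := by
  induction n with
  | zero => norm_num
  | succ n ih =>
    rw [Finset.sum_range_succ, ih]
    have hne1 : ((n : ℝ) - 1 / 2) ≠ 0 := by
      rcases Nat.eq_zero_or_pos n with h | h
      · subst h; norm_num
      · have : (1 : ℝ) ≤ n := by exact_mod_cast h
        intro hc; linarith
    have hne2 : ((n : ℝ) + 1 / 2) ≠ 0 := by positivity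
    have hne3 : ((n : ℝ) + 3 / 2) ≠ 0 := by positivity
    have e1 : ((n + 1 : ℕ) : ℝ) + 1 / 2 = (n : ℝ) + 3 / 2 := by push_cast; ring
    have e2 : ((n + 1 : ℕ) : ℝ) - 1 / 2 = (n : ℝ) + 1 / 2 := by push_cast; ring
    rw [e1, e2]
    have pf : 1 / (((n : ℝ) - 1 / 2) * ((n : ℝ) + 3 / 2))
        = 1 / (2 * ((n : ℝ) - 1 / 2)) - 1 / (2 * ((n : ℝ) + 3 / 2)) := by
      rw [div_sub_div _ _ (mul_ne_zero two_ne_zero hne1) (mul_ne_zero two_ne_zero hne3),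
        div_eq_div_iff (mul_ne_zero hne1 hne3)
          (mul_ne_zero (mul_ne_zero two_ne_zero hne1) (mul_ne_zero two_ne_zero hne3))]
      ring
    rw [pf]
    ring

private lemma zc6_inv_lim (c : ℝ) :
    Tendsto (fun n : ℕ => 1 / (2 * ((n : ℝ) + c))) atTop (nhds 0) := by
  have h : Tendsto (fun n : ℕ => 2 * ((n : ℝ) + c)) atTop atTop := by
    apply Tendsto.const_mul_atTop two_pos
    exact tendsto_atTop_add_const_right atTop c tendsto_natCast_atTop_atTop
  have h2 := tendsto_inv_atTop_zero.comp h
  simpa [Function.comp_def, one_div] using h2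

/-- With `β(x) := Σ_{j=0}^∞ (−1)^j/(x + j)` for `x > 0` (the alternating
series converging in the sense of partial sums), the series
`Σ_{k=0}^∞ [ 1/((k − 1/2)(k + 3/2)) + 2(β(k + 3/2) − β(k + 1/2)) ]` converges and
equals `−π`. -/
theorem zaremba_c6_series (β : ℝ → ℝ)
    (hβ : ∀ x : ℝ, 0 < x →
      Tendsto (fun n : ℕ => ∑ j ∈ Finset.range n, (-1 : ℝ) ^ j / (x + (j : ℝ)))
        atTop (nhds (β x))) :
    Tendsto
      (fun n : ℕ =>
        ∑ k ∈ Finset.range n,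
          (1 / (((k : ℝ) - 1 / 2) * ((k : ℝ) + 3 / 2)) +
            2 * (β ((k : ℝ) + 3 / 2) - β ((k : ℝ) + 1 / 2))))
      atTop (nhds (-π)) := by
  have hhalf := zc6_beta_half β hβ
  have hb : Tendsto (fun n : ℕ => 2 * β ((n : ℝ) + 1 / 2)) atTop (nhds 0) := by
    have hlo : ∀ n : ℕ, 0 ≤ 2 * β ((n : ℝ) + 1 / 2) := fun n => by
      have := (zc6_beta_bounds β hβ ((n : ℝ) + 1 / 2) (by positivity)).1
      linarith
    have hhi : ∀ n : ℕ, 2 * β ((n : ℝ) + 1 / 2) ≤ 4 * (1 / (2 * ((n : ℝ) + 1 / 2))) := fun n => by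
      have hub := (zc6_beta_bounds β hβ ((n : ℝ) + 1 / 2) (by positivity)).2
      have hpos : (0 : ℝ) < (n : ℝ) + 1 / 2 := by positivity
      have : 4 * (1 / (2 * ((n : ℝ) + 1 / 2))) = 2 * (1 / ((n : ℝ) + 1 / 2)) := by
        rw [one_div, one_div, mul_inv]
        ring
      rw [this]
      linarith
    have hub : Tendsto (fun n : ℕ => 4 * (1 / (2 * ((n : ℝ) + 1 / 2)))) atTop (nhds 0) := by
      have h4 := (zc6_inv_lim (1 / 2)).const_mul (4 : ℝ)
      simpa using h4
    exact squeeze_zero hlo hhi hub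
  have h1' : Tendsto (fun n : ℕ => 1 / (2 * ((n : ℝ) - 1 / 2))) atTop (nhds 0) := by
    have h1 := zc6_inv_lim (-(1 / 2))
    simpa [sub_eq_add_neg] using h1
  have h2 := zc6_inv_lim (1 / 2)
  have hfin := ((hb.sub (tendsto_const_nhds (x := 2 * β (1 / 2)))).sub h1').sub h2
  rw [show (0 : ℝ) - 2 * β (1 / 2) - 0 - 0 = -π by rw [hhalf]; ring] at hfin
  have heq : (fun n : ℕ =>
      ∑ k ∈ Finset.range n,
        (1 / (((k : ℝ) - 1 / 2) * ((k : ℝ) + 3 / 2)) +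
          2 * (β ((k : ℝ) + 3 / 2) - β ((k : ℝ) + 1 / 2))))
      = fun n : ℕ => 2 * β ((n : ℝ) + 1 / 2) - 2 * β (1 / 2)
        - 1 / (2 * ((n : ℝ) - 1 / 2)) - 1 / (2 * ((n : ℝ) + 1 / 2)) := by
    funext n; exact zc6_key β n
  rw [heq]
  exact hfin
end

section
/- Define β(x) := Σ_{j=0}^∞ (−1)^j/(x + j) for x > 0. Then the series Σ_{k=0}^∞ (−1)^k [ 1/(k − 1/2) + 1/(k + 3/2) + 4(k + 1/2)( β(k + 3/2) − β(k + 1/2) ) ] converges and equals −3π/2. -/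
open Real Filter

open Finset

-- alternating sum bound
lemma alt_bound (M : ℕ) (f : ℕ → ℝ) (hmono : ∀ i, f (i+1) ≤ f i) (hpos : ∀ i, 0 ≤ f i) :
    0 ≤ ∑ m ∈ range M, (-1:ℝ)^m * f m ∧ ∑ m ∈ range M, (-1:ℝ)^m * f m ≤ f 0 := by
  induction M generalizing f with
  | zero => simpa using hpos 0
  | succ M ih =>
    obtain ⟨h1, h2⟩ := ih (fun i => f (i+1)) (fun i => hmono _) (fun i => hpos _)
    rw [Finset.sum_range_succ']
    simp only [pow_succ, pow_zero, one_mul]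
    have e : ∑ i ∈ range M, (-1:ℝ)^i * -1 * f (i+1)
        = -∑ i ∈ range M, (-1:ℝ)^i * f (i+1) := by
      rw [← Finset.sum_neg_distrib]; apply Finset.sum_congr rfl; intros; ring
    rw [e]
    constructor
    · have := hmono 0; linarith
    · linarith

section
variable (β : ℝ → ℝ)
  (hβ : ∀ x : ℝ, 0 < x →
      Tendsto (fun n : ℕ => ∑ j ∈ Finset.range n, (-1 : ℝ) ^ j / (x + (j : ℝ)))
        atTop (nhds (β x)))

include hβ

lemma beta_mem (x : ℝ) (hx : 0 < x) : 0 ≤ β x ∧ β x ≤ 1/x := by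
  have hb : ∀ n : ℕ, 0 ≤ ∑ j ∈ range n, (-1:ℝ)^j / (x + j) ∧
      ∑ j ∈ range n, (-1:ℝ)^j / (x + j) ≤ 1/x := by
    intro n
    have := alt_bound n (fun j => 1/(x + j))
      (fun i => by
        apply one_div_le_one_div_of_le (by positivity)
        push_cast; linarith)
      (fun i => by positivity)
    simpa [mul_one_div, div_eq_mul_inv] using this
  constructor
  · exact ge_of_tendsto (hβ x hx) (Eventually.of_forall fun n => (hb n).1)
  · exact le_of_tendsto (hβ x hx) (Eventually.of_forall fun n => (hb n).2)

lemma beta_rec (x : ℝ) (hx : 0 < x) : β (x + 1) = 1/x - β x := by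
  have h1 := hβ x hx
  have h2 := hβ (x+1) (by linarith)
  have key : ∀ n : ℕ, ∑ j ∈ range (n+1), (-1:ℝ)^j / (x + j)
      = 1/x - ∑ j ∈ range n, (-1:ℝ)^j / ((x+1) + j) := by
    intro n
    rw [Finset.sum_range_succ']
    push_cast
    have : ∀ j ∈ range n, (-1:ℝ)^(j+1) / (x + (j+1)) = -((-1:ℝ)^j / ((x+1) + j)) := by
      intro j _; rw [pow_succ]; ring_nf
    rw [Finset.sum_congr rfl this, Finset.sum_neg_distrib]
    simp; ring
  have h1' : Tendsto (fun n : ℕ => ∑ j ∈ range (n+1), (-1:ℝ)^j / (x + j)) atTop (nhds (β x)) :=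
    h1.comp (tendsto_add_atTop_nat 1)
  have h2' : Tendsto (fun n : ℕ => 1/x - ∑ j ∈ range n, (-1:ℝ)^j / ((x+1) + j)) atTop
      (nhds (1/x - β (x+1))) := tendsto_const_nhds.sub h2
  have := tendsto_nhds_unique (h1'.congr (fun n => key n)) h2'
  linarith


lemma D_rec (x : ℝ) (hx : 1 ≤ x) :
    β x - 1/(2*x-1) = -(1/(x*(4*x^2-1))) - (β (x+1) - 1/(2*(x+1)-1)) := by
  have h := beta_rec β hβ x (by linarith)
  have h1 : x ≠ 0 := by linarith
  have h2 : 2*x-1 ≠ 0 := by nlinarith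
  have h3 : 2*x+1 ≠ 0 := by nlinarith
  have h4 : 4*x^2-1 = (2*x-1)*(2*x+1) := by ring
  have e : 1/x - 1/(2*x-1) - 1/(2*x+1) = -(1/(x*((2*x-1)*(2*x+1)))) := by
    rw [div_sub_div _ _ h1 h2, div_sub_div _ _ (mul_ne_zero h1 h2) h3, neg_div', div_eq_div_iff (mul_ne_zero (mul_ne_zero h1 h2) h3) (mul_ne_zero h1 (mul_ne_zero h2 h3))]
    ring
  rw [h, show 2*(x+1)-1 = 2*x+1 by ring, h4]
  linarith [e]

lemma D_iter (x : ℝ) (hx : 1 ≤ x) (M : ℕ) :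
    β x - 1/(2*x-1) = -(∑ m ∈ range M, (-1:ℝ)^m * (1/((x+m)*(4*(x+m)^2-1))))
      + (-1:ℝ)^M * (β (x+M) - 1/(2*(x+M)-1)) := by
  induction M with
  | zero => simp
  | succ M ih =>
    rw [ih, Finset.sum_range_succ]
    have hxM : (1:ℝ) ≤ x + M := by
      have : (0:ℝ) ≤ M := Nat.cast_nonneg M
      linarith
    have := D_rec β hβ (x + M) hxM
    have hc : x + (M+1 : ℕ) = (x + M) + 1 := by push_cast; ring
    rw [hc, this]
    rw [pow_succ]
    ring

lemma D_abs (x : ℝ) (hx : 1 ≤ x) :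
    |β x - 1/(2*x-1)| ≤ 1/(x*(4*x^2-1)) := by
  have hDy : ∀ y : ℝ, 1 ≤ y → |β y - 1/(2*y-1)| ≤ 2/y := by
    intro y hy
    obtain ⟨hb0, hb1⟩ := beta_mem β hβ y (by linarith)
    have h1 : 0 < 2*y-1 := by linarith
    have h2 : 1/(2*y-1) ≤ 1/y := by
      apply one_div_le_one_div_of_le (by linarith); linarith
    have h3 : 0 < 1/(2*y-1) := by positivity
    have h5 : 0 < 1/y := by positivity
    have h6 : 2/y = 2*(1/y) := by ring
    rw [abs_le]
    constructor
    · linarith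
    · linarith
  have key : ∀ M : ℕ, |β x - 1/(2*x-1)| ≤ 1/(x*(4*x^2-1)) + 2/(x+M) := by
    intro M
    rw [D_iter β hβ x hx M]
    have hsum := alt_bound M (fun m => 1/((x+m)*(4*(x+m)^2-1)))
      (fun i => by
        have h1 : (1:ℝ) ≤ x + i := by have : (0:ℝ) ≤ i := Nat.cast_nonneg i; linarith
        apply one_div_le_one_div_of_le
        · nlinarith
        · push_cast; nlinarith)
      (fun i => by
        have h1 : (1:ℝ) ≤ x + i := by have : (0:ℝ) ≤ i := Nat.cast_nonneg i; linarith
        have h2 : 0 < (x+i)*(4*(x+i)^2-1) := by nlinarith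
        positivity)
    have hxM : (1:ℝ) ≤ x + M := by have : (0:ℝ) ≤ M := Nat.cast_nonneg M; linarith
    have hD := hDy (x + M) hxM
    calc |(-(∑ m ∈ range M, (-1:ℝ)^m * (1/((x+m)*(4*(x+m)^2-1))))
        + (-1:ℝ)^M * (β (x+M) - 1/(2*(x+M)-1)))|
        ≤ |∑ m ∈ range M, (-1:ℝ)^m * (1/((x+m)*(4*(x+m)^2-1)))|
          + |(-1:ℝ)^M * (β (x+M) - 1/(2*(x+M)-1))| := by
          calc |(-(∑ m ∈ range M, (-1:ℝ)^m * (1/((x+m)*(4*(x+m)^2-1))))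
              + (-1:ℝ)^M * (β (x+M) - 1/(2*(x+M)-1)))|
              ≤ |(-(∑ m ∈ range M, (-1:ℝ)^m * (1/((x+m)*(4*(x+m)^2-1)))))|
                + |(-1:ℝ)^M * (β (x+M) - 1/(2*(x+M)-1))| := abs_add_le _ _
            _ = _ := by rw [abs_neg]
      _ ≤ 1/(x*(4*x^2-1)) + 2/(x+M) := by
          apply add_le_add
          · rw [abs_of_nonneg hsum.1]
            simpa using hsum.2
          · rw [abs_mul, abs_pow, abs_neg, abs_one, one_pow, one_mul]
            exact hD
  have hlim : Tendsto (fun M : ℕ => 1/(x*(4*x^2-1)) + 2/(x+M)) atTop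
      (nhds (1/(x*(4*x^2-1)) + 0)) := by
    apply tendsto_const_nhds.add
    apply Tendsto.div_atTop tendsto_const_nhds
    exact tendsto_atTop_add_const_left _ x tendsto_natCast_atTop_atTop
  rw [add_zero] at hlim
  exact ge_of_tendsto hlim (Eventually.of_forall key)


theorem zaremba_c5_series' :
    Tendsto
      (fun n : ℕ =>
        ∑ k ∈ Finset.range n,
          (-1 : ℝ) ^ k *
            (1 / ((k : ℝ) - 1 / 2) + 1 / ((k : ℝ) + 3 / 2) +
              4 * ((k : ℝ) + 1 / 2) * (β ((k : ℝ) + 3 / 2) - β ((k : ℝ) + 1 / 2))))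
      atTop (nhds (-(3 * π) / 2)) := by
  -- notation
  set A : ℕ → ℝ := fun n => ∑ k ∈ range n, (-1:ℝ)^k / ((k:ℝ) - 1/2) with hA_def
  set B : ℕ → ℝ := fun n => ∑ k ∈ range n, (-1:ℝ)^k / ((k:ℝ) + 3/2) with hB_def
  set P : ℕ → ℝ := fun n => ∑ k ∈ range n, (-1:ℝ)^k / ((k:ℝ) + 1/2) with hP_def
  -- recurrence at half-integers
  have hk : ∀ n : ℕ, β ((n:ℝ) + 3/2) = 1/((n:ℝ) + 1/2) - β ((n:ℝ) + 1/2) := by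
    intro n
    have h := beta_rec β hβ ((n:ℝ) + 1/2) (by positivity)
    rwa [show ((n:ℝ) + 1/2) + 1 = (n:ℝ) + 3/2 by ring] at h
  -- nonvanishing facts
  have hne : ∀ n : ℕ, ((n:ℝ) - 1/2 ≠ 0) ∧ ((n:ℝ) + 1/2 ≠ 0) ∧ ((n:ℝ) + 3/2 ≠ 0) := by
    intro n
    refine ⟨?_, by positivity, by positivity⟩
    rcases Nat.eq_zero_or_pos n with h | h
    · subst h; norm_num
    · have : (1:ℝ) ≤ (n:ℝ) := by exact_mod_cast h
      intro hc; linarith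
  -- the closed form for partial sums
  have key : ∀ n : ℕ,
      (∑ k ∈ Finset.range n,
          (-1 : ℝ) ^ k *
            (1 / ((k : ℝ) - 1 / 2) + 1 / ((k : ℝ) + 3 / 2) +
              4 * ((k : ℝ) + 1 / 2) * (β ((k : ℝ) + 3 / 2) - β ((k : ℝ) + 1 / 2))))
      = A n + B n - P n
        + ((-1:ℝ)^n * (2*(n:ℝ)) - (-1:ℝ)^n * (4*(n:ℝ)^2) * β ((n:ℝ) + 1/2)) := by
    intro n
    induction n with
    | zero => simp [hA_def, hB_def, hP_def]
    | succ n ih =>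
      rw [Finset.sum_range_succ, ih]
      simp only [hA_def, hB_def, hP_def, Finset.sum_range_succ]
      rw [hk n]
      rw [show ((n+1:ℕ):ℝ) = (n:ℝ) + 1 by push_cast; ring]
      rw [show ((n:ℝ) + 1) + 1/2 = (n:ℝ) + 3/2 by ring, hk n]
      obtain ⟨h1, h2, h3⟩ := hne n
      rw [pow_succ]
      field_simp
      ring
  -- limits of the pieces
  have hP4 := Real.tendsto_sum_pi_div_four
  have hP : Tendsto P atTop (nhds (π/2)) := by
    have h2 : Tendsto (fun k : ℕ => 2 * ∑ i ∈ range k, (-1:ℝ)^i / (2*(i:ℝ)+1)) atTop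
        (nhds (2 * (π/4))) := hP4.const_mul 2
    have he : ∀ k : ℕ, 2 * ∑ i ∈ range k, (-1:ℝ)^i / (2*(i:ℝ)+1) = P k := by
      intro k
      rw [hP_def, Finset.mul_sum]
      apply Finset.sum_congr rfl
      intro i _
      have : (2*(i:ℝ)+1) ≠ 0 := by positivity
      have : ((i:ℝ)+1/2) ≠ 0 := by positivity
      field_simp
    have := h2.congr he
    rwa [show 2 * (π/4) = π/2 by ring] at this
  have hbhalf : β (1/2) = π/2 := by
    have h1 := hβ (1/2) (by norm_num)
    have h1' : Tendsto P atTop (nhds (β (1/2))) := by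
      apply h1.congr
      intro n
      apply Finset.sum_congr rfl
      intro j _
      rw [add_comm ((1:ℝ)/2) (j:ℝ)]
    exact tendsto_nhds_unique h1' hP
  have hA : Tendsto A atTop (nhds (-2 - π/2)) := by
    have hshift : ∀ n : ℕ, A (n+1) = -2 - P n := by
      intro n
      simp only [hA_def, hP_def]
      rw [Finset.sum_range_succ']
      have : ∀ j ∈ range n, (-1:ℝ)^(j+1) / (((j+1:ℕ):ℝ) - 1/2)
          = -((-1:ℝ)^j / ((j:ℝ) + 1/2)) := by
        intro j _
        push_cast
        rw [pow_succ]
        have h1 : ((j:ℝ)+1) - 1/2 = (j:ℝ) + 1/2 := by ring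
        rw [h1]
        ring
      rw [Finset.sum_congr rfl this, Finset.sum_neg_distrib]
      norm_num
      ring
    have h1 : Tendsto (fun n => A (n+1)) atTop (nhds (-2 - π/2)) := by
      have : Tendsto (fun n => -2 - P n) atTop (nhds (-2 - π/2)) :=
        tendsto_const_nhds.sub hP
      exact this.congr (fun n => (hshift n).symm)
    exact (tendsto_add_atTop_iff_nat 1).mp h1
  have hb32 : β (3/2) = 2 - π/2 := by
    have h := beta_rec β hβ (1/2) (by norm_num)
    rw [show (1:ℝ)/2 + 1 = 3/2 by norm_num] at h
    rw [h, hbhalf]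
    norm_num
  have hB : Tendsto B atTop (nhds (2 - π/2)) := by
    have h1 := hβ (3/2) (by norm_num)
    have h1' : Tendsto B atTop (nhds (β (3/2))) := by
      apply h1.congr
      intro n
      apply Finset.sum_congr rfl
      intro j _
      rw [add_comm ((3:ℝ)/2) (j:ℝ)]
    rwa [hb32] at h1'
  -- the tail tends to 0
  have hT : Tendsto (fun n : ℕ =>
      (-1:ℝ)^n * (2*(n:ℝ)) - (-1:ℝ)^n * (4*(n:ℝ)^2) * β ((n:ℝ) + 1/2)) atTop (nhds 0) := by
    apply squeeze_zero_norm' (a := fun n : ℕ => 1/(n:ℝ))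
    · filter_upwards [eventually_ge_atTop 1] with n hn
      have hn1 : (1:ℝ) ≤ (n:ℝ) := by exact_mod_cast hn
      have hx : (1:ℝ) ≤ (n:ℝ) + 1/2 := by linarith
      have hD := D_abs β hβ ((n:ℝ) + 1/2) hx
      rw [show 2*((n:ℝ)+1/2) - 1 = 2*(n:ℝ) by ring] at hD
      set b := β ((n:ℝ) + 1/2) with hb
      have e1 : (-1:ℝ)^n * (2*(n:ℝ)) - (-1:ℝ)^n * (4*(n:ℝ)^2) * b
          = (-1:ℝ)^n * ((4*(n:ℝ)^2) * (1/(2*(n:ℝ)) - b)) := by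
        field_simp
        ring
      rw [Real.norm_eq_abs, e1, abs_mul, abs_mul, abs_pow, abs_neg, abs_one, one_pow, one_mul,
        abs_of_nonneg (by positivity : (0:ℝ) ≤ 4*(n:ℝ)^2), abs_sub_comm]
      have hd : (0:ℝ) < ((n:ℝ)+1/2) * (4*((n:ℝ)+1/2)^2 - 1) := by nlinarith
      calc 4*(n:ℝ)^2 * |b - 1/(2*(n:ℝ))|
          ≤ 4*(n:ℝ)^2 * (1/(((n:ℝ)+1/2) * (4*((n:ℝ)+1/2)^2 - 1))) := by
            apply mul_le_mul_of_nonneg_left hD (by positivity)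
        _ ≤ 1/(n:ℝ) := by
            rw [mul_one_div, div_le_div_iff₀ hd (by linarith : (0:ℝ) < (n:ℝ))]
            nlinarith
    · exact tendsto_one_div_atTop_nhds_zero_nat
  -- assemble
  have hlim : Tendsto (fun n => A n + B n - P n
      + ((-1:ℝ)^n * (2*(n:ℝ)) - (-1:ℝ)^n * (4*(n:ℝ)^2) * β ((n:ℝ) + 1/2))) atTop
      (nhds ((-2 - π/2) + (2 - π/2) - π/2 + 0)) :=
    ((hA.add hB).sub hP).add hT
  rw [show (-2 - π/2) + (2 - π/2) - π/2 + 0 = -(3*π)/2 by ring] at hlim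
  exact hlim.congr (fun n => (key n).symm)


end

/-- With `β(x) := Σ_{j=0}^∞ (−1)^j/(x + j)` for `x > 0` (the alternating
series converging in the sense of partial sums), the series
`Σ_{k=0}^∞ (−1)^k [ 1/(k − 1/2) + 1/(k + 3/2) + 4(k + 1/2)(β(k + 3/2) − β(k + 1/2)) ]`
converges and equals `−3π/2`. -/
theorem zaremba_c5_series (β : ℝ → ℝ)
    (hβ : ∀ x : ℝ, 0 < x →
      Tendsto (fun n : ℕ => ∑ j ∈ Finset.range n, (-1 : ℝ) ^ j / (x + (j : ℝ)))
        atTop (nhds (β x))) :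
    Tendsto
      (fun n : ℕ =>
        ∑ k ∈ Finset.range n,
          (-1 : ℝ) ^ k *
            (1 / ((k : ℝ) - 1 / 2) + 1 / ((k : ℝ) + 3 / 2) +
              4 * ((k : ℝ) + 1 / 2) * (β ((k : ℝ) + 3 / 2) - β ((k : ℝ) + 1 / 2))))
      atTop (nhds (-(3 * π) / 2)) := by
  exact zaremba_c5_series' β hβ
end

section
/- (Neumann half-line model problem.) Let a > 0, let κ satisfy 0 < κ ≤ 1/a, let k be a nonnegative integer, let H ∈ ℝ, and let F ∈ ℰ(κ). Then there exists U ∈ ℰ(κ) such that a U''(ν) + 2ν U'(ν) − 2k U(ν) = −4 F(ν) for all ν ≥ 0 and U'(0) = H. Equivalently, u(ν,t) := t^{k/2} U(ν/(2√t)) satisfies (∂_t − a ∂_ν²) u = t^{k/2−1} F(ν/(2√t)) for ν ≥ 0, t > 0, with the Neumann-type boundary condition determined by U'(0) = H. -/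
open Real

/-- The class `ℰ(κ)`: smooth functions on `[0,∞)` (realized as smooth functions on `ℝ`)
all of whose derivatives satisfy Gaussian decay estimates
`|U^{(j)}(τ)| ≤ C_{j,κ′} exp(−κ′ τ²)` on `[0,∞)` for every `0 < κ′ < κ`. -/
def MemGaussianClass (κ : ℝ) (U : ℝ → ℝ) : Prop :=
  ContDiff ℝ (⊤ : ℕ∞) U ∧
    ∀ (j : ℕ) (κ' : ℝ), 0 < κ' → κ' < κ →
      ∃ C : ℝ, ∀ τ : ℝ, 0 ≤ τ →
        |iteratedDeriv j U τ| ≤ C * Real.exp (-κ' * τ ^ 2)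


open MeasureTheory Set

noncomputable section


/-! ### Smoothness (= analyticity, since `⊤ = ω`) helpers -/

private lemma contDiffTopDeriv {f : ℝ → ℝ} (hf : ContDiff ℝ (⊤ : ℕ∞) f) :
    ContDiff ℝ (⊤ : ℕ∞) (deriv f) := by
  exact (contDiff_infty_iff_deriv.mp hf).2

private lemma contDiffTopIter {f : ℝ → ℝ} (hf : ContDiff ℝ (⊤ : ℕ∞) f) (j : ℕ) :
    ContDiff ℝ (⊤ : ℕ∞) (iteratedDeriv j f) := by
  induction j with
  | zero => simpa [iteratedDeriv_zero] using hf
  | succ n ih => rw [iteratedDeriv_succ]; exact contDiffTopDeriv ih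

private lemma contDiffTop_of_hasDerivAt {f A : ℝ → ℝ} (hf : ContDiff ℝ (⊤ : ℕ∞) f)
    (hA : ∀ x, HasDerivAt A (f x) x) : ContDiff ℝ (⊤ : ℕ∞) A := by
  refine contDiff_infty_iff_deriv.mpr ⟨fun x => (hA x).differentiableAt, ?_⟩
  rwa [show deriv A = f from funext fun x => (hA x).deriv]

private lemma hasDerivAt_const_add_integral {f : ℝ → ℝ} (hf : Continuous f) (cst : ℝ) (ν : ℝ) :
    HasDerivAt (fun t => cst + ∫ s in (0 : ℝ)..t, f s) (f ν) ν := by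
  have := (hf.integral_hasStrictDerivAt 0 ν).hasDerivAt
  simpa using (this.const_add cst)

private lemma contDiffTop_const_add_integral {f : ℝ → ℝ} (hf : ContDiff ℝ (⊤ : ℕ∞) f) (cst : ℝ) :
    ContDiff ℝ (⊤ : ℕ∞) (fun t => cst + ∫ s in (0 : ℝ)..t, f s) :=
  contDiffTop_of_hasDerivAt hf (hasDerivAt_const_add_integral (hf.continuous) cst)


/-! ### Decay helpers -/

private lemma nu_le_exp {δ : ℝ} (hδ : 0 < δ) (ν : ℝ) (hν : 0 ≤ ν) :
    ν ≤ (1 + 1 / δ) * Real.exp (δ * ν ^ 2) := by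
  have hexp1 : (1 : ℝ) ≤ Real.exp (δ * ν ^ 2) := by
    rw [Real.one_le_exp_iff]; positivity
  rcases le_or_gt ν 1 with h | h
  · have h2 : (1 : ℝ) ≤ 1 + 1 / δ := by
      have : 0 < 1 / δ := by positivity
      linarith
    nlinarith
  · have h1 : ν ≤ ν ^ 2 := by nlinarith
    have h2 : δ * ν ^ 2 ≤ Real.exp (δ * ν ^ 2) := by
      have := Real.add_one_le_exp (δ * ν ^ 2)
      linarith
    have h3 : ν ^ 2 ≤ Real.exp (δ * ν ^ 2) / δ := by
      rw [le_div_iff₀ hδ]; nlinarith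
    have h4 : Real.exp (δ * ν ^ 2) / δ ≤ (1 + 1 / δ) * Real.exp (δ * ν ^ 2) := by
      rw [div_eq_mul_inv, mul_comm]
      apply mul_le_mul_of_nonneg_right _ (Real.exp_nonneg _)
      rw [one_div]
      linarith
    linarith

/-- Absorb a factor of `ν` into a slightly worse Gaussian. -/
private lemma absorb_nu {κ₁ κ₂ : ℝ} (h : κ₂ < κ₁) :
    ∃ C : ℝ, 0 ≤ C ∧ ∀ ν : ℝ, 0 ≤ ν →
      ν * Real.exp (-κ₁ * ν ^ 2) ≤ C * Real.exp (-κ₂ * ν ^ 2) := by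
  have hδ : 0 < κ₁ - κ₂ := by linarith
  refine ⟨1 + 1 / (κ₁ - κ₂), by positivity, fun ν hν => ?_⟩
  have h1 := nu_le_exp hδ ν hν
  have h3 : Real.exp ((κ₁ - κ₂) * ν ^ 2) * Real.exp (-κ₁ * ν ^ 2)
      = Real.exp (-κ₂ * ν ^ 2) := by
    rw [← Real.exp_add]; ring_nf
  calc ν * Real.exp (-κ₁ * ν ^ 2)
      ≤ ((1 + 1 / (κ₁ - κ₂)) * Real.exp ((κ₁ - κ₂) * ν ^ 2)) * Real.exp (-κ₁ * ν ^ 2) :=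
        mul_le_mul_of_nonneg_right h1 (Real.exp_nonneg _)
    _ = (1 + 1 / (κ₁ - κ₂)) * (Real.exp ((κ₁ - κ₂) * ν ^ 2) * Real.exp (-κ₁ * ν ^ 2)) := by
        ring
    _ = (1 + 1 / (κ₁ - κ₂)) * Real.exp (-κ₂ * ν ^ 2) := by rw [h3]

/-! ### Basic lemmas about the Gaussian class -/

private lemma MemGaussianClass.bound0 {κ : ℝ} {U : ℝ → ℝ} (hU : MemGaussianClass κ U)
    (j : ℕ) {κ' : ℝ} (h0 : 0 < κ') (h1 : κ' < κ) :
    ∃ C : ℝ, 0 ≤ C ∧ ∀ τ : ℝ, 0 ≤ τ →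
      |iteratedDeriv j U τ| ≤ C * Real.exp (-κ' * τ ^ 2) := by
  obtain ⟨C, hC⟩ := hU.2 j κ' h0 h1
  refine ⟨|C|, abs_nonneg _, fun τ hτ => ?_⟩
  exact (hC τ hτ).trans (mul_le_mul_of_nonneg_right (le_abs_self C) (Real.exp_nonneg _))

private lemma memClass_deriv {κ : ℝ} {U : ℝ → ℝ} (hU : MemGaussianClass κ U) :
    MemGaussianClass κ (deriv U) := by
  refine ⟨contDiffTopDeriv hU.1, ?_⟩
  intro j κ' h0 h1
  obtain ⟨C, hC⟩ := hU.2 (j + 1) κ' h0 h1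
  exact ⟨C, fun τ hτ => by rw [← iteratedDeriv_succ']; exact hC τ hτ⟩

private lemma iteratedDeriv_zero_fun' (j : ℕ) :
    iteratedDeriv j (fun _ : ℝ => (0 : ℝ)) = fun _ => (0 : ℝ) := by
  induction j with
  | zero => simp [iteratedDeriv_zero]
  | succ n ih => rw [iteratedDeriv_succ, ih]; funext x; simp

private lemma memClass_zero {κ : ℝ} : MemGaussianClass κ (fun _ : ℝ => (0 : ℝ)) := by
  refine ⟨contDiff_const, ?_⟩
  intro j κ' _ _
  refine ⟨0, fun τ _ => ?_⟩
  rw [iteratedDeriv_zero_fun']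
  simp

private lemma iteratedDeriv_neg' {f : ℝ → ℝ} (j : ℕ) :
    iteratedDeriv j (fun x => -f x) = fun x => -iteratedDeriv j f x := by
  funext x
  exact iteratedDeriv_neg j f x

private lemma memClass_neg {κ : ℝ} {f : ℝ → ℝ} (hf : MemGaussianClass κ f) :
    MemGaussianClass κ (fun ν => -f ν) := by
  refine ⟨hf.1.neg, ?_⟩
  intro j κ' h0 h1
  obtain ⟨C, hC⟩ := hf.2 j κ' h0 h1
  refine ⟨C, fun τ hτ => ?_⟩
  rw [iteratedDeriv_neg', abs_neg]
  exact hC τ hτ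

private lemma iteratedDeriv_add' {f g : ℝ → ℝ} (hf : ContDiff ℝ (⊤ : ℕ∞) f) (hg : ContDiff ℝ (⊤ : ℕ∞) g)
    (j : ℕ) :
    iteratedDeriv j (fun x => f x + g x) = fun x => iteratedDeriv j f x + iteratedDeriv j g x := by
  induction j generalizing f g with
  | zero => simp [iteratedDeriv_zero]
  | succ n ih =>
    rw [iteratedDeriv_succ', iteratedDeriv_succ' (f := f), iteratedDeriv_succ' (f := g)]
    have hder : deriv (fun x => f x + g x) = fun x => deriv f x + deriv g x := by
      funext x
      exact deriv_add ((hf.differentiable (by simp)) x) ((hg.differentiable (by simp)) x)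
    rw [hder]
    exact ih (contDiffTopDeriv hf) (contDiffTopDeriv hg)

private lemma memClass_add {κ : ℝ} {f g : ℝ → ℝ} (hf : MemGaussianClass κ f)
    (hg : MemGaussianClass κ g) : MemGaussianClass κ (fun ν => f ν + g ν) := by
  refine ⟨hf.1.add hg.1, ?_⟩
  intro j κ' h0 h1
  obtain ⟨C1, hC1⟩ := hf.2 j κ' h0 h1
  obtain ⟨C2, hC2⟩ := hg.2 j κ' h0 h1
  refine ⟨C1 + C2, fun τ hτ => ?_⟩
  rw [iteratedDeriv_add' hf.1 hg.1]
  calc |iteratedDeriv j f τ + iteratedDeriv j g τ|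
      ≤ |iteratedDeriv j f τ| + |iteratedDeriv j g τ| := abs_add_le _ _
    _ ≤ C1 * Real.exp (-κ' * τ ^ 2) + C2 * Real.exp (-κ' * τ ^ 2) :=
        add_le_add (hC1 τ hτ) (hC2 τ hτ)
    _ = (C1 + C2) * Real.exp (-κ' * τ ^ 2) := by ring

private lemma iteratedDeriv_cmul {f : ℝ → ℝ} (hf : ContDiff ℝ (⊤ : ℕ∞) f) (c : ℝ) (j : ℕ) :
    iteratedDeriv j (fun x => c * f x) = fun x => c * iteratedDeriv j f x := by
  induction j generalizing f with
  | zero => simp [iteratedDeriv_zero]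
  | succ n ih =>
    rw [iteratedDeriv_succ', iteratedDeriv_succ' (f := f)]
    have hder : deriv (fun x => c * f x) = fun x => c * deriv f x := by
      funext x
      exact deriv_const_mul c ((hf.differentiable (by simp)) x)
    rw [hder]
    exact ih (contDiffTopDeriv hf)

private lemma memClass_cmul {κ : ℝ} {f : ℝ → ℝ} (c : ℝ) (hf : MemGaussianClass κ f) :
    MemGaussianClass κ (fun ν => c * f ν) := by
  refine ⟨contDiff_const.mul hf.1, ?_⟩
  intro j κ' h0 h1
  obtain ⟨C, hC⟩ := hf.2 j κ' h0 h1
  refine ⟨|c| * C, fun τ hτ => ?_⟩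
  rw [iteratedDeriv_cmul hf.1, abs_mul, mul_assoc]
  exact mul_le_mul_of_nonneg_left (hC τ hτ) (abs_nonneg _)

/-- The key three-term decay estimate used repeatedly. -/
private lemma decay_step {κ κ' : ℝ} (h0 : 0 < κ') (h1 : κ' < κ)
    {f1 f2 f3 : ℝ → ℝ} (b1 b2 b3 : ℝ)
    (hf1 : ∃ C, 0 ≤ C ∧ ∀ ν : ℝ, 0 ≤ ν → |f1 ν| ≤ C * Real.exp (-((κ' + κ) / 2) * ν ^ 2))
    (hf2 : ∃ C, 0 ≤ C ∧ ∀ ν : ℝ, 0 ≤ ν → |f2 ν| ≤ C * Real.exp (-κ' * ν ^ 2))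
    (hf3 : ∃ C, 0 ≤ C ∧ ∀ ν : ℝ, 0 ≤ ν → |f3 ν| ≤ C * Real.exp (-κ' * ν ^ 2)) :
    ∃ C, ∀ ν : ℝ, 0 ≤ ν →
      |b1 * (ν * f1 ν) + b2 * f2 ν + b3 * f3 ν| ≤ C * Real.exp (-κ' * ν ^ 2) := by
  obtain ⟨C1, hC10, hC1⟩ := hf1
  obtain ⟨C2, hC20, hC2⟩ := hf2
  obtain ⟨C3, hC30, hC3⟩ := hf3
  obtain ⟨Ca, hCa0, hCa⟩ := absorb_nu (show κ' < (κ' + κ) / 2 by linarith)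
  refine ⟨|b1| * C1 * Ca + |b2| * C2 + |b3| * C3, fun ν hν => ?_⟩
  have e1 : |b1 * (ν * f1 ν)| ≤ |b1| * C1 * (Ca * Real.exp (-κ' * ν ^ 2)) := by
    rw [abs_mul, abs_mul, abs_of_nonneg hν]
    have h1 : ν * |f1 ν| ≤ ν * (C1 * Real.exp (-((κ' + κ) / 2) * ν ^ 2)) :=
      mul_le_mul_of_nonneg_left (hC1 ν hν) hν
    have h3 := hCa ν hν
    calc |b1| * (ν * |f1 ν|)
        ≤ |b1| * (C1 * (ν * Real.exp (-((κ' + κ) / 2) * ν ^ 2))) := by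
          refine mul_le_mul_of_nonneg_left ?_ (abs_nonneg _)
          calc ν * |f1 ν| ≤ ν * (C1 * Real.exp (-((κ' + κ) / 2) * ν ^ 2)) := h1
            _ = C1 * (ν * Real.exp (-((κ' + κ) / 2) * ν ^ 2)) := by ring
      _ ≤ |b1| * (C1 * (Ca * Real.exp (-κ' * ν ^ 2))) :=
          mul_le_mul_of_nonneg_left (mul_le_mul_of_nonneg_left h3 hC10) (abs_nonneg _)
      _ = |b1| * C1 * (Ca * Real.exp (-κ' * ν ^ 2)) := by ring
  have e2 : |b2 * f2 ν| ≤ |b2| * C2 * Real.exp (-κ' * ν ^ 2) := by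
    rw [abs_mul, mul_assoc]
    exact mul_le_mul_of_nonneg_left (hC2 ν hν) (abs_nonneg _)
  have e3 : |b3 * f3 ν| ≤ |b3| * C3 * Real.exp (-κ' * ν ^ 2) := by
    rw [abs_mul, mul_assoc]
    exact mul_le_mul_of_nonneg_left (hC3 ν hν) (abs_nonneg _)
  have etri : |b1 * (ν * f1 ν) + b2 * f2 ν + b3 * f3 ν|
      ≤ |b1 * (ν * f1 ν)| + |b2 * f2 ν| + |b3 * f3 ν| :=
    (abs_add_le _ _).trans (add_le_add_left (abs_add_le _ _) _)
  have hring : |b1| * C1 * (Ca * Real.exp (-κ' * ν ^ 2)) + |b2| * C2 * Real.exp (-κ' * ν ^ 2)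
      + |b3| * C3 * Real.exp (-κ' * ν ^ 2)
      = (|b1| * C1 * Ca + |b2| * C2 + |b3| * C3) * Real.exp (-κ' * ν ^ 2) := by ring
  linarith

/-! ### Closure of the class under first-order linear ODEs and antiderivatives -/

private lemma memClass_of_linODE {κ b c : ℝ} {U G : ℝ → ℝ} (hκ0 : 0 < κ)
    (hUc : ContDiff ℝ (⊤ : ℕ∞) U) (hG : MemGaussianClass κ G)
    (hode : ∀ ν, deriv U ν = b * (ν * U ν) + c * G ν)
    (hdec : ∀ κ', 0 < κ' → κ' < κ → ∃ C, ∀ ν : ℝ, 0 ≤ ν →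
      |U ν| ≤ C * Real.exp (-κ' * ν ^ 2)) :
    MemGaussianClass κ U := by
  have hGc : ContDiff ℝ (⊤ : ℕ∞) G := hG.1
  have hUj : ∀ j, ContDiff ℝ (⊤ : ℕ∞) (iteratedDeriv j U) := contDiffTopIter hUc
  have hGj : ∀ j, ContDiff ℝ (⊤ : ℕ∞) (iteratedDeriv j G) := contDiffTopIter hGc
  have hhU : ∀ (m : ℕ) (ν : ℝ), HasDerivAt (iteratedDeriv m U) (iteratedDeriv (m + 1) U ν) ν := by
    intro m ν
    rw [iteratedDeriv_succ]
    exact (((hUj m).differentiable (by simp)) ν).hasDerivAt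
  have hhG : ∀ (m : ℕ) (ν : ℝ), HasDerivAt (iteratedDeriv m G) (iteratedDeriv (m + 1) G ν) ν := by
    intro m ν
    rw [iteratedDeriv_succ]
    exact (((hGj m).differentiable (by simp)) ν).hasDerivAt
  have hdec' : ∀ κ', 0 < κ' → κ' < κ → ∃ C, 0 ≤ C ∧ ∀ ν : ℝ, 0 ≤ ν →
      |U ν| ≤ C * Real.exp (-κ' * ν ^ 2) := by
    intro κ' h0 h1
    obtain ⟨C, hC⟩ := hdec κ' h0 h1
    exact ⟨|C|, abs_nonneg _, fun ν hν => (hC ν hν).trans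
      (mul_le_mul_of_nonneg_right (le_abs_self C) (Real.exp_nonneg _))⟩
  -- the basic derivative identity, as a function
  have hd1 : iteratedDeriv 1 U = fun ν => b * (ν * U ν) + c * G ν := by
    funext ν
    rw [iteratedDeriv_one]
    exact hode ν
  -- the iterated derivative recursion
  have formula : ∀ (j : ℕ) (ν : ℝ), iteratedDeriv (j + 2) U ν =
      b * (ν * iteratedDeriv (j + 1) U ν) + b * ((j : ℝ) + 1) * iteratedDeriv j U ν
        + c * iteratedDeriv (j + 1) G ν := by
    intro j
    induction j with
    | zero =>
      intro ν
      have h2 : HasDerivAt (fun ν => b * (ν * U ν) + c * G ν)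
          (b * (1 * U ν + ν * iteratedDeriv 1 U ν) + c * iteratedDeriv 1 G ν) ν := by
        have hU' : HasDerivAt U (iteratedDeriv 1 U ν) ν := by
          have := hhU 0 ν
          rwa [iteratedDeriv_zero] at this
        have hG' : HasDerivAt G (iteratedDeriv 1 G ν) ν := by
          have := hhG 0 ν
          rwa [iteratedDeriv_zero] at this
        exact (((hasDerivAt_id ν).mul hU').const_mul b).add (hG'.const_mul c)
      have h3 : iteratedDeriv 2 U ν = deriv (fun ν => b * (ν * U ν) + c * G ν) ν := by
        rw [show (2 : ℕ) = 1 + 1 from rfl, iteratedDeriv_succ, hd1]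
      rw [show (0 : ℕ) + 2 = 2 from rfl, h3, h2.deriv]
      simp only [iteratedDeriv_zero, Nat.cast_zero]
      ring
    | succ n ih =>
      intro ν
      have hih : iteratedDeriv (n + 2) U = fun ν =>
          b * (ν * iteratedDeriv (n + 1) U ν) + b * ((n : ℝ) + 1) * iteratedDeriv n U ν
            + c * iteratedDeriv (n + 1) G ν := funext ih
      have h2 : HasDerivAt (fun ν =>
          b * (ν * iteratedDeriv (n + 1) U ν) + b * ((n : ℝ) + 1) * iteratedDeriv n U ν
            + c * iteratedDeriv (n + 1) G ν)
          (b * (1 * iteratedDeriv (n + 1) U ν + ν * iteratedDeriv (n + 2) U ν)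
            + b * ((n : ℝ) + 1) * iteratedDeriv (n + 1) U ν
            + c * iteratedDeriv (n + 2) G ν) ν := by
        exact ((((hasDerivAt_id ν).mul (hhU (n + 1) ν)).const_mul b).add
          ((hhU n ν).const_mul (b * ((n : ℝ) + 1)))).add ((hhG (n + 1) ν).const_mul c)
      have h3 : iteratedDeriv (n + 1 + 2) U ν = deriv (iteratedDeriv (n + 2) U) ν := by
        rw [show n + 1 + 2 = (n + 2) + 1 from rfl, iteratedDeriv_succ]
      have h4 := h2.deriv
      rw [← hih] at h4
      rw [h3, h4]
      push_cast
      ring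
  refine ⟨hUc, ?_⟩
  suffices key : ∀ j : ℕ,
      (∀ κ', 0 < κ' → κ' < κ → ∃ C, 0 ≤ C ∧ ∀ ν : ℝ, 0 ≤ ν →
        |iteratedDeriv j U ν| ≤ C * Real.exp (-κ' * ν ^ 2)) ∧
      (∀ κ', 0 < κ' → κ' < κ → ∃ C, 0 ≤ C ∧ ∀ ν : ℝ, 0 ≤ ν →
        |iteratedDeriv (j + 1) U ν| ≤ C * Real.exp (-κ' * ν ^ 2)) by
    intro j κ' h0 h1
    obtain ⟨C, _, hC⟩ := (key j).1 κ' h0 h1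
    exact ⟨C, hC⟩
  have mid : ∀ κ', 0 < κ' → κ' < κ → 0 < (κ' + κ) / 2 ∧ (κ' + κ) / 2 < κ := by
    intro κ' h0 h1
    constructor <;> [linarith; linarith]
  have step1 : ∀ κ', 0 < κ' → κ' < κ → ∃ C, 0 ≤ C ∧ ∀ ν : ℝ, 0 ≤ ν →
      |iteratedDeriv 1 U ν| ≤ C * Real.exp (-κ' * ν ^ 2) := by
    intro κ' h0 h1
    have hrepr : ∀ ν : ℝ, iteratedDeriv 1 U ν =
        b * (ν * U ν) + 0 * U ν + c * G ν := by
      intro ν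
      rw [hd1]
      ring
    obtain ⟨C1, hC10, hC1⟩ := hdec' _ (mid κ' h0 h1).1 (mid κ' h0 h1).2
    obtain ⟨C2, hC20, hC2⟩ := hdec' κ' h0 h1
    obtain ⟨C3, hC30, hC3⟩ := hG.bound0 0 h0 h1
    have hC3' : ∀ ν : ℝ, 0 ≤ ν → |G ν| ≤ C3 * Real.exp (-κ' * ν ^ 2) := by
      intro ν hν
      have := hC3 ν hν
      rwa [iteratedDeriv_zero] at this
    obtain ⟨C, hC⟩ := decay_step h0 h1 b 0 c ⟨C1, hC10, hC1⟩ ⟨C2, hC20, hC2⟩ ⟨C3, hC30, hC3'⟩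
    refine ⟨|C|, abs_nonneg _, fun ν hν => ?_⟩
    rw [hrepr ν]
    exact (hC ν hν).trans (mul_le_mul_of_nonneg_right (le_abs_self C) (Real.exp_nonneg _))
  intro j
  induction j with
  | zero => exact ⟨fun κ' h0 h1 => by
      obtain ⟨C, hC0, hC⟩ := hdec' κ' h0 h1
      exact ⟨C, hC0, fun ν hν => by rw [iteratedDeriv_zero]; exact hC ν hν⟩, step1⟩
  | succ n ih =>
    refine ⟨ih.2, ?_⟩
    intro κ' h0 h1
    obtain ⟨hm0, hm1⟩ := mid κ' h0 h1
    obtain ⟨C1, hC10, hC1⟩ := ih.2 _ hm0 hm1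
    obtain ⟨C2, hC20, hC2⟩ := ih.1 κ' h0 h1
    obtain ⟨C3, hC30, hC3⟩ := hG.bound0 (n + 1) h0 h1
    obtain ⟨C, hC⟩ := decay_step h0 h1 b (b * ((n : ℝ) + 1)) c
      ⟨C1, hC10, hC1⟩ ⟨C2, hC20, hC2⟩ ⟨C3, hC30, hC3⟩
    refine ⟨|C|, abs_nonneg _, fun ν hν => ?_⟩
    rw [show n + 1 + 1 = n + 2 from rfl, formula n ν]
    exact (hC ν hν).trans (mul_le_mul_of_nonneg_right (le_abs_self C) (Real.exp_nonneg _))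

private lemma memClass_of_antideriv {κ : ℝ} {U W : ℝ → ℝ}
    (hUc : ContDiff ℝ (⊤ : ℕ∞) U) (hW : MemGaussianClass κ W)
    (hd : ∀ ν, deriv U ν = W ν)
    (hdec : ∀ κ', 0 < κ' → κ' < κ → ∃ C, ∀ ν : ℝ, 0 ≤ ν →
      |U ν| ≤ C * Real.exp (-κ' * ν ^ 2)) :
    MemGaussianClass κ U := by
  refine ⟨hUc, ?_⟩
  intro j κ' h0 h1
  match j with
  | 0 =>
    obtain ⟨C, hC⟩ := hdec κ' h0 h1
    exact ⟨C, fun τ hτ => by rw [iteratedDeriv_zero]; exact hC τ hτ⟩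
  | (n + 1) =>
    obtain ⟨C, hC⟩ := hW.2 n κ' h0 h1
    refine ⟨C, fun τ hτ => ?_⟩
    rw [iteratedDeriv_succ', show deriv U = W from funext hd]
    exact hC τ hτ


/-! ### The level-0 construction -/

private lemma base_core {a κ : ℝ} (ha : 0 < a) (hκ0 : 0 < κ)
    {G V : ℝ → ℝ} (hG : MemGaussianClass κ G) (hV : MemGaussianClass κ V)
    (hode : ∀ ν, deriv V ν = -2 / a * (ν * V ν) + (-4 / a) * G ν) :
    ∃ U : ℝ → ℝ, MemGaussianClass κ U ∧
      (∀ ν, a * deriv (deriv U) ν + 2 * ν * deriv U ν = -4 * G ν) ∧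
      (∀ ν, deriv U ν = V ν) ∧ U 0 = -∫ s in Ioi (0 : ℝ), V s := by
  have hVc : ContDiff ℝ (⊤ : ℕ∞) V := hV.1
  set cU : ℝ := -∫ s in Ioi (0 : ℝ), V s with hcU
  set U : ℝ → ℝ := fun ν => cU + ∫ s in (0 : ℝ)..ν, V s with hUdef
  have hUc : ContDiff ℝ (⊤ : ℕ∞) U := contDiffTop_const_add_integral hVc cU
  have hdU : ∀ ν, deriv U ν = V ν := fun ν =>
    (hasDerivAt_const_add_integral hVc.continuous cU ν).deriv
  have hκ2 : (0 : ℝ) < κ / 2 := by linarith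
  obtain ⟨C₀, hC₀0, hC₀⟩ := hV.bound0 0 hκ2 (by linarith)
  have hC₀' : ∀ ν : ℝ, 0 ≤ ν → |V ν| ≤ C₀ * Real.exp (-(κ / 2) * ν ^ 2) := by
    intro ν hν
    have := hC₀ ν hν
    rwa [iteratedDeriv_zero] at this
  have hint : IntegrableOn V (Ioi (0 : ℝ)) := by
    apply Integrable.mono' (((integrable_exp_neg_mul_sq hκ2).const_mul C₀).integrableOn)
      hVc.continuous.aestronglyMeasurable.restrict
    filter_upwards [ae_restrict_mem measurableSet_Ioi] with ν hν
    rw [Real.norm_eq_abs]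
    exact hC₀' ν (le_of_lt hν)
  have hUrepr : ∀ ν : ℝ, 0 ≤ ν → U ν = -∫ s in Ioi ν, V s := by
    intro ν hν
    have hIoc : IntegrableOn V (Ioc 0 ν) := hint.mono_set Set.Ioc_subset_Ioi_self
    have hIoiν : IntegrableOn V (Ioi ν) := hint.mono_set (Set.Ioi_subset_Ioi hν)
    have hsplit : ∫ s in Ioi (0 : ℝ), V s = (∫ s in Ioc 0 ν, V s) + ∫ s in Ioi ν, V s := by
      rw [← MeasureTheory.setIntegral_union Set.Ioc_disjoint_Ioi_same measurableSet_Ioi hIoc hIoiν,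
        Set.Ioc_union_Ioi_eq_Ioi hν]
    have hival : ∫ s in (0 : ℝ)..ν, V s = ∫ s in Ioc 0 ν, V s :=
      intervalIntegral.integral_of_le hν
    simp only [hUdef, hcU]
    rw [hival]
    linarith
  have hUdec : ∀ κ', 0 < κ' → κ' < κ → ∃ C, ∀ ν : ℝ, 0 ≤ ν →
      |U ν| ≤ C * Real.exp (-κ' * ν ^ 2) := by
    intro κ' h0 h1
    have hm0 : 0 < (κ' + κ) / 2 := by linarith
    have hm1 : (κ' + κ) / 2 < κ := by linarith
    have hδ : 0 < (κ' + κ) / 2 - κ' := by linarith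
    obtain ⟨C₁, hC₁0, hC₁⟩ := hV.bound0 0 hm0 hm1
    have hC₁' : ∀ s : ℝ, 0 ≤ s → |V s| ≤ C₁ * Real.exp (-((κ' + κ) / 2) * s ^ 2) := by
      intro s hs
      have := hC₁ s hs
      rwa [iteratedDeriv_zero] at this
    set δ : ℝ := (κ' + κ) / 2 - κ' with hδdef
    refine ⟨C₁ * ∫ s in Ioi (0 : ℝ), Real.exp (-δ * s ^ 2), fun ν hν => ?_⟩
    rw [hUrepr ν hν, abs_neg]
    have hgauss : IntegrableOn (fun s : ℝ => Real.exp (-δ * s ^ 2)) (Ioi ν) :=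
      (integrable_exp_neg_mul_sq hδ).integrableOn
    have hintν : IntegrableOn V (Ioi ν) := hint.mono_set (Set.Ioi_subset_Ioi hν)
    have hb1 : |∫ s in Ioi ν, V s| ≤ ∫ s in Ioi ν, |V s| := by
      simpa [Real.norm_eq_abs] using
        MeasureTheory.norm_integral_le_integral_norm (μ := volume.restrict (Ioi ν)) V
    have hb2 : ∫ s in Ioi ν, |V s| ≤
        ∫ s in Ioi ν, (C₁ * Real.exp (-κ' * ν ^ 2)) * Real.exp (-δ * s ^ 2) := by
      apply setIntegral_mono_on hintν.abs (hgauss.const_mul _) measurableSet_Ioi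
      intro s hs
      have hsν : ν < s := hs
      have hs0 : 0 ≤ s := le_trans hν hsν.le
      have h2 : Real.exp (-((κ' + κ) / 2) * s ^ 2)
          = Real.exp (-κ' * s ^ 2) * Real.exp (-δ * s ^ 2) := by
        rw [← Real.exp_add]
        congr 1
        rw [hδdef]
        ring
      have hsq : ν ^ 2 ≤ s ^ 2 := by nlinarith
      have h3 : Real.exp (-κ' * s ^ 2) ≤ Real.exp (-κ' * ν ^ 2) := by
        apply Real.exp_le_exp.mpr
        nlinarith [mul_le_mul_of_nonneg_left hsq h0.le]
      calc |V s| ≤ C₁ * Real.exp (-((κ' + κ) / 2) * s ^ 2) := hC₁' s hs0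
        _ = C₁ * (Real.exp (-κ' * s ^ 2) * Real.exp (-δ * s ^ 2)) := by rw [h2]
        _ ≤ C₁ * (Real.exp (-κ' * ν ^ 2) * Real.exp (-δ * s ^ 2)) := by
            exact mul_le_mul_of_nonneg_left
              (mul_le_mul_of_nonneg_right h3 (Real.exp_nonneg _)) hC₁0
        _ = (C₁ * Real.exp (-κ' * ν ^ 2)) * Real.exp (-δ * s ^ 2) := by ring
    have hb3 : ∫ s in Ioi ν, (C₁ * Real.exp (-κ' * ν ^ 2)) * Real.exp (-δ * s ^ 2)
        = (C₁ * Real.exp (-κ' * ν ^ 2)) * ∫ s in Ioi ν, Real.exp (-δ * s ^ 2) :=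
      MeasureTheory.integral_const_mul _ _
    have hb4 : ∫ s in Ioi ν, Real.exp (-δ * s ^ 2)
        ≤ ∫ s in Ioi (0 : ℝ), Real.exp (-δ * s ^ 2) := by
      apply setIntegral_mono_set (integrable_exp_neg_mul_sq hδ).integrableOn
        (Filter.Eventually.of_forall fun s => Real.exp_nonneg _)
        ((Set.Ioi_subset_Ioi hν).eventuallyLE)
    calc |∫ s in Ioi ν, V s| ≤ ∫ s in Ioi ν, |V s| := hb1
      _ ≤ ∫ s in Ioi ν, (C₁ * Real.exp (-κ' * ν ^ 2)) * Real.exp (-δ * s ^ 2) := hb2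
      _ = (C₁ * Real.exp (-κ' * ν ^ 2)) * ∫ s in Ioi ν, Real.exp (-δ * s ^ 2) := hb3
      _ ≤ (C₁ * Real.exp (-κ' * ν ^ 2)) * ∫ s in Ioi (0 : ℝ), Real.exp (-δ * s ^ 2) := by
          exact mul_le_mul_of_nonneg_left hb4 (mul_nonneg hC₁0 (Real.exp_nonneg _))
      _ = (C₁ * ∫ s in Ioi (0 : ℝ), Real.exp (-δ * s ^ 2)) * Real.exp (-κ' * ν ^ 2) := by
          ring
  refine ⟨U, memClass_of_antideriv hUc hV hdU hUdec, ?_, hdU, ?_⟩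
  · intro ν
    have hde : deriv (deriv U) ν = deriv V ν := by
      rw [show deriv U = V from funext hdU]
    rw [hde, hode ν, hdU ν]
    field_simp
    ring
  · simp [hUdef, hcU]

private lemma hasDerivAt_gauss (a ν : ℝ) :
    HasDerivAt (fun x : ℝ => Real.exp (-x ^ 2 / a))
      (-2 * ν / a * Real.exp (-ν ^ 2 / a)) ν := by
  have h1 : HasDerivAt (fun x : ℝ => -x ^ 2 / a) (-2 * ν / a) ν := by
    have h := ((hasDerivAt_pow 2 ν).fun_neg).div_const a
    refine h.congr_deriv ?_
    norm_num
  have h2 := h1.exp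
  convert h2 using 1
  ring

private lemma contDiff_gauss (a : ℝ) : ContDiff ℝ (⊤ : ℕ∞) (fun x : ℝ => Real.exp (-x ^ 2 / a)) :=
  (((contDiff_id.pow 2).neg).div_const a).exp

/-- The particular solution of the first order problem `a V' + 2 ν V = -4 G`. -/
private lemma particular_base {a κ : ℝ} (ha : 0 < a) (hκ0 : 0 < κ) (hκ : κ ≤ 1 / a)
    {G : ℝ → ℝ} (hG : MemGaussianClass κ G) :
    ∃ V, MemGaussianClass κ V ∧ ∀ ν, deriv V ν = -2 / a * (ν * V ν) + (-4 / a) * G ν := by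
  have hGc := hG.1
  have hintc : ContDiff ℝ (⊤ : ℕ∞) (fun s : ℝ => Real.exp (s ^ 2 / a) * G s) :=
    (((contDiff_id.pow 2).div_const a).exp).mul hGc
  set P : ℝ → ℝ := fun ν => ∫ s in (0 : ℝ)..ν, Real.exp (s ^ 2 / a) * G s with hPdef
  set V : ℝ → ℝ := fun ν => Real.exp (-ν ^ 2 / a) * (-(4 / a) * P ν) with hVdef
  have hPd : ∀ ν, HasDerivAt P (Real.exp (ν ^ 2 / a) * G ν) ν := by
    intro ν
    exact (hintc.continuous.integral_hasStrictDerivAt 0 ν).hasDerivAt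
  have hPc : ContDiff ℝ (⊤ : ℕ∞) P := contDiffTop_of_hasDerivAt hintc hPd
  have hVc : ContDiff ℝ (⊤ : ℕ∞) V := (contDiff_gauss a).mul (contDiff_const.mul hPc)
  have hVd : ∀ ν, deriv V ν = -2 / a * (ν * V ν) + (-4 / a) * G ν := by
    intro ν
    have h1 : HasDerivAt V
        ((-2 * ν / a * Real.exp (-ν ^ 2 / a)) * (-(4 / a) * P ν)
          + Real.exp (-ν ^ 2 / a) * (-(4 / a) * (Real.exp (ν ^ 2 / a) * G ν))) ν :=
      (hasDerivAt_gauss a ν).mul ((hPd ν).const_mul (-(4 / a)))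
    rw [h1.deriv]
    have key : Real.exp (-ν ^ 2 / a) * Real.exp (ν ^ 2 / a) = 1 := by
      rw [← Real.exp_add, show -ν ^ 2 / a + ν ^ 2 / a = 0 by ring, Real.exp_zero]
    have h2 : Real.exp (-ν ^ 2 / a) * (-(4 / a) * (Real.exp (ν ^ 2 / a) * G ν))
        = (-(4 / a)) * G ν := by
      calc Real.exp (-ν ^ 2 / a) * (-(4 / a) * (Real.exp (ν ^ 2 / a) * G ν))
          = (-(4 / a)) * (Real.exp (-ν ^ 2 / a) * Real.exp (ν ^ 2 / a)) * G ν := by ring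
        _ = (-(4 / a)) * G ν := by rw [key]; ring
    rw [h2]
    simp only [hVdef]
    ring
  have hVdec : ∀ κ', 0 < κ' → κ' < κ → ∃ C, ∀ ν : ℝ, 0 ≤ ν →
      |V ν| ≤ C * Real.exp (-κ' * ν ^ 2) := by
    intro κ' h0 h1
    have hm0 : 0 < (κ' + κ) / 2 := by linarith
    have hm1 : (κ' + κ) / 2 < κ := by linarith
    set κ₁ : ℝ := (κ' + κ) / 2 with hκ₁def
    obtain ⟨C₁, hC₁0, hC₁⟩ := hG.bound0 0 hm0 hm1
    have hC₁' : ∀ s : ℝ, 0 ≤ s → |G s| ≤ C₁ * Real.exp (-κ₁ * s ^ 2) := by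
      intro s hs
      have := hC₁ s hs
      rwa [iteratedDeriv_zero] at this
    set β : ℝ := 1 / a - κ₁ with hβdef
    have hβ0 : 0 ≤ β := by
      rw [hβdef]
      have : κ₁ < 1 / a := lt_of_lt_of_le hm1 hκ
      linarith
    obtain ⟨Ca, hCa0, hCa⟩ := absorb_nu (show κ' < κ₁ by rw [hκ₁def]; linarith)
    refine ⟨4 / a * C₁ * Ca, fun ν hν => ?_⟩
    have hPb : |P ν| ≤ C₁ * Real.exp (β * ν ^ 2) * ν := by
      have hbd : ∀ s ∈ Set.uIoc (0 : ℝ) ν, ‖Real.exp (s ^ 2 / a) * G s‖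
          ≤ C₁ * Real.exp (β * ν ^ 2) := by
        intro s hs
        rw [Set.uIoc_of_le hν] at hs
        have hs0 : 0 ≤ s := hs.1.le
        have hsν : s ≤ ν := hs.2
        rw [Real.norm_eq_abs, abs_mul, abs_of_pos (Real.exp_pos _)]
        calc Real.exp (s ^ 2 / a) * |G s|
            ≤ Real.exp (s ^ 2 / a) * (C₁ * Real.exp (-κ₁ * s ^ 2)) :=
              mul_le_mul_of_nonneg_left (hC₁' s hs0) (Real.exp_nonneg _)
          _ = C₁ * Real.exp (β * s ^ 2) := by
              rw [mul_comm (Real.exp (s ^ 2 / a)), mul_assoc, ← Real.exp_add]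
              congr 2
              rw [hβdef]
              field_simp
              ring
          _ ≤ C₁ * Real.exp (β * ν ^ 2) := by
              apply mul_le_mul_of_nonneg_left _ hC₁0
              apply Real.exp_le_exp.mpr
              have hsq : s ^ 2 ≤ ν ^ 2 := by nlinarith
              exact mul_le_mul_of_nonneg_left hsq hβ0
      have := intervalIntegral.norm_integral_le_of_norm_le_const hbd
      rw [Real.norm_eq_abs] at this
      calc |P ν| ≤ C₁ * Real.exp (β * ν ^ 2) * |ν - 0| := this
        _ = C₁ * Real.exp (β * ν ^ 2) * ν := by rw [sub_zero, abs_of_nonneg hν]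
    have hVb : |V ν| = Real.exp (-ν ^ 2 / a) * (4 / a * |P ν|) := by
      simp only [hVdef]
      rw [abs_mul, abs_of_pos (Real.exp_pos _), abs_mul]
      congr 2
      rw [abs_of_neg (neg_lt_zero.mpr (by positivity : (0:ℝ) < 4 / a))]
      ring
    have hglue : Real.exp (-ν ^ 2 / a) * Real.exp (β * ν ^ 2) = Real.exp (-κ₁ * ν ^ 2) := by
      rw [← Real.exp_add]
      congr 1
      rw [hβdef]
      field_simp
      ring
    calc |V ν| = Real.exp (-ν ^ 2 / a) * (4 / a * |P ν|) := hVb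
      _ ≤ Real.exp (-ν ^ 2 / a) * (4 / a * (C₁ * Real.exp (β * ν ^ 2) * ν)) := by
          apply mul_le_mul_of_nonneg_left _ (Real.exp_nonneg _)
          apply mul_le_mul_of_nonneg_left hPb (by positivity)
      _ = 4 / a * C₁ * (ν * (Real.exp (-ν ^ 2 / a) * Real.exp (β * ν ^ 2))) := by ring
      _ = 4 / a * C₁ * (ν * Real.exp (-κ₁ * ν ^ 2)) := by rw [hglue]
      _ ≤ 4 / a * C₁ * (Ca * Real.exp (-κ' * ν ^ 2)) := by
          apply mul_le_mul_of_nonneg_left (hCa ν hν) (by positivity)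
      _ = 4 / a * C₁ * Ca * Real.exp (-κ' * ν ^ 2) := by ring
  exact ⟨V, memClass_of_linODE hκ0 hVc hG hVd hVdec, hVd⟩

/-- The Gaussian itself is a member of the class and solves the homogeneous first
order problem. -/
private lemma gauss_base {a κ : ℝ} (ha : 0 < a) (hκ0 : 0 < κ) (hκ : κ ≤ 1 / a) :
    MemGaussianClass κ (fun x : ℝ => Real.exp (-x ^ 2 / a)) ∧
      ∀ ν, deriv (fun x : ℝ => Real.exp (-x ^ 2 / a)) ν
        = -2 / a * (ν * Real.exp (-ν ^ 2 / a)) + (-4 / a) * (fun _ : ℝ => (0 : ℝ)) ν := by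
  have hVd : ∀ ν : ℝ, deriv (fun x : ℝ => Real.exp (-x ^ 2 / a)) ν
      = -2 / a * (ν * Real.exp (-ν ^ 2 / a)) + (-4 / a) * (fun _ : ℝ => (0 : ℝ)) ν := by
    intro ν
    rw [(hasDerivAt_gauss a ν).deriv]
    simp only []
    ring
  have hdec : ∀ κ', 0 < κ' → κ' < κ → ∃ C, ∀ ν : ℝ, 0 ≤ ν →
      |Real.exp (-ν ^ 2 / a)| ≤ C * Real.exp (-κ' * ν ^ 2) := by
    intro κ' h0 h1
    refine ⟨1, fun ν hν => ?_⟩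
    rw [abs_of_pos (Real.exp_pos _), one_mul]
    apply Real.exp_le_exp.mpr
    have hκ'a : κ' ≤ 1 / a := le_trans h1.le hκ
    have h2 : -ν ^ 2 / a = -(1 / a) * ν ^ 2 := by field_simp
    rw [h2]
    nlinarith
  exact ⟨memClass_of_linODE hκ0 (contDiff_gauss a) memClass_zero hVd hdec, hVd⟩

/-! ### The ladder step -/

private lemma ladder_step {a κ : ℝ} (ha : 0 < a) (hκ0 : 0 < κ) (m : ℕ)
    {G Um : ℝ → ℝ} (hG : MemGaussianClass κ G) (hUm : MemGaussianClass κ Um)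
    (hode : ∀ ν, a * deriv (deriv Um) ν + 2 * ν * deriv Um ν - 2 * (m : ℝ) * Um ν
      = 4 * deriv G ν) :
    ∃ U, MemGaussianClass κ U ∧
      (∀ ν, a * deriv (deriv U) ν + 2 * ν * deriv U ν - 2 * ((m : ℝ) + 1) * U ν = -4 * G ν) ∧
      (∀ ν, deriv U ν = -Um ν) ∧
      U 0 = (4 * G 0 - a * deriv Um 0) / (2 * ((m : ℝ) + 1)) := by
  have hUmc := hUm.1
  have hGc := hG.1
  have hUm' : ContDiff ℝ (⊤ : ℕ∞) (deriv Um) := contDiffTopDeriv hUmc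
  set M : ℝ := (m : ℝ) + 1 with hMdef
  have hM : (0 : ℝ) < M := by rw [hMdef]; positivity
  set c0 : ℝ := (4 * G 0 - a * deriv Um 0) / (2 * M) with hc0
  set U : ℝ → ℝ := fun ν => c0 + ∫ s in (0 : ℝ)..ν, -Um s with hUdef
  have hneg : ContDiff ℝ (⊤ : ℕ∞) (fun s : ℝ => -Um s) := hUmc.neg
  have hUc : ContDiff ℝ (⊤ : ℕ∞) U := contDiffTop_const_add_integral hneg c0
  have hdU : ∀ ν, deriv U ν = -Um ν := fun ν =>
    (hasDerivAt_const_add_integral hneg.continuous c0 ν).deriv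
  have hddU : ∀ ν, deriv (deriv U) ν = -deriv Um ν := by
    intro ν
    rw [show deriv U = fun ν => -Um ν from funext hdU]
    exact deriv.neg
  have hU0 : U 0 = c0 := by simp [hUdef]
  set W : ℝ → ℝ := fun ν => -(a * deriv Um ν) - 2 * (ν * Um ν) - 2 * M * U ν + 4 * G ν
    with hWdef
  have hWd : ∀ ν, HasDerivAt W 0 ν := by
    intro ν
    have hUmd : HasDerivAt Um (deriv Um ν) ν := ((hUmc.differentiable (by simp)) ν).hasDerivAt
    have hUmd2 : HasDerivAt (deriv Um) (deriv (deriv Um) ν) ν :=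
      ((hUm'.differentiable (by simp)) ν).hasDerivAt
    have hGd : HasDerivAt G (deriv G ν) ν := ((hGc.differentiable (by simp)) ν).hasDerivAt
    have hUd : HasDerivAt U (-Um ν) ν := by
      rw [← hdU ν]
      exact ((hUc.differentiable (by simp)) ν).hasDerivAt
    have h1 : HasDerivAt W
        (-(a * deriv (deriv Um) ν) - 2 * (1 * Um ν + ν * deriv Um ν)
          - 2 * M * (-Um ν) + 4 * deriv G ν) ν :=
      (((((hUmd2.const_mul a).neg).sub
        (((hasDerivAt_id ν).mul hUmd).const_mul 2)).sub
        (hUd.const_mul (2 * M))).add (hGd.const_mul 4))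
    convert h1 using 1
    have h2 := hode ν
    rw [hMdef]
    nlinarith [h2]
  have hWzero : ∀ ν, -(a * deriv Um ν) - 2 * (ν * Um ν) - 2 * M * U ν + 4 * G ν = 0 := by
    intro ν
    have hWc : W ν = W 0 :=
      is_const_of_deriv_eq_zero (fun x => (hWd x).differentiableAt)
        (fun x => (hWd x).deriv) ν 0
    have hW0 : W 0 = 0 := by
      simp only [hWdef]
      rw [hU0, hc0]
      field_simp
      ring
    have := hWc.trans hW0
    simpa [hWdef] using this
  have hODE : ∀ ν, a * deriv (deriv U) ν + 2 * ν * deriv U ν - 2 * M * U ν = -4 * G ν := by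
    intro ν
    rw [hddU ν, hdU ν]
    have h1 := hWzero ν
    nlinarith [h1]
  have hUdec : ∀ κ', 0 < κ' → κ' < κ → ∃ C, ∀ ν : ℝ, 0 ≤ ν →
      |U ν| ≤ C * Real.exp (-κ' * ν ^ 2) := by
    intro κ' h0 h1
    have hm0 : 0 < (κ' + κ) / 2 := by linarith
    have hm1 : (κ' + κ) / 2 < κ := by linarith
    obtain ⟨C1, hC10, hC1⟩ := hUm.bound0 0 hm0 hm1
    have hC1' : ∀ ν : ℝ, 0 ≤ ν → |Um ν| ≤ C1 * Real.exp (-((κ' + κ) / 2) * ν ^ 2) := by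
      intro ν hν
      have := hC1 ν hν
      rwa [iteratedDeriv_zero] at this
    obtain ⟨C2, hC20, hC2⟩ := (memClass_deriv hUm).bound0 0 h0 h1
    have hC2' : ∀ ν : ℝ, 0 ≤ ν → |deriv Um ν| ≤ C2 * Real.exp (-κ' * ν ^ 2) := by
      intro ν hν
      have := hC2 ν hν
      rwa [iteratedDeriv_zero] at this
    obtain ⟨C3, hC30, hC3⟩ := hG.bound0 0 h0 h1
    have hC3' : ∀ ν : ℝ, 0 ≤ ν → |G ν| ≤ C3 * Real.exp (-κ' * ν ^ 2) := by
      intro ν hν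
      have := hC3 ν hν
      rwa [iteratedDeriv_zero] at this
    obtain ⟨C, hC⟩ := decay_step h0 h1 (-2 / (2 * M)) (-a / (2 * M)) (4 / (2 * M))
      ⟨C1, hC10, hC1'⟩ ⟨C2, hC20, hC2'⟩ ⟨C3, hC30, hC3'⟩
    refine ⟨C, fun ν hν => ?_⟩
    have h1 := hWzero ν
    have h2 : 2 * M * U ν = -(a * deriv Um ν) - 2 * (ν * Um ν) + 4 * G ν := by linarith
    have h3 : U ν = (-(a * deriv Um ν) - 2 * (ν * Um ν) + 4 * G ν) / (2 * M) := by
      rw [eq_div_iff (by positivity)]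
      linarith
    have hrepr : U ν = -2 / (2 * M) * (ν * Um ν) + -a / (2 * M) * deriv Um ν
        + 4 / (2 * M) * G ν := by
      rw [h3]
      ring
    rw [hrepr]
    exact hC ν hν
  refine ⟨U, memClass_of_antideriv hUc (memClass_neg hUm) hdU hUdec, hODE, hdU,
    hU0.trans (by rw [hc0])⟩

/-! ### Solving at every level -/

private lemma solve_level {a κ : ℝ} (ha : 0 < a) (hκ0 : 0 < κ) (hκ : κ ≤ 1 / a) :
    ∀ (m : ℕ) (G : ℝ → ℝ), MemGaussianClass κ G →
      ∃ U, MemGaussianClass κ U ∧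
        ∀ ν, a * deriv (deriv U) ν + 2 * ν * deriv U ν - 2 * (m : ℝ) * U ν = -4 * G ν := by
  intro m
  induction m with
  | zero =>
    intro G hG
    obtain ⟨V, hV, hodeV⟩ := particular_base ha hκ0 hκ hG
    obtain ⟨U, hU, hUode, _, _⟩ := base_core ha hκ0 hG hV hodeV
    refine ⟨U, hU, fun ν => ?_⟩
    have h := hUode ν
    push_cast
    linarith
  | succ m ih =>
    intro G hG
    have hG' : MemGaussianClass κ (fun ν => -deriv G ν) := memClass_neg (memClass_deriv hG)
    obtain ⟨Um, hUm, hode⟩ := ih _ hG'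
    have hode' : ∀ ν, a * deriv (deriv Um) ν + 2 * ν * deriv Um ν - 2 * (m : ℝ) * Um ν
        = 4 * deriv G ν := by
      intro ν
      have h : a * deriv (deriv Um) ν + 2 * ν * deriv Um ν - 2 * (m : ℝ) * Um ν
          = -4 * -deriv G ν := hode ν
      linarith
    obtain ⟨U, hU, hUode, _, _⟩ := ladder_step ha hκ0 m hG hUm hode'
    refine ⟨U, hU, fun ν => ?_⟩
    have h := hUode ν
    push_cast
    linarith

private lemma hom_level {a κ : ℝ} (ha : 0 < a) (hκ0 : 0 < κ) (hκ : κ ≤ 1 / a) :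
    ∀ m : ℕ, ∃ h : ℝ → ℝ, MemGaussianClass κ h ∧
      (∀ ν, a * deriv (deriv h) ν + 2 * ν * deriv h ν - 2 * (m : ℝ) * h ν = 0) ∧
      h 0 < 0 ∧ 0 < deriv h 0 := by
  intro m
  induction m with
  | zero =>
    obtain ⟨hcl, hodeV⟩ := gauss_base ha hκ0 hκ
    obtain ⟨U, hU, hUode, hdU, hU0⟩ := base_core ha hκ0 memClass_zero hcl hodeV
    refine ⟨U, hU, fun ν => ?_, ?_, ?_⟩
    · have h : a * deriv (deriv U) ν + 2 * ν * deriv U ν = -4 * 0 := hUode ν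
      push_cast
      linarith
    · rw [hU0]
      have heq : (fun s : ℝ => Real.exp (-s ^ 2 / a)) = fun s : ℝ =>
          Real.exp (-(1 / a) * s ^ 2) := by
        funext s
        congr 1
        ring
      have hpos : 0 < ∫ s in Ioi (0 : ℝ), Real.exp (-s ^ 2 / a) := by
        have hi : IntegrableOn (fun s : ℝ => Real.exp (-s ^ 2 / a)) (Ioi 0) := by
          rw [heq]
          exact (integrable_exp_neg_mul_sq (by positivity)).integrableOn
        rw [setIntegral_pos_iff_support_of_nonneg_ae
          (ae_of_all _ fun s => (Real.exp_pos _).le) hi]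
        have hsupp : Function.support (fun s : ℝ => Real.exp (-s ^ 2 / a)) = Set.univ := by
          ext x
          simp [Function.mem_support, (Real.exp_pos _).ne']
        rw [hsupp, Set.univ_inter, Real.volume_Ioi]
        exact ENNReal.zero_lt_top
      exact neg_lt_zero.mpr hpos
    · rw [hdU 0]
      positivity
  | succ m ih =>
    obtain ⟨hm, hmcl, hmode, hm0, hmd0⟩ := ih
    have hode' : ∀ ν, a * deriv (deriv hm) ν + 2 * ν * deriv hm ν - 2 * (m : ℝ) * hm ν
        = 4 * deriv (fun _ : ℝ => (0 : ℝ)) ν := by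
      intro ν
      rw [deriv_const]
      simpa using hmode ν
    obtain ⟨U, hU, hUode, hdU, hU0⟩ := ladder_step ha hκ0 m memClass_zero hmcl hode'
    refine ⟨U, hU, fun ν => ?_, ?_, ?_⟩
    · have h : a * deriv (deriv U) ν + 2 * ν * deriv U ν - 2 * ((m : ℝ) + 1) * U ν
          = -4 * 0 := hUode ν
      push_cast
      linarith
    · have h : U 0 = (4 * 0 - a * deriv hm 0) / (2 * ((m : ℝ) + 1)) := hU0
      rw [h]
      apply div_neg_of_neg_of_pos
      · nlinarith
      · positivity
    · rw [hdU 0]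
      linarith

end

/-- Neumann half-line model problem: Let `a > 0`, `0 < κ ≤ 1/a`,
`k ∈ ℕ`, `H ∈ ℝ`, and `F ∈ ℰ(κ)`. Then there exists `U ∈ ℰ(κ)` with
`a U''(ν) + 2ν U'(ν) − 2k U(ν) = −4 F(ν)` for all `ν ≥ 0` and `U'(0) = H`. -/
theorem zaremba_neumann_model_problem
    (a κ : ℝ) (ha : 0 < a) (hκ0 : 0 < κ) (hκ : κ ≤ 1 / a)
    (k : ℕ) (H : ℝ) (F : ℝ → ℝ) (hF : MemGaussianClass κ F) :
    ∃ U : ℝ → ℝ, MemGaussianClass κ U ∧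
      (∀ ν : ℝ, 0 ≤ ν →
        a * deriv (deriv U) ν + 2 * ν * deriv U ν - 2 * (k : ℝ) * U ν = -4 * F ν) ∧
      deriv U 0 = H := by
  obtain ⟨Up, hUp, hPode⟩ := solve_level ha hκ0 hκ k F hF
  obtain ⟨h, hh, hhode, hh0, hhd0⟩ := hom_level ha hκ0 hκ k
  set lam : ℝ := (H - deriv Up 0) / deriv h 0 with hlam
  set U : ℝ → ℝ := fun ν => Up ν + lam * h ν with hUdef
  have hUpc := hUp.1
  have hhc := hh.1
  have hUcl : MemGaussianClass κ U := memClass_add hUp (memClass_cmul lam hh)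
  have hdU : deriv U = fun ν => deriv Up ν + lam * deriv h ν := by
    funext ν
    simp only [hUdef]
    rw [deriv_fun_add ((hUpc.differentiable (by simp)) ν)
        (((hhc.differentiable (by simp)) ν).const_mul lam),
      deriv_const_mul lam ((hhc.differentiable (by simp)) ν)]
  have hddU : ∀ ν, deriv (deriv U) ν = deriv (deriv Up) ν + lam * deriv (deriv h) ν := by
    intro ν
    rw [hdU]
    rw [deriv_fun_add (((contDiffTopDeriv hUpc).differentiable (by simp)) ν)
        ((((contDiffTopDeriv hhc).differentiable (by simp)) ν).const_mul lam),
      deriv_const_mul lam (((contDiffTopDeriv hhc).differentiable (by simp)) ν)]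
  refine ⟨U, hUcl, fun ν _ => ?_, ?_⟩
  · have h1 := hPode ν
    have h2 := hhode ν
    have h3 : deriv U ν = deriv Up ν + lam * deriv h ν := by rw [hdU]
    rw [hddU ν, h3]
    simp only [hUdef]
    linear_combination h1 + lam * h2
  · have h3 : deriv U 0 = deriv Up 0 + lam * deriv h 0 := by rw [hdU]
    rw [h3, hlam]
    field_simp
    ring
end
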